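/- arXiv:1006.2258 — 2 statements merged into one kernel-verified Lean document; each statement's English description precedes it below -/
import Mathlib

section
/- Let n ≥ 3, l ≥ 1, let i_1,…,i_{l+1} ∈ {1,…,n−1}, and let η ∈ B_n be a simple element conjugate to δ with i_1 ∈ F(η). Then x_{η,i_1,…,i_{l+1}} = Δ_n^{−l} y_1 y_2 ⋯ y_{2l+1}, where y_j = ∂^{−(2(l−j)+1)}(α_{i_{l−j+1}, i_{l−j+2}}) for 1 ≤ j ≤ l, y_{l+1} = η, and y_{l+1+j} = α_{i_j, i_{j+1}} for 1 ≤ j ≤ l; moreover (y_1,…,y_{2l+1}) is a left-weighted sequence of proper simple factors, so this expression is the left normal form of x_{η,i_1,…,i_{l+1}}. -/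
/-- Relations for the braid group on `n` strands, with generators `σ_1, …, σ_{n-1}`
(generators with indices outside `{1, …, n-1}` are killed). -/
def braidRels (n : ℕ) : Set (FreeGroup ℕ) :=
  { r | (∃ i : ℕ, 1 ≤ i ∧ i + 2 ≤ n ∧
          r = FreeGroup.of i * FreeGroup.of (i + 1) * FreeGroup.of i *
              (FreeGroup.of (i + 1) * FreeGroup.of i * FreeGroup.of (i + 1))⁻¹) ∨
       (∃ i j : ℕ, 1 ≤ i ∧ i + 2 ≤ j ∧ j + 1 ≤ n ∧
          r = FreeGroup.of i * FreeGroup.of j * (FreeGroup.of j * FreeGroup.of i)⁻¹) ∨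
       (∃ i : ℕ, (i = 0 ∨ n ≤ i) ∧ r = FreeGroup.of i) }

/-- The braid group `B_n` on `n` strands. -/
abbrev B (n : ℕ) : Type := PresentedGroup (braidRels n)

/-- The Artin generator `σ_i` of `B n`. -/
def σb (n i : ℕ) : B n := PresentedGroup.of i

/-- The element of `B n` represented by a word in the generators. -/
def word (n : ℕ) (l : List ℕ) : B n := (l.map (σb n)).prod

/-- The positive braid monoid `B_n^+`. -/
def Bpos (n : ℕ) : Submonoid (B n) :=
  Submonoid.closure { x | ∃ i : ℕ, 1 ≤ i ∧ i ≤ n - 1 ∧ x = σb n i }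

/-- The prefix order: `a ≼ b`. -/
def bLe (n : ℕ) (a b : B n) : Prop := a⁻¹ * b ∈ Bpos n

/-- The suffix order: `a ≽ b`. -/
def bGe (n : ℕ) (a b : B n) : Prop := a * b⁻¹ ∈ Bpos n

/-- The list `[a, a-1, …, b]` (empty if `a < b`). -/
def descList (a b : ℕ) : List ℕ := (List.range' b (a + 1 - b)).reverse

/-- The Garside element `Δ_n = σ_1 (σ_2 σ_1) ⋯ (σ_{n-1} σ_{n-2} ⋯ σ_1)`. -/
def DeltaB (n : ℕ) : B n :=
  word n (((List.range' 1 (n - 1)).map fun t => descList t 1).flatten)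

/-- The element `δ = σ_1 σ_2 ⋯ σ_{n-1}`. -/
def deltaB (n : ℕ) : B n := word n (List.range' 1 (n - 1))

/-- Simple elements: positive prefixes of `Δ_n`. -/
def isSimple (n : ℕ) (s : B n) : Prop := s ∈ Bpos n ∧ bLe n s (DeltaB n)

/-- The starting set `S(a) = {i : σ_i ≼ a}`. -/
def startSet (n : ℕ) (a : B n) : Set ℕ :=
  { i | 1 ≤ i ∧ i ≤ n - 1 ∧ bLe n (σb n i) a }

/-- The finishing set `F(a) = {i : a ≽ σ_i}`. -/
def finishSet (n : ℕ) (a : B n) : Set ℕ :=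
  { i | 1 ≤ i ∧ i ≤ n - 1 ∧ bGe n a (σb n i) }

/-- The simple conjugate `δ_{d_1,…,d_m}` of `δ`, where `l = [d_1, …, d_m]`. -/
def deltaD (n : ℕ) (l : List ℕ) : B n :=
  word n ((((1 :: l).zip (l ++ [n])).map fun p => descList (p.2 - 1) p.1).flatten)

/-- The simple element `α_{i,j}`. -/
def alphaB (n i j : ℕ) : B n :=
  if i ≤ j then word n (List.range' i (j + 1 - i)) else word n (descList i j)

/-- The conjugate `x_{η,i_1,…,i_{l+1}} = w⁻¹ η w`, `w = α_{i_1,i_2} α_{i_2,i_3} ⋯ α_{i_l,i_{l+1}}`. -/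
def xbraid (n : ℕ) (η : B n) (i : ℕ → ℕ) (l : ℕ) : B n :=
  (((List.range l).map fun idx => alphaB n (i (idx + 1)) (i (idx + 2))).prod)⁻¹ * η *
    ((List.range l).map fun idx => alphaB n (i (idx + 1)) (i (idx + 2))).prod

/-- A left-weighted sequence of proper simple factors. -/
def LWSeq (n : ℕ) (ys : List (B n)) : Prop :=
  (∀ y ∈ ys, isSimple n y ∧ y ≠ 1 ∧ y ≠ DeltaB n) ∧
  List.Chain' (fun a b => startSet n b ⊆ finishSet n a) ys

theorem Equiv.Perm.inv_apply_self {α : Type*} (f : Equiv.Perm α) (x : α) : f⁻¹ (f x) = x :=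
  Equiv.symm_apply_apply f x

theorem Equiv.Perm.apply_inv_self {α : Type*} (f : Equiv.Perm α) (x : α) : f (f⁻¹ x) = x :=
  Equiv.apply_symm_apply f x

namespace S7

variable {n : ℕ}

/-! ### Basic presented group lemmas -/

lemma mk_rel {r : FreeGroup ℕ} (h : r ∈ braidRels n) :
    PresentedGroup.mk (braidRels n) r = 1 := by
  have : r ∈ Subgroup.normalClosure (braidRels n) := Subgroup.subset_normalClosure h
  exact (QuotientGroup.eq_one_iff r).2 this

lemma σb_eq_mk (i : ℕ) : σb n i = PresentedGroup.mk (braidRels n) (FreeGroup.of i) := rfl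

lemma braid_adj {i : ℕ} (h1 : 1 ≤ i) (h2 : i + 2 ≤ n) :
    σb n i * σb n (i+1) * σb n i = σb n (i+1) * σb n i * σb n (i+1) := by
  have h := mk_rel (n := n) (Or.inl ⟨i, h1, h2, rfl⟩)
  rw [map_mul, map_mul, map_inv, map_mul, map_mul] at h
  rw [mul_inv_eq_one] at h
  exact h

lemma σb_triv {i : ℕ} (h : i = 0 ∨ n ≤ i) : σb n i = 1 :=
  mk_rel (n := n) (Or.inr (Or.inr ⟨i, h, rfl⟩))

lemma braid_far {i j : ℕ} (h2 : i + 2 ≤ j) :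
    σb n i * σb n j = σb n j * σb n i := by
  rcases Nat.eq_zero_or_pos i with hi | hi
  · rw [σb_triv (Or.inl hi), one_mul, mul_one]
  rcases le_or_gt (j+1) n with hj | hj
  · have h := mk_rel (n := n) (Or.inr (Or.inl ⟨i, j, hi, h2, hj, rfl⟩))
    rw [map_mul, map_inv, map_mul, map_mul] at h
    rw [mul_inv_eq_one] at h
    exact h
  · rw [σb_triv (Or.inr (by omega : n ≤ j)), one_mul, mul_one]

lemma braid_comm {i j : ℕ} (h : i + 2 ≤ j ∨ j + 2 ≤ i) :
    σb n i * σb n j = σb n j * σb n i := by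
  rcases h with h | h
  · exact braid_far h
  · exact (braid_far h).symm

/-! ### Words -/

lemma word_nil : word n [] = 1 := rfl

lemma word_cons (a : ℕ) (L : List ℕ) : word n (a :: L) = σb n a * word n L := by
  simp [word]

lemma word_append (L1 L2 : List ℕ) : word n (L1 ++ L2) = word n L1 * word n L2 := by
  simp [word]

lemma word_singleton (a : ℕ) : word n [a] = σb n a := by simp [word]

lemma word_concat (L : List ℕ) (a : ℕ) : word n (L ++ [a]) = word n L * σb n a := by
  rw [word_append, word_singleton]

/-- commutes with a whole word of far-away letters -/
lemma σb_comm_word {k : ℕ} {L : List ℕ} (h : ∀ a ∈ L, a + 2 ≤ k ∨ k + 2 ≤ a) :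
    σb n k * word n L = word n L * σb n k := by
  induction L with
  | nil => simp [word_nil]
  | cons a L ih =>
      rw [word_cons, ← mul_assoc, braid_comm (Or.symm (h a (by simp))), mul_assoc,
        ih (fun b hb => h b (by simp [hb])), ← mul_assoc]

/-! ### The positive monoid -/

lemma word_mem_Bpos {L : List ℕ} (h : ∀ a ∈ L, 1 ≤ a ∧ a ≤ n - 1) :
    word n L ∈ Bpos n := by
  induction L with
  | nil => exact (Bpos n).one_mem
  | cons a L ih =>
      rw [word_cons]
      exact (Bpos n).mul_mem
        (Submonoid.subset_closure ⟨a, (h a (by simp)).1, (h a (by simp)).2, rfl⟩)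
        (ih (fun b hb => h b (by simp [hb])))

lemma mem_Bpos_iff {x : B n} :
    x ∈ Bpos n ↔ ∃ L : List ℕ, (∀ a ∈ L, 1 ≤ a ∧ a ≤ n - 1) ∧ x = word n L := by
  constructor
  · intro hx
    induction hx using Submonoid.closure_induction with
    | mem y hy => rcases hy with ⟨i, h1, h2, rfl⟩; exact ⟨[i], by simpa using ⟨h1, h2⟩, (word_singleton i).symm⟩
    | one => exact ⟨[], by simp, rfl⟩
    | mul y z _ _ hy hz =>
        rcases hy with ⟨L1, hL1, rfl⟩
        rcases hz with ⟨L2, hL2, rfl⟩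
        refine ⟨L1 ++ L2, ?_, (word_append L1 L2).symm⟩
        intro a ha
        rcases List.mem_append.1 ha with h | h
        exacts [hL1 a h, hL2 a h]
  · rintro ⟨L, hL, rfl⟩
    exact word_mem_Bpos hL

end S7
namespace S7

variable {n : ℕ}

/-! ### descList and run lemmas -/

lemma mem_descList {a i j : ℕ} : a ∈ descList i j ↔ j ≤ a ∧ a ≤ i := by
  unfold descList
  rw [List.mem_reverse, List.mem_range']
  constructor
  · rintro ⟨t, ht, rfl⟩; omega
  · rintro ⟨h1, h2⟩; exact ⟨a - j, by omega, by omega⟩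

lemma descList_succ {t b : ℕ} (h : b ≤ t + 1) :
    descList (t+1) b = (t+1) :: descList t b := by
  unfold descList
  have : t + 1 + 1 - b = (t + 1 - b) + 1 := by omega
  rw [this, List.range'_1_concat, List.reverse_append]
  simp
  omega

lemma descList_split {i j : ℕ} (h1 : 1 ≤ j) (h2 : j ≤ i) :
    descList i 1 = descList i j ++ descList (j-1) 1 := by
  unfold descList
  have e0 : j - 1 + 1 - 1 = j - 1 := by omega
  rw [e0, ← List.reverse_append]
  congr 1
  have h := List.range'_append_1 (s := 1) (m := j-1) (n := i+1-j)
  have e1 : 1 + (j-1) = j := by omega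
  have e2 : (j - 1) + (i + 1 - j) = i := by omega
  have e3 : i + 1 - 1 = i := by omega
  rw [e1, e2] at h
  rw [e3, ← h]

/-- The run word `R_t = [t, t-1, …, 1]`. -/
def RW (t : ℕ) : List ℕ := descList t 1

/-- The word for the partial Garside element `R_1 R_2 ⋯ R_r`. -/
def DDw (r : ℕ) : List ℕ := ((List.range' 1 r).map RW).flatten

lemma mem_RW {a t : ℕ} : a ∈ RW t ↔ 1 ≤ a ∧ a ≤ t := mem_descList

lemma RW_zero : RW 0 = [] := rfl

lemma RW_succ (t : ℕ) : RW (t+1) = (t+1) :: RW t := descList_succ (by omega)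

lemma DDw_zero : DDw 0 = [] := rfl

lemma DDw_succ (r : ℕ) : DDw (r+1) = DDw r ++ RW (r+1) := by
  unfold DDw
  rw [List.range'_1_concat, List.map_append, List.flatten_append, Nat.add_comm 1 r]
  simp

lemma mem_DDw {a r : ℕ} : a ∈ DDw r → 1 ≤ a ∧ a ≤ r := by
  intro ha
  unfold DDw at ha
  rw [List.mem_flatten] at ha
  rcases ha with ⟨L, hL, haL⟩
  rw [List.mem_map] at hL
  rcases hL with ⟨t, ht, rfl⟩
  rw [List.mem_range'] at ht
  rcases ht with ⟨c, hc, rfl⟩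
  have := mem_RW.1 haL
  omega

lemma DDw_one : DDw 1 = [1] := rfl

/-- `DD r`: the braid `R_1 R_2 ⋯ R_r` (the Garside element of `B_{r+1}` inside `B n`). -/
def DD (n r : ℕ) : B n := word n (DDw r)

lemma DeltaB_eq_DD : DeltaB n = DD n (n-1) := rfl

lemma DD_succ (r : ℕ) : DD n (r+1) = DD n r * word n (RW (r+1)) := by
  unfold DD
  rw [DDw_succ, word_append]

lemma DD_zero : DD n 0 = 1 := rfl

/-! ### Shift, commutation, key lemmas -/

lemma shift_run {t m : ℕ} (ht : t ≤ n - 1) (hm1 : 1 ≤ m) (hm2 : m + 1 ≤ t) :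
    σb n m * word n (RW t) = word n (RW t) * σb n (m+1) := by
  induction t with
  | zero => omega
  | succ t ih =>
      rw [RW_succ, word_cons]
      rcases eq_or_lt_of_le hm2 with he | hlt
      · -- m + 1 = t + 1, so m = t
        have hmt : m = t := by omega
        subst hmt
        rcases Nat.eq_zero_or_pos m with h0 | h0
        · omega
        -- RW (m+1) = (m+1) :: m :: RW (m-1)
        have hm' : m = (m-1) + 1 := by omega
        rw [hm', RW_succ, word_cons, ← hm']
        have hadj : σb n m * (σb n (m+1) * σb n m) = σb n (m+1) * σb n m * σb n (m+1) := by
          rw [← mul_assoc]; exact braid_adj hm1 (by omega)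
        have hcomm : σb n (m+1) * word n (RW (m-1)) = word n (RW (m-1)) * σb n (m+1) := by
          apply σb_comm_word
          intro a ha
          have := mem_RW.1 ha
          omega
        calc σb n m * (σb n (m+1) * (σb n m * word n (RW (m-1))))
            = (σb n m * (σb n (m+1) * σb n m)) * word n (RW (m-1)) := by group
          _ = (σb n (m+1) * σb n m * σb n (m+1)) * word n (RW (m-1)) := by rw [hadj]
          _ = σb n (m+1) * σb n m * (σb n (m+1) * word n (RW (m-1))) := by group
          _ = σb n (m+1) * σb n m * (word n (RW (m-1)) * σb n (m+1)) := by rw [hcomm]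
          _ = σb n (m+1) * (σb n m * word n (RW (m-1))) * σb n (m+1) := by group
      · -- m + 2 ≤ t + 1
        have hcomm : σb n m * σb n (t+1) = σb n (t+1) * σb n m := braid_comm (Or.inl (by omega))
        rw [← mul_assoc, hcomm, mul_assoc, ih (by omega) (by omega), ← mul_assoc]

lemma comm_run {t k : ℕ} (h : t + 2 ≤ k) :
    σb n k * word n (RW t) = word n (RW t) * σb n k := by
  apply σb_comm_word
  intro a ha
  have := mem_RW.1 ha
  omega

lemma key_run {t : ℕ} (ht : t + 1 ≤ n - 1) :
    σb n (t+1) * (word n (RW t) * word n (RW (t+1))) =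
      word n (RW t) * word n (RW (t+1)) * σb n 1 := by
  induction t with
  | zero =>
      simp only [RW_zero, word_nil, one_mul, mul_one]
      rw [RW_succ, RW_zero, word_cons, word_nil, mul_one]
  | succ t ih =>
      -- σ_{t+2} * (R_{t+1} * R_{t+2}) = R_{t+1} * R_{t+2} * σ_1
      have hRt1 : word n (RW (t+1)) = σb n (t+1) * word n (RW t) := by
        rw [RW_succ, word_cons]
      have hRt2 : word n (RW (t+2)) = σb n (t+2) * word n (RW (t+1)) := by
        rw [RW_succ (t+1), word_cons]
      have hcomm : σb n (t+2) * word n (RW t) = word n (RW t) * σb n (t+2) :=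
        comm_run (by omega)
      have hadj : σb n (t+2) * σb n (t+1) * σb n (t+2) = σb n (t+1) * σb n (t+2) * σb n (t+1) :=
        (braid_adj (by omega) (by omega)).symm
      calc σb n (t+2) * (word n (RW (t+1)) * word n (RW (t+2)))
          = σb n (t+2) * (σb n (t+1) * word n (RW t) * (σb n (t+2) * word n (RW (t+1)))) := by
            rw [← hRt1, ← hRt2]
        _ = σb n (t+2) * σb n (t+1) * (word n (RW t) * σb n (t+2)) * word n (RW (t+1)) := by
            group
        _ = σb n (t+2) * σb n (t+1) * (σb n (t+2) * word n (RW t)) * word n (RW (t+1)) := by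
            rw [hcomm]
        _ = (σb n (t+2) * σb n (t+1) * σb n (t+2)) * (word n (RW t) * word n (RW (t+1))) := by
            group
        _ = (σb n (t+1) * σb n (t+2) * σb n (t+1)) * (word n (RW t) * word n (RW (t+1))) := by
            rw [hadj]
        _ = σb n (t+1) * σb n (t+2) * (σb n (t+1) * (word n (RW t) * word n (RW (t+1)))) := by
            group
        _ = σb n (t+1) * σb n (t+2) * (word n (RW t) * word n (RW (t+1)) * σb n 1) := by
            rw [ih (by omega)]
        _ = σb n (t+1) * (σb n (t+2) * word n (RW t)) * word n (RW (t+1)) * σb n 1 := by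
            group
        _ = σb n (t+1) * (word n (RW t) * σb n (t+2)) * word n (RW (t+1)) * σb n 1 := by
            rw [hcomm]
        _ = (σb n (t+1) * word n (RW t)) * (σb n (t+2) * word n (RW (t+1))) * σb n 1 := by
            group
        _ = word n (RW (t+1)) * word n (RW (t+2)) * σb n 1 := by rw [← hRt1, ← hRt2]

lemma comm_DDw {k r : ℕ} (h : r + 2 ≤ k) :
    σb n k * DD n r = DD n r * σb n k := by
  apply σb_comm_word
  intro a ha
  have := mem_DDw ha
  omega

/-- The fundamental twist: `σ_k Δ_{r+1} = Δ_{r+1} σ_{r+1-k}`. -/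
lemma Gm {r k : ℕ} (hr : r ≤ n - 1) (hk1 : 1 ≤ k) (hk2 : k ≤ r) :
    σb n k * DD n r = DD n r * σb n (r+1-k) := by
  induction r with
  | zero => omega
  | succ r ih =>
      rcases eq_or_lt_of_le hk2 with he | hlt
      · -- k = r + 1
        subst he
        rcases Nat.eq_zero_or_pos r with h0 | h0
        · subst h0
          -- DD 1 = σ_1 ; k = 1
          show σb n 1 * word n (DDw 1) = word n (DDw 1) * σb n (1+1-1)
          rw [DDw_one]
          simp [word]
        · -- r ≥ 1 : DD (r+1) = DD (r-1) * R_r * R_{r+1}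
          have hsplit : DD n (r+1) = DD n (r-1) * (word n (RW r) * word n (RW (r+1))) := by
            have h1 : DD n (r+1) = DD n r * word n (RW (r+1)) := DD_succ r
            have h2 : DD n r = DD n (r-1) * word n (RW r) := by
              have : r = (r-1) + 1 := by omega
              rw [this, DD_succ, ← this]
            rw [h1, h2, mul_assoc]
          have hcomm : σb n (r+1) * DD n (r-1) = DD n (r-1) * σb n (r+1) :=
            comm_DDw (by omega)
          have hkey : σb n (r+1) * (word n (RW r) * word n (RW (r+1))) =
              word n (RW r) * word n (RW (r+1)) * σb n 1 := by
            have : r + 1 ≤ n - 1 := hr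
            have := key_run (t := r) this
            exact this
          have : r + 1 + 1 - (r+1) = 1 := by omega
          rw [this, hsplit, ← mul_assoc, hcomm, mul_assoc, hkey, ← mul_assoc]
      · -- k ≤ r
        have hk2' : k ≤ r := by omega
        rw [DD_succ, ← mul_assoc, ih (by omega) hk2', mul_assoc,
          shift_run (by omega) (by omega) (by omega), ← mul_assoc]
        congr 2
        omega

end S7
namespace S7

variable {n : ℕ}

/-! ### alpha words -/

lemma alpha_word_desc {i j : ℕ} (h : j ≤ i) : alphaB n i j = word n (descList i j) := by
  rcases eq_or_lt_of_le h with he | hlt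
  · subst he
    unfold alphaB
    rw [if_pos (le_refl j)]
    simp [descList, show j + 1 - j = 1 from by omega]
  · unfold alphaB
    rw [if_neg (by omega)]

lemma alpha_word_asc {i j : ℕ} (h : i ≤ j) : alphaB n i j = word n (List.range' i (j+1-i)) := by
  unfold alphaB; rw [if_pos h]

lemma alpha_refl (k : ℕ) : alphaB n k k = σb n k := by
  rw [alpha_word_asc (le_refl k)]
  simp [show k + 1 - k = 1 from by omega, word]

lemma mem_asc {a i j : ℕ} (ha : a ∈ List.range' i (j+1-i)) : i ≤ a ∧ a ≤ j := by
  rw [List.mem_range'] at ha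
  rcases ha with ⟨c, hc, rfl⟩
  omega

lemma descList_empty {a b : ℕ} (h : a < b) : descList a b = [] := by
  unfold descList
  rw [show a + 1 - b = 0 from by omega]
  rfl

lemma descList_one : descList 1 1 = [1] := by
  simp [descList]

/-! ### tau conjugation -/

lemma tauc {r : ℕ} (hr : r ≤ n - 1) {L : List ℕ} (hL : ∀ a ∈ L, 1 ≤ a ∧ a ≤ r) :
    word n L * DD n r = DD n r * word n (L.map (fun a => r + 1 - a)) := by
  induction L with
  | nil => simp [word_nil]
  | cons a L ih =>
      have ha := hL a (by simp)
      have hG : σb n a * DD n r = DD n r * σb n (r + 1 - a) := Gm hr ha.1 ha.2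
      rw [List.map_cons, word_cons, word_cons, mul_assoc,
        ih (fun b hb => hL b (by simp [hb])), ← mul_assoc, hG, mul_assoc]

lemma map_flip_bounds {M : ℕ} {L : List ℕ} (h : ∀ a ∈ L, 1 ≤ a ∧ a ≤ M) :
    ∀ a ∈ L.map (fun a => M + 1 - a), 1 ≤ a ∧ a ≤ M := by
  intro a ha
  rw [List.mem_map] at ha
  rcases ha with ⟨b, hb, rfl⟩
  have := h b hb
  omega

lemma map_flip_flip {M : ℕ} {L : List ℕ} (h : ∀ a ∈ L, 1 ≤ a ∧ a ≤ M) :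
    (L.map (fun a => M + 1 - a)).map (fun a => M + 1 - a) = L := by
  induction L with
  | nil => rfl
  | cons a L ih =>
      have ha := h a (by simp)
      simp only [List.map_cons]
      rw [ih (fun b hb => h b (by simp [hb]))]
      congr 1
      omega

lemma tau_eq {r : ℕ} (hr : r ≤ n - 1) {A C : List ℕ}
    (hA : ∀ a ∈ A, 1 ≤ a ∧ a ≤ r) (hC : ∀ a ∈ C, 1 ≤ a ∧ a ≤ r)
    (h : DD n r = word n (A.map (fun a => r + 1 - a)) * word n (C.map (fun a => r + 1 - a))) :
    DD n r = word n A * word n C := by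
  have h1 := tauc hr hA
  have h2 := tauc hr hC
  have key : (word n A * word n C) * DD n r = DD n r * DD n r := by
    calc (word n A * word n C) * DD n r
        = word n A * (word n C * DD n r) := by rw [mul_assoc]
      _ = word n A * (DD n r * word n (C.map (fun a => r + 1 - a))) := by rw [h2]
      _ = (word n A * DD n r) * word n (C.map (fun a => r + 1 - a)) := by rw [mul_assoc]
      _ = (DD n r * word n (A.map (fun a => r + 1 - a))) * word n (C.map (fun a => r + 1 - a)) := by
          rw [h1]
      _ = DD n r * (word n (A.map (fun a => r + 1 - a)) * word n (C.map (fun a => r + 1 - a))) := by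
          rw [mul_assoc]
      _ = DD n r * DD n r := by rw [← h]
  exact (mul_right_cancel key).symm

/-! ### Master factorization -/

lemma DD_step {i : ℕ} (h : 1 ≤ i) : DD n i = DD n (i-1) * word n (RW i) := by
  conv_lhs => rw [show i = (i-1)+1 from by omega]
  rw [DD_succ, show (i-1)+1 = i from by omega]

lemma master {i j : ℕ} (hj : 1 ≤ j) (hji : j ≤ i) (hi : i ≤ n - 1) :
    DD n i = alphaB n i j *
      word n (descList (j-1) 1 ++ (DDw (i-1)).map (fun a => i + 1 - a)) := by
  have hi1 : 1 ≤ i := le_trans hj hji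
  have hstep : DD n i = DD n (i-1) * word n (RW i) := DD_step hi1
  have htau : word n (DDw (i-1)) * DD n i =
      DD n i * word n ((DDw (i-1)).map (fun a => i + 1 - a)) :=
    tauc hi (fun a ha => by have := mem_DDw ha; omega)
  have hDDw : word n (DDw (i-1)) = DD n (i-1) := rfl
  rw [hDDw] at htau
  have hM : DD n i = word n (RW i) * word n ((DDw (i-1)).map (fun a => i + 1 - a)) := by
    rw [hstep, mul_assoc] at htau
    have hc := mul_left_cancel htau
    rw [hstep]
    exact hc
  rw [alpha_word_desc hji, ← word_append, hM, ← word_append]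
  congr 1
  rw [← List.append_assoc]
  congr 1
  exact descList_split hj hji

/-! ### Runs -/

/-- the word `R_s R_{s+1} ⋯ R_t`. -/
def RunsW (s t : ℕ) : List ℕ := ((List.range' s (t+1-s)).map RW).flatten

lemma DDw_eq_RunsW (r : ℕ) : DDw r = RunsW 1 r := by
  unfold DDw RunsW
  rw [show r + 1 - 1 = r from by omega]

lemma mem_RunsW {a s t : ℕ} (ha : a ∈ RunsW s t) : 1 ≤ a ∧ a ≤ t := by
  unfold RunsW at ha
  rw [List.mem_flatten] at ha
  rcases ha with ⟨L, hL, haL⟩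
  rw [List.mem_map] at hL
  rcases hL with ⟨x, hx, rfl⟩
  rw [List.mem_range'] at hx
  rcases hx with ⟨c, hc, rfl⟩
  have := mem_RW.1 haL
  omega

lemma RunsW_split {s u t : ℕ} (h1 : s ≤ u + 1) (h2 : u ≤ t) :
    RunsW s t = RunsW s u ++ RunsW (u+1) t := by
  unfold RunsW
  rw [← List.flatten_append, ← List.map_append]
  congr 2
  have h := List.range'_append_1 (s := s) (m := u+1-s) (n := t-u)
  rw [show s + (u+1-s) = u+1 from by omega,
    show (u+1-s) + (t - u) = t+1-s from by omega] at h
  rw [show t+1-(u+1) = t - u from by omega]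
  exact h.symm

lemma RunsW_self (s : ℕ) : RunsW s s = RW s := by
  unfold RunsW
  rw [show s + 1 - s = 1 from by omega]
  simp

lemma DD_runs_split {u r : ℕ} (h : u ≤ r) :
    DD n r = DD n u * word n (RunsW (u+1) r) := by
  show word n (DDw r) = _
  rw [DDw_eq_RunsW, RunsW_split (show (1:ℕ) ≤ u + 1 from by omega) h, word_append]
  rfl

lemma DD_extend {r r' : ℕ} (h : r ≤ r') :
    ∃ L, (∀ a ∈ L, 1 ≤ a ∧ a ≤ r') ∧ DD n r' = DD n r * word n L :=
  ⟨RunsW (r+1) r', fun _ ha => mem_RunsW ha, DD_runs_split h⟩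

/-- `σ_k` divides the product of runs `R_s ⋯ R_t` when `s ≤ k ≤ t`. -/
lemma runs_div {s k t : ℕ} (hs : 1 ≤ s) (hsk : s ≤ k) (hkt : k ≤ t) (ht : t ≤ n - 1) :
    ∃ L, (∀ a ∈ L, 1 ≤ a ∧ a ≤ t) ∧ word n (RunsW s t) = σb n k * word n L := by
  rcases eq_or_lt_of_le hsk with he | hlt
  · -- k = s
    subst he
    have hsplit : RunsW s t = RW s ++ RunsW (s+1) t := by
      rw [RunsW_split (show s ≤ s + 1 from by omega) hkt, RunsW_self]
    have hRW : RW s = s :: descList (s-1) 1 := by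
      conv_lhs => rw [show s = (s-1)+1 from by omega]
      rw [RW_succ, show (s-1)+1 = s from by omega]
      rfl
    refine ⟨descList (s-1) 1 ++ RunsW (s+1) t, ?_, ?_⟩
    · intro a ha
      rcases List.mem_append.1 ha with h | h
      · have := mem_descList.1 h; omega
      · exact mem_RunsW h
    · rw [hsplit, hRW, word_append, word_cons, word_append, mul_assoc]
  · -- s < k
    have hk2 : 2 ≤ k := by omega
    have hsplit1 : RunsW s t = RunsW s (k-2) ++ RunsW (k-1) t := by
      have h := RunsW_split (s := s) (u := k-2) (t := t) (by omega) (by omega)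
      rw [show (k-2)+1 = k-1 from by omega] at h
      exact h
    have hsplit2 : RunsW (k-1) t = (RW (k-1) ++ RW k) ++ RunsW (k+1) t := by
      have h1 : RunsW (k-1) t = RunsW (k-1) k ++ RunsW (k+1) t :=
        RunsW_split (by omega) (by omega)
      have h2 : RunsW (k-1) k = RW (k-1) ++ RW k := by
        rw [RunsW_split (show k - 1 ≤ (k-1) + 1 from by omega) (show k - 1 ≤ k from by omega),
          RunsW_self, show (k-1)+1 = k from by omega, RunsW_self]
      rw [h1, h2]
    have hRk : word n (RW k) = word n (descList k 2) * σb n 1 := by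
      show word n (descList k 1) = _
      rw [descList_split (show (1:ℕ) ≤ 2 from by omega) hk2, word_append, descList_one,
        word_singleton]
    have hkey : word n (RW (k-1)) * word n (RW k) =
        σb n k * (word n (RW (k-1)) * word n (descList k 2)) := by
      have hk := key_run (t := k-1) (by omega : (k-1) + 1 ≤ n - 1)
      rw [show (k-1)+1 = k from by omega] at hk
      have hdesc2 : word n (descList k 2) = word n (RW k) * (σb n 1)⁻¹ := by
        rw [hRk]; group
      symm
      calc σb n k * (word n (RW (k-1)) * word n (descList k 2))
          = σb n k * (word n (RW (k-1)) * (word n (RW k) * (σb n 1)⁻¹)) := by rw [hdesc2]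
        _ = σb n k * (word n (RW (k-1)) * word n (RW k)) * (σb n 1)⁻¹ := by group
        _ = word n (RW (k-1)) * word n (RW k) * σb n 1 * (σb n 1)⁻¹ := by rw [hk]
        _ = word n (RW (k-1)) * word n (RW k) := by group
    have hcomm : σb n k * word n (RunsW s (k-2)) = word n (RunsW s (k-2)) * σb n k := by
      apply σb_comm_word
      intro a ha
      have := mem_RunsW ha
      omega
    refine ⟨RunsW s (k-2) ++ (RW (k-1) ++ (descList k 2 ++ RunsW (k+1) t)), ?_, ?_⟩
    · intro a ha
      rcases List.mem_append.1 ha with h | h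
      · have := mem_RunsW h; omega
      rcases List.mem_append.1 h with h | h
      · have := mem_RW.1 h; omega
      rcases List.mem_append.1 h with h | h
      · have := mem_descList.1 h; omega
      · have := mem_RunsW h; omega
    · calc word n (RunsW s t)
          = word n (RunsW s (k-2)) *
              ((word n (RW (k-1)) * word n (RW k)) * word n (RunsW (k+1) t)) := by
            rw [hsplit1, hsplit2, word_append, word_append, word_append]
        _ = word n (RunsW s (k-2)) *
              ((σb n k * (word n (RW (k-1)) * word n (descList k 2))) *
                word n (RunsW (k+1) t)) := by rw [hkey]
        _ = (word n (RunsW s (k-2)) * σb n k) *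
              (word n (RW (k-1)) * (word n (descList k 2) * word n (RunsW (k+1) t))) := by
            group
        _ = (σb n k * word n (RunsW s (k-2))) *
              (word n (RW (k-1)) * (word n (descList k 2) * word n (RunsW (k+1) t))) := by
            rw [hcomm]
        _ = σb n k * word n (RunsW s (k-2) ++ (RW (k-1) ++ (descList k 2 ++ RunsW (k+1) t))) := by
            rw [word_append, word_append, word_append]; group

/-! ### descending/ascending flip of ranges -/

lemma map_range'_flip {M : ℕ} : ∀ len i, 1 ≤ i → i + len ≤ M + 1 →
    (List.range' i len).map (fun a => M + 1 - a) = descList (M + 1 - i) (M + 2 - i - len) := by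
  intro len
  induction len with
  | zero =>
      intro i h1 h2
      simp only [List.range'_zero, List.map_nil]
      exact (descList_empty (by omega)).symm
  | succ len ih =>
      intro i h1 h2
      rw [List.range'_succ, List.map_cons, ih (i+1) (by omega) (by omega)]
      have h3 : M + 1 - i = (M - i) + 1 := by omega
      rw [h3, descList_succ (by omega)]
      congr 2 <;> omega

lemma map_asc_flip {M i j : ℕ} (h1 : 1 ≤ i) (hij : i ≤ j) (hj : j ≤ M) :
    (List.range' i (j + 1 - i)).map (fun a => M + 1 - a) = descList (M + 1 - i) (M + 1 - j) := by
  rw [map_range'_flip (j+1-i) i h1 (by omega)]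
  congr 1
  omega

/-! ### alpha divides DD -/

lemma alpha_div_DD_desc {i j r : ℕ} (hj : 1 ≤ j) (hji : j ≤ i) (hir : i ≤ r) (hr : r ≤ n - 1) :
    ∃ L, (∀ a ∈ L, 1 ≤ a ∧ a ≤ r) ∧ DD n r = alphaB n i j * word n L := by
  have hm := master hj hji (le_trans hir hr)
  rcases DD_extend (n := n) hir with ⟨L2, hL2, hext⟩
  refine ⟨(descList (j-1) 1 ++ (DDw (i-1)).map (fun a => i + 1 - a)) ++ L2, ?_, ?_⟩
  · intro a ha
    rcases List.mem_append.1 ha with h | h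
    · rcases List.mem_append.1 h with h | h
      · have := mem_descList.1 h; omega
      · rcases List.mem_map.1 h with ⟨b, hb, rfl⟩
        have := mem_DDw hb; omega
    · exact hL2 a h
  · rw [hext, hm]
    simp only [word_append, mul_assoc]

lemma alpha_div_DD {i j r : ℕ} (hi : 1 ≤ i) (hj : 1 ≤ j) (hir : i ≤ r) (hjr : j ≤ r)
    (hr : r ≤ n - 1) :
    ∃ L, (∀ a ∈ L, 1 ≤ a ∧ a ≤ r) ∧ DD n r = alphaB n i j * word n L := by
  rcases le_or_gt j i with hji | hij
  · exact alpha_div_DD_desc hj hji hir hr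
  · have hij' : i ≤ j := le_of_lt hij
    rcases alpha_div_DD_desc (n := n) (i := r + 1 - i) (j := r + 1 - j)
      (by omega) (by omega) (by omega) hr with ⟨c, hc, hdd⟩
    refine ⟨c.map (fun a => r + 1 - a), map_flip_bounds hc, ?_⟩
    have hA : ∀ a ∈ List.range' i (j + 1 - i), 1 ≤ a ∧ a ≤ r := by
      intro a ha
      have := mem_asc ha
      omega
    rw [alpha_word_asc hij']
    apply tau_eq hr hA (map_flip_bounds hc)
    rw [map_asc_flip hi hij' hjr, map_flip_flip hc, ← alpha_word_desc (by omega)]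
    exact hdd

end S7
namespace S7

variable {n : ℕ}

lemma xlem {M : ℕ} (h2 : 2 ≤ M) (hM : M ≤ n - 1) :
    DD n M = σb n M * (DD n (M-1) * word n (descList M 2)) := by
  have hG : σb n M * DD n M = DD n M * σb n 1 := by
    have h := Gm (r := M) hM (by omega) (le_refl M)
    rwa [show M+1-M = 1 from by omega] at h
  have hsplit : word n (RW M) = word n (descList M 2) * σb n 1 := by
    show word n (descList M 1) = _
    rw [descList_split (show (1:ℕ) ≤ 2 from by omega) h2, word_append, descList_one,
      word_singleton]
  have hstep : DD n M = DD n (M-1) * word n (RW M) := DD_step (by omega)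
  have key : (σb n M * (DD n (M-1) * word n (descList M 2))) * σb n 1 = DD n M * σb n 1 := by
    calc (σb n M * (DD n (M-1) * word n (descList M 2))) * σb n 1
        = σb n M * (DD n (M-1) * (word n (descList M 2) * σb n 1)) := by group
      _ = σb n M * (DD n (M-1) * word n (RW M)) := by rw [← hsplit]
      _ = σb n M * DD n M := by rw [← hstep]
      _ = DD n M * σb n 1 := hG
  exact (mul_right_cancel key).symm

lemma DDw_head {m : ℕ} (h : 1 ≤ m) : ∃ tl, DDw m = 1 :: tl := by
  induction m with
  | zero => omega
  | succ m ih =>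
      rcases Nat.eq_zero_or_pos m with h0 | h0
      · subst h0
        exact ⟨[], rfl⟩
      · obtain ⟨tl, htl⟩ := ih h0
        refine ⟨tl ++ RW (m+1), ?_⟩
        rw [DDw_succ, htl]
        rfl

lemma alpha_step {j M : ℕ} (hj : j ≤ M) :
    alphaB n (M+1) j = σb n (M+1) * alphaB n M j := by
  rw [alpha_word_desc (by omega), alpha_word_desc hj, descList_succ (by omega), word_cons]

/-- THE key divisibility: for `k ≠ i`, `σ_k α_{i,j} ≼ Δ_{m+1}`. -/
theorem Kthm : ∀ m, m ≤ n - 1 →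
    ∀ k i j, 1 ≤ k → k ≤ m → 1 ≤ i → i ≤ m → 1 ≤ j → j ≤ m → k ≠ i →
    ∃ L, (∀ a ∈ L, 1 ≤ a ∧ a ≤ m) ∧ DD n m = σb n k * (alphaB n i j * word n L) := by
  intro m
  induction m with
  | zero => intro _ k i j hk1 hk2 _ _ _ _ _; omega
  | succ m IH =>
      intro hM
      have hdesc : ∀ k i j, 1 ≤ k → k ≤ m+1 → 1 ≤ i → i ≤ m+1 → 1 ≤ j → j ≤ i → k ≠ i →
          ∃ L, (∀ a ∈ L, 1 ≤ a ∧ a ≤ m+1) ∧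
            DD n (m+1) = σb n k * (alphaB n i j * word n L) := by
        intro k i j hk1 hk2 hi1 hi2 hj1 hji hki
        by_cases hiM : i = m + 1
        · subst hiM
          have hkm : k ≤ m := by omega
          by_cases hksmall : k ≤ m - 1
          · -- k ≤ m-1 : note m ≥ 2
            have hm2 : 2 ≤ m := by omega
            have hx : DD n (m+1) = σb n (m+1) * (DD n m * word n (descList (m+1) 2)) := by
              have := xlem (M := m+1) (by omega) hM
              rwa [show m+1-1 = m from by omega] at this
            have hcom : σb n (m+1) * σb n k = σb n k * σb n (m+1) :=
              braid_comm (Or.inr (by omega))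
            by_cases hjM : j = m + 1
            · subst hjM
              obtain ⟨L₁, hL₁, h₁⟩ := alpha_div_DD_desc (n := n) (i := k) (j := k) (r := m)
                (by omega) (le_refl k) (by omega) (by omega)
              rw [alpha_refl] at h₁
              refine ⟨L₁ ++ descList (m+1) 2, ?_, ?_⟩
              · intro a ha
                rcases List.mem_append.1 ha with h | h
                · have := hL₁ a h; omega
                · have := mem_descList.1 h; omega
              · rw [alpha_refl]
                calc DD n (m+1)
                    = σb n (m+1) * (DD n m * word n (descList (m+1) 2)) := hx
                  _ = σb n (m+1) * ((σb n k * word n L₁) * word n (descList (m+1) 2)) := by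
                      rw [← h₁]
                  _ = (σb n (m+1) * σb n k) *
                        (word n L₁ * word n (descList (m+1) 2)) := by group
                  _ = (σb n k * σb n (m+1)) *
                        (word n L₁ * word n (descList (m+1) 2)) := by rw [hcom]
                  _ = σb n k * (σb n (m+1) * word n (L₁ ++ descList (m+1) 2)) := by
                      rw [word_append]; group
            · -- j ≤ m
              have hjm : j ≤ m := by omega
              obtain ⟨L₁, hL₁, h₁⟩ := IH (by omega) k m j hk1 hkm (by omega) (le_refl m)
                hj1 hjm (by omega)
              have hαM : alphaB n (m+1) j = σb n (m+1) * alphaB n m j := alpha_step hjm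
              refine ⟨L₁ ++ descList (m+1) 2, ?_, ?_⟩
              · intro a ha
                rcases List.mem_append.1 ha with h | h
                · have := hL₁ a h; omega
                · have := mem_descList.1 h; omega
              · calc DD n (m+1)
                    = σb n (m+1) * (DD n m * word n (descList (m+1) 2)) := hx
                  _ = σb n (m+1) * ((σb n k * (alphaB n m j * word n L₁)) *
                        word n (descList (m+1) 2)) := by rw [← h₁]
                  _ = (σb n (m+1) * σb n k) *
                        (alphaB n m j * (word n L₁ * word n (descList (m+1) 2))) := by group
                  _ = (σb n k * σb n (m+1)) *
                        (alphaB n m j * (word n L₁ * word n (descList (m+1) 2))) := by rw [hcom]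
                  _ = σb n k * ((σb n (m+1) * alphaB n m j) *
                        word n (L₁ ++ descList (m+1) 2)) := by rw [word_append]; group
                  _ = σb n k * (alphaB n (m+1) j * word n (L₁ ++ descList (m+1) 2)) := by
                      rw [← hαM]
          · -- k = m
            rw [show k = m from by omega]
            have hm1 : 1 ≤ m := by omega
            by_cases hjM : j = m + 1
            · subst hjM
              -- σ_m σ_{m+1} via tau from α_{2,1}
              obtain ⟨c, hc, hdd⟩ := alpha_div_DD_desc (n := n) (i := 2) (j := 1)
                (by omega) (by omega) (by omega) hM
              have h21 : alphaB n 2 1 = word n [2, 1] := by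
                rw [alpha_word_desc (by omega)]
                rfl
              refine ⟨c.map (fun a => (m+1) + 1 - a), map_flip_bounds hc, ?_⟩
              have hres := tau_eq (r := m+1) hM
                (A := [m, m+1]) (C := c.map (fun a => (m+1)+1-a))
                (by intro a ha; simp at ha; omega)
                (map_flip_bounds hc) ?_
              · rw [alpha_refl]
                calc DD n (m+1)
                    = word n [m, m+1] * word n (c.map (fun a => (m+1)+1-a)) := hres
                  _ = σb n m * (σb n (m+1) * word n (c.map (fun a => (m+1)+1-a))) := by
                      rw [word_cons, word_singleton, mul_assoc]
              · -- the tau'd equation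
                rw [map_flip_flip hc]
                have hmap : ([m, m+1].map (fun a => (m+1)+1-a)) = [2, 1] := by
                  simp only [List.map_cons, List.map_nil]
                  rw [show (m+1)+1-m = 2 from by omega, show (m+1)+1-(m+1) = 1 from by omega]
                rw [hmap, ← h21]
                exact hdd
            · -- j ≤ m : swid route
              have hjm : j ≤ m := by omega
              -- descList (m+1) j = (m+1) :: m :: descList (m-1) j
              have hd1 : descList (m+1) j = (m+1) :: descList m j := descList_succ (by omega)
              have hd2 : descList m j = m :: descList (m-1) j := by
                conv_lhs => rw [show m = (m-1)+1 from by omega]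
                rw [descList_succ (by omega), show (m-1)+1 = m from by omega]
              have hadj : σb n m * σb n (m+1) * σb n m = σb n (m+1) * σb n m * σb n (m+1) :=
                braid_adj hm1 (by omega)
              have hcm : σb n (m+1) * word n (descList (m-1) j) =
                  word n (descList (m-1) j) * σb n (m+1) := by
                apply σb_comm_word
                intro a ha
                have := mem_descList.1 ha
                omega
              have hswid : σb n m * word n (descList (m+1) j) =
                  word n (descList (m+1) j) * σb n (m+1) := by
                rw [hd1, hd2, word_cons, word_cons]
                calc σb n m * (σb n (m+1) * (σb n m * word n (descList (m-1) j)))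
                    = (σb n m * σb n (m+1) * σb n m) * word n (descList (m-1) j) := by group
                  _ = (σb n (m+1) * σb n m * σb n (m+1)) * word n (descList (m-1) j) := by
                      rw [hadj]
                  _ = (σb n (m+1) * σb n m) *
                        (σb n (m+1) * word n (descList (m-1) j)) := by group
                  _ = (σb n (m+1) * σb n m) *
                        (word n (descList (m-1) j) * σb n (m+1)) := by rw [hcm]
                  _ = σb n (m+1) * (σb n m * word n (descList (m-1) j)) * σb n (m+1) := by
                      group
              obtain ⟨tl, htl⟩ := DDw_head hm1
              have htlb : ∀ a ∈ tl, 1 ≤ a ∧ a ≤ m := by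
                intro a ha
                exact mem_DDw (htl ▸ List.mem_cons_of_mem 1 ha)
              have hmas := master (i := m+1) (j := j) hj1 (by omega) hM
              rw [show m + 1 - 1 = m from by omega, htl] at hmas
              have hmap : ((1 :: tl).map (fun a => (m+1) + 1 - a)) =
                  (m+1) :: tl.map (fun a => (m+1)+1-a) := by
                simp
              rw [hmap] at hmas
              have hcj : σb n (m+1) * word n (descList (j-1) 1) =
                  word n (descList (j-1) 1) * σb n (m+1) := by
                apply σb_comm_word
                intro a ha
                have := mem_descList.1 ha
                omega
              refine ⟨descList (j-1) 1 ++ tl.map (fun a => (m+1)+1-a), ?_, ?_⟩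
              · intro a ha
                rcases List.mem_append.1 ha with h | h
                · have := mem_descList.1 h; omega
                · rcases List.mem_map.1 h with ⟨b, hb, rfl⟩
                  have := htlb b hb; omega
              · calc DD n (m+1)
                    = alphaB n (m+1) j * word n (descList (j-1) 1 ++
                        ((m+1) :: tl.map (fun a => (m+1)+1-a))) := hmas
                  _ = alphaB n (m+1) j * (word n (descList (j-1) 1) *
                        (σb n (m+1) * word n (tl.map (fun a => (m+1)+1-a)))) := by
                      rw [word_append, word_cons]
                  _ = alphaB n (m+1) j * ((σb n (m+1) * word n (descList (j-1) 1)) *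
                        word n (tl.map (fun a => (m+1)+1-a))) := by rw [hcj]; group
                  _ = (alphaB n (m+1) j * σb n (m+1)) *
                        (word n (descList (j-1) 1) * word n (tl.map (fun a => (m+1)+1-a))) := by
                      group
                  _ = (σb n m * alphaB n (m+1) j) *
                        (word n (descList (j-1) 1) * word n (tl.map (fun a => (m+1)+1-a))) := by
                      rw [alpha_word_desc (by omega : j ≤ m+1), ← hswid]
                  _ = σb n m * (alphaB n (m+1) j *
                        word n (descList (j-1) 1 ++ tl.map (fun a => (m+1)+1-a))) := by
                      rw [word_append]; group
        · -- i ≤ m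
          have him : i ≤ m := by omega
          by_cases hkM : k = m + 1
          · subst hkM
            by_cases hieq : i = m
            · rw [hieq]
              obtain ⟨L₁, hL₁, h₁⟩ := alpha_div_DD_desc (n := n) (i := m+1) (j := j)
                hj1 (by omega) (le_refl (m+1)) hM
              refine ⟨L₁, hL₁, ?_⟩
              rw [h₁, alpha_step (show j ≤ m from by omega), mul_assoc]
            · -- i ≤ m - 1
              have him1 : i ≤ m - 1 := by omega
              have hcomα : σb n (m+1) * word n (descList i j) =
                  word n (descList i j) * σb n (m+1) := by
                apply σb_comm_word
                intro a ha
                have := mem_descList.1 ha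
                omega
              have hmas := master (n := n) (i := i) (j := j) hj1 hji (by omega)
              have hsplit := DD_runs_split (n := n) (u := i) (r := m+1) (by omega)
              obtain ⟨L', hL', hruns⟩ := runs_div (s := i+1) (k := m+1) (t := m+1)
                (by omega) (by omega) (le_refl (m+1)) hM
              have hcom_d1 : σb n (m+1) * word n (descList (j-1) 1) =
                  word n (descList (j-1) 1) * σb n (m+1) := by
                apply σb_comm_word
                intro a ha
                have := mem_descList.1 ha
                omega
              have hcom_mp : σb n (m+1) * word n ((DDw (i-1)).map (fun a => i + 1 - a)) =
                  word n ((DDw (i-1)).map (fun a => i + 1 - a)) * σb n (m+1) := by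
                apply σb_comm_word
                intro a ha
                rcases List.mem_map.1 ha with ⟨b, hb, rfl⟩
                have := mem_DDw hb
                omega
              refine ⟨(descList (j-1) 1 ++ (DDw (i-1)).map (fun a => i + 1 - a)) ++ L', ?_, ?_⟩
              · intro a ha
                rcases List.mem_append.1 ha with h | h
                · rcases List.mem_append.1 h with h | h
                  · have := mem_descList.1 h; omega
                  · rcases List.mem_map.1 h with ⟨b, hb, rfl⟩
                    have := mem_DDw hb; omega
                · exact hL' a h
              · calc DD n (m+1)
                    = DD n i * word n (RunsW (i+1) (m+1)) := hsplit
                  _ = (alphaB n i j *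
                        word n (descList (j-1) 1 ++ (DDw (i-1)).map (fun a => i + 1 - a))) *
                        (σb n (m+1) * word n L') := by rw [← hmas, ← hruns]
                  _ = alphaB n i j * (word n (descList (j-1) 1) *
                        ((word n ((DDw (i-1)).map (fun a => i + 1 - a)) * σb n (m+1)) *
                          word n L')) := by rw [word_append]; group
                  _ = alphaB n i j * (word n (descList (j-1) 1) *
                        ((σb n (m+1) * word n ((DDw (i-1)).map (fun a => i + 1 - a))) *
                          word n L')) := by rw [hcom_mp]
                  _ = alphaB n i j * ((word n (descList (j-1) 1) * σb n (m+1)) *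
                        (word n ((DDw (i-1)).map (fun a => i + 1 - a)) * word n L')) := by
                      group
                  _ = alphaB n i j * ((σb n (m+1) * word n (descList (j-1) 1)) *
                        (word n ((DDw (i-1)).map (fun a => i + 1 - a)) * word n L')) := by
                      rw [hcom_d1]
                  _ = (word n (descList i j) * σb n (m+1)) * (word n (descList (j-1) 1) *
                        (word n ((DDw (i-1)).map (fun a => i + 1 - a)) * word n L')) := by
                      rw [alpha_word_desc hji]; group
                  _ = (σb n (m+1) * word n (descList i j)) * (word n (descList (j-1) 1) *
                        (word n ((DDw (i-1)).map (fun a => i + 1 - a)) * word n L')) := by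
                      rw [hcomα]
                  _ = σb n (m+1) * (alphaB n i j * word n ((descList (j-1) 1 ++
                        (DDw (i-1)).map (fun a => i + 1 - a)) ++ L')) := by
                      rw [alpha_word_desc hji, word_append, word_append]; group
          · -- k ≤ m
            have hkm : k ≤ m := by omega
            obtain ⟨L₁, hL₁, h₁⟩ := IH (by omega) k i j hk1 hkm hi1 him hj1 (by omega) hki
            obtain ⟨L₂, hL₂, h₂⟩ := DD_extend (n := n) (show m ≤ m+1 from by omega)
            refine ⟨L₁ ++ L₂, ?_, ?_⟩
            · intro a ha
              rcases List.mem_append.1 ha with h | h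
              · have := hL₁ a h; omega
              · exact hL₂ a h
            · rw [h₂, h₁, word_append]
              group
      intro k i j hk1 hk2 hi1 hi2 hj1 hj2 hki
      rcases le_or_gt j i with hji | hij
      · exact hdesc k i j hk1 hk2 hi1 hi2 hj1 hji hki
      · -- ascending via tau
        have hij' : i ≤ j := le_of_lt hij
        have hA : ∀ a ∈ (k :: List.range' i (j+1-i)), 1 ≤ a ∧ a ≤ m+1 := by
          intro a ha
          rcases List.mem_cons.1 ha with rfl | h
          · exact ⟨hk1, hk2⟩
          · have := mem_asc h; omega
        obtain ⟨c, hc, hdd⟩ := hdesc ((m+1)+1-k) ((m+1)+1-i) ((m+1)+1-j)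
          (by omega) (by omega) (by omega) (by omega) (by omega) (by omega) (by omega)
        refine ⟨c.map (fun a => (m+1)+1-a), map_flip_bounds hc, ?_⟩
        have hfeed : DD n (m+1) =
            word n ((k :: List.range' i (j+1-i)).map (fun a => (m+1)+1-a)) *
            word n ((c.map (fun a => (m+1)+1-a)).map (fun a => (m+1)+1-a)) := by
          rw [map_flip_flip hc, List.map_cons, map_asc_flip hi1 hij' hj2]
          rw [word_cons, ← alpha_word_desc (show (m+1)+1-j ≤ (m+1)+1-i from by omega),
            mul_assoc]
          exact hdd
        have hres := tau_eq (r := m+1) hM hA (map_flip_bounds hc) hfeed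
        rw [word_cons] at hres
        rw [mul_assoc] at hres
        rw [← alpha_word_asc hij'] at hres
        exact hres

end S7
namespace S7

variable {n : ℕ}

/-! ### The length homomorphism φ -/

def phiF (n : ℕ) : ℕ → Multiplicative ℤ := fun i =>
  if 1 ≤ i ∧ i ≤ n - 1 then Multiplicative.ofAdd 1 else 1

lemma phi_rels : ∀ r ∈ braidRels n, FreeGroup.lift (phiF n) r = 1 := by
  intro r hr
  rcases hr with ⟨i, h1, h2, rfl⟩ | ⟨i, j, h1, h2, h3, rfl⟩ | ⟨i, hi, rfl⟩
  · simp only [map_mul, map_inv, FreeGroup.lift_apply_of]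
    have e1 : phiF n i = Multiplicative.ofAdd 1 := if_pos ⟨h1, by omega⟩
    have e2 : phiF n (i+1) = Multiplicative.ofAdd 1 := if_pos ⟨by omega, by omega⟩
    rw [e1, e2]
    group
  · simp only [map_mul, map_inv, FreeGroup.lift_apply_of]
    have e1 : phiF n i = Multiplicative.ofAdd 1 := if_pos ⟨h1, by omega⟩
    have e2 : phiF n j = Multiplicative.ofAdd 1 := if_pos ⟨by omega, by omega⟩
    rw [e1, e2]
    group
  · simp only [FreeGroup.lift_apply_of]
    exact if_neg (by omega)

def phi (n : ℕ) : B n →* Multiplicative ℤ := PresentedGroup.toGroup phi_rels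

lemma phi_σ {k : ℕ} (h1 : 1 ≤ k) (h2 : k ≤ n - 1) :
    phi n (σb n k) = Multiplicative.ofAdd (1 : ℤ) := by
  show PresentedGroup.toGroup phi_rels (PresentedGroup.of k) = _
  rw [PresentedGroup.toGroup.of]
  exact if_pos ⟨h1, h2⟩

lemma phi_word {L : List ℕ} (hL : ∀ a ∈ L, 1 ≤ a ∧ a ≤ n - 1) :
    phi n (word n L) = Multiplicative.ofAdd (L.length : ℤ) := by
  induction L with
  | nil => simp [word_nil]
  | cons a L ih =>
      rw [word_cons, map_mul, phi_σ (hL a (by simp)).1 (hL a (by simp)).2,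
        ih (fun b hb => hL b (by simp [hb]))]
      rw [← ofAdd_add]
      congr 1
      simp
      omega

lemma RW_len (t : ℕ) : (RW t).length = t := by
  simp [RW, descList]

lemma DDw_len : ∀ r, 2 * (DDw r).length = r * (r + 1) := by
  intro r
  induction r with
  | zero => rfl
  | succ r ih =>
      rw [DDw_succ, List.length_append, RW_len]
      ring_nf
      ring_nf at ih
      omega

lemma phi_DD {r : ℕ} (hr : r ≤ n - 1) :
    phi n (DD n r) = Multiplicative.ofAdd (((DDw r).length : ℤ)) :=
  phi_word (fun a ha => by have := mem_DDw ha; omega)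

/-! ### The permutation homomorphism π -/

lemma swap_braid (i : ℕ) :
    Equiv.swap i (i+1) * Equiv.swap (i+1) (i+2) * Equiv.swap i (i+1) =
      Equiv.swap (i+1) (i+2) * Equiv.swap i (i+1) * Equiv.swap (i+1) (i+2) := by
  have h1 := Equiv.swap_mul_swap_mul_swap (x := i+2) (y := i+1) (z := i)
    (by omega) (by omega)
  have h2 := Equiv.swap_mul_swap_mul_swap (x := i) (y := i+1) (z := i+2)
    (by omega) (by omega)
  rw [Equiv.swap_comm (i+1) i, Equiv.swap_comm (i+2) (i+1)] at h1
  rw [h2, Equiv.swap_comm (i+2) i]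
  exact h1

lemma swap_far {i j : ℕ} (h : i + 2 ≤ j) :
    Equiv.swap i (i+1) * Equiv.swap j (j+1) = Equiv.swap j (j+1) * Equiv.swap i (i+1) := by
  have hd : Equiv.Perm.Disjoint (Equiv.swap i (i+1)) (Equiv.swap j (j+1)) := by
    intro x
    by_cases hx : x = i ∨ x = i + 1
    · right
      apply Equiv.swap_apply_of_ne_of_ne <;> omega
    · left
      apply Equiv.swap_apply_of_ne_of_ne <;> omega
  exact hd.commute.eq

def piF (n : ℕ) : ℕ → Equiv.Perm ℕ := fun i =>
  if 1 ≤ i ∧ i ≤ n - 1 then Equiv.swap i (i+1) else 1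

lemma pi_rels : ∀ r ∈ braidRels n, FreeGroup.lift (piF n) r = 1 := by
  intro r hr
  rcases hr with ⟨i, h1, h2, rfl⟩ | ⟨i, j, h1, h2, h3, rfl⟩ | ⟨i, hi, rfl⟩
  · simp only [map_mul, map_inv, FreeGroup.lift_apply_of]
    have e1 : piF n i = Equiv.swap i (i+1) := if_pos ⟨h1, by omega⟩
    have e2 : piF n (i+1) = Equiv.swap (i+1) (i+2) := if_pos ⟨by omega, by omega⟩
    rw [e1, e2, mul_inv_eq_one]
    exact swap_braid i
  · simp only [map_mul, map_inv, FreeGroup.lift_apply_of]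
    have e1 : piF n i = Equiv.swap i (i+1) := if_pos ⟨h1, by omega⟩
    have e2 : piF n j = Equiv.swap j (j+1) := if_pos ⟨by omega, by omega⟩
    rw [e1, e2, mul_inv_eq_one]
    exact swap_far h2
  · simp only [FreeGroup.lift_apply_of]
    exact if_neg (by omega)

def pib (n : ℕ) : B n →* Equiv.Perm ℕ := PresentedGroup.toGroup pi_rels

lemma pi_σ {k : ℕ} (h1 : 1 ≤ k) (h2 : k ≤ n - 1) :
    pib n (σb n k) = Equiv.swap k (k+1) := by
  show PresentedGroup.toGroup pi_rels (PresentedGroup.of k) = _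
  rw [PresentedGroup.toGroup.of]
  exact if_pos ⟨h1, h2⟩

end S7
namespace S7

variable {n : ℕ}

/-! ### Permutation values of basic words -/

lemma pi_word_range : ∀ len i, 1 ≤ i → i + len ≤ n → ∀ x,
    pib n (word n (List.range' i len)) x =
      if i ≤ x ∧ x < i + len then x + 1 else if x = i + len then i else x := by
  intro len
  induction len with
  | zero =>
      intro i h1 h2 x
      simp only [List.range'_zero, word_nil, map_one, Equiv.Perm.one_apply]
      split_ifs <;> omega
  | succ len ih =>
      intro i h1 h2 x
      rw [List.range'_succ, word_cons, map_mul, pi_σ h1 (by omega), Equiv.Perm.mul_apply,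
        ih (i+1) (by omega) (by omega) x]
      simp only [Equiv.swap_apply_def]
      split_ifs <;> omega

lemma pi_word_descD : ∀ d j, 1 ≤ j → j + d ≤ n - 1 → ∀ x,
    pib n (word n (descList (j+d) j)) x =
      if x = j then (j+d) + 1 else if j + 1 ≤ x ∧ x ≤ (j+d) + 1 then x - 1 else x := by
  intro d
  induction d with
  | zero =>
      intro j h1 h2 x
      have : descList (j+0) j = [j] := by
        rw [show j + 0 = j from rfl]
        unfold descList
        rw [show j + 1 - j = 1 from by omega]
        rfl
      rw [this, word_singleton, pi_σ h1 (by omega)]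
      simp only [Equiv.swap_apply_def]
      split_ifs <;> omega
  | succ d ih =>
      intro j h1 h2 x
      have hds : descList (j+(d+1)) j = (j+d+1) :: descList (j+d) j := by
        rw [show j + (d+1) = (j+d) + 1 from by omega]
        exact descList_succ (by omega)
      rw [hds, word_cons, map_mul, pi_σ (by omega) (by omega), Equiv.Perm.mul_apply,
        ih j h1 (by omega) x]
      simp only [Equiv.swap_apply_def]
      split_ifs <;> omega

lemma pi_word_desc {i j : ℕ} (h1 : 1 ≤ j) (hji : j ≤ i) (hi : i ≤ n - 1) (x : ℕ) :
    pib n (word n (descList i j)) x =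
      if x = j then i + 1 else if j + 1 ≤ x ∧ x ≤ i + 1 then x - 1 else x := by
  have h := pi_word_descD (n := n) (i - j) j h1 (by omega) x
  rw [show j + (i - j) = i from by omega] at h
  exact h

lemma pi_alpha_desc {i j : ℕ} (h1 : 1 ≤ j) (hji : j ≤ i) (hi : i ≤ n - 1) (x : ℕ) :
    pib n (alphaB n i j) x =
      if x = j then i + 1 else if j + 1 ≤ x ∧ x ≤ i + 1 then x - 1 else x := by
  rw [alpha_word_desc hji]
  exact pi_word_desc h1 hji hi x

lemma pi_alpha_asc {i j : ℕ} (h1 : 1 ≤ i) (hij : i ≤ j) (hj : j ≤ n - 1) (x : ℕ) :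
    pib n (alphaB n i j) x =
      if i ≤ x ∧ x ≤ j then x + 1 else if x = j + 1 then i else x := by
  rw [alpha_word_asc hij]
  have h := pi_word_range (n := n) (j+1-i) i h1 (by omega) x
  rw [show i + (j+1-i) = j+1 from by omega] at h
  rw [h]
  split_ifs <;> omega

lemma pi_DD_val : ∀ r, r ≤ n - 1 → ∀ x,
    pib n (DD n r) x = if 1 ≤ x ∧ x ≤ r + 1 then r + 2 - x else x := by
  intro r
  induction r with
  | zero =>
      intro _ x
      show pib n 1 x = _
      rw [map_one, Equiv.Perm.one_apply]
      split_ifs <;> omega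
  | succ r ih =>
      intro hr x
      rw [DD_succ, map_mul, Equiv.Perm.mul_apply]
      have hRW : pib n (word n (RW (r+1))) x =
          if x = 1 then (r+1) + 1 else if 2 ≤ x ∧ x ≤ (r+1) + 1 then x - 1 else x := by
        have h := pi_word_desc (i := r+1) (j := 1) (by omega) (by omega) hr x
        rw [show (1:ℕ) + 1 = 2 from rfl] at h
        exact h
      rw [hRW]
      by_cases hx1 : x = 1
      · rw [if_pos hx1, ih (by omega) ((r+1)+1)]
        split_ifs <;> omega
      · rw [if_neg hx1]
        by_cases hx2 : 2 ≤ x ∧ x ≤ (r+1)+1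
        · rw [if_pos hx2, ih (by omega) (x-1)]
          split_ifs <;> omega
        · rw [if_neg hx2, ih (by omega) x]
          split_ifs <;> omega

lemma pi_Delta_val (hn : 3 ≤ n) (x : ℕ) :
    pib n (DeltaB n) x = if 1 ≤ x ∧ x ≤ n then n + 1 - x else x := by
  rw [DeltaB_eq_DD]
  rw [pi_DD_val (n := n) (n-1) (le_refl _) x]
  split_ifs <;> omega

lemma pi_delta_val (hn : 3 ≤ n) (x : ℕ) :
    pib n (deltaB n) x =
      if 1 ≤ x ∧ x ≤ n - 1 then x + 1 else if x = n then 1 else x := by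
  show pib n (word n (List.range' 1 (n-1))) x = _
  have h := pi_word_range (n := n) (n-1) 1 (le_refl 1) (by omega) x
  rw [show 1 + (n-1) = n from by omega] at h
  rw [h]
  split_ifs <;> omega

/-! ### Support -/

/-- `w` is supported on `[1, n]`. -/
def SuppN (n : ℕ) (w : Equiv.Perm ℕ) : Prop := ∀ x, x = 0 ∨ n < x → w x = x

lemma suppN_word {L : List ℕ} (hL : ∀ a ∈ L, 1 ≤ a ∧ a ≤ n - 1) :
    SuppN n (pib n (word n L)) := by
  induction L with
  | nil =>
      intro x _
      simp [word_nil]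
  | cons a L ih =>
      intro x hx
      have ha := hL a (by simp)
      rw [word_cons, map_mul, Equiv.Perm.mul_apply,
        ih (fun b hb => hL b (by simp [hb])) x hx, pi_σ ha.1 ha.2]
      apply Equiv.swap_apply_of_ne_of_ne <;> omega

lemma suppN_one : SuppN n 1 := fun x _ => rfl

lemma suppN_mul {u v : Equiv.Perm ℕ} (hu : SuppN n u) (hv : SuppN n v) : SuppN n (u * v) := by
  intro x hx
  rw [Equiv.Perm.mul_apply, hv x hx, hu x hx]

lemma suppN_inv {u : Equiv.Perm ℕ} (hu : SuppN n u) : SuppN n u⁻¹ := by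
  intro x hx
  have := hu x hx
  conv_lhs => rw [← this]
  exact Equiv.Perm.inv_apply_self u x

lemma suppN_mem {u : Equiv.Perm ℕ} (hu : SuppN n u) {x : ℕ} (hx : 1 ≤ x ∧ x ≤ n) :
    1 ≤ u x ∧ u x ≤ n := by
  by_contra hcon
  have h0 : u x = 0 ∨ n < u x := by omega
  have := suppN_inv hu (u x) h0
  rw [Equiv.Perm.inv_apply_self] at this
  omega

lemma suppN_swap {k : ℕ} (h1 : 1 ≤ k) (h2 : k ≤ n - 1) :
    SuppN n (Equiv.swap k (k+1)) := by
  intro x hx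
  apply Equiv.swap_apply_of_ne_of_ne <;> omega

end S7
namespace S7

variable {n : ℕ}

open Equiv

/-! ### Inversion counting -/

def InvSet (n : ℕ) (w : Equiv.Perm ℕ) : Finset (ℕ × ℕ) :=
  (Finset.Icc 1 n ×ˢ Finset.Icc 1 n).filter (fun p => p.1 < p.2 ∧ w p.2 < w p.1)

def invc (n : ℕ) (w : Equiv.Perm ℕ) : ℕ := (InvSet n w).card

lemma mem_InvSet {w : Equiv.Perm ℕ} {a b : ℕ} :
    (a, b) ∈ InvSet n w ↔ 1 ≤ a ∧ a ≤ n ∧ 1 ≤ b ∧ b ≤ n ∧ a < b ∧ w b < w a := by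
  simp [InvSet, Finset.mem_filter, Finset.mem_product, Finset.mem_Icc]
  tauto

lemma invc_one : invc n 1 = 0 := by
  unfold invc InvSet
  rw [Finset.card_eq_zero, Finset.filter_eq_empty_iff]
  rintro ⟨a, b⟩ _
  simp only [Equiv.Perm.one_apply]
  omega

lemma swap_val (k x : ℕ) :
    Equiv.swap k (k+1) x = if x = k then k+1 else if x = k+1 then k else x := by
  rw [Equiv.swap_apply_def]

lemma swap_cases (k x : ℕ) :
    (x = k ∧ Equiv.swap k (k+1) x = k+1) ∨ (x = k+1 ∧ Equiv.swap k (k+1) x = k) ∨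
      (x ≠ k ∧ x ≠ k+1 ∧ Equiv.swap k (k+1) x = x) := by
  rcases eq_or_ne x k with rfl | h1
  · left
    exact ⟨rfl, Equiv.swap_apply_left _ _⟩
  rcases eq_or_ne x (k+1) with rfl | h2
  · right; left
    exact ⟨rfl, Equiv.swap_apply_right _ _⟩
  · right; right
    exact ⟨h1, h2, Equiv.swap_apply_of_ne_of_ne h1 h2⟩

lemma invc_mul_swap_lt {w : Equiv.Perm ℕ} {k : ℕ} (h1 : 1 ≤ k) (h2 : k ≤ n - 1)
    (hn : 2 ≤ n) (hlt : w k < w (k+1)) :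
    invc n (w * Equiv.swap k (k+1)) = invc n w + 1 := by
  have hme : ∀ a b : ℕ, ((a, b) ∈ InvSet n (w * Equiv.swap k (k+1))) ↔
      (1 ≤ a ∧ a ≤ n ∧ 1 ≤ b ∧ b ≤ n ∧ a < b ∧
        w (Equiv.swap k (k+1) b) < w (Equiv.swap k (k+1) a)) := by
    intro a b
    rw [mem_InvSet]
    exact Iff.rfl
  have himg : InvSet n (w * Equiv.swap k (k+1)) =
      insert (k, k+1) ((InvSet n w).image
        (fun p => (Equiv.swap k (k+1) p.1, Equiv.swap k (k+1) p.2))) := by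
    ext ⟨a, b⟩
    rw [hme a b, Finset.mem_insert, Finset.mem_image, Prod.mk.injEq]
    constructor
    · rintro ⟨ha1, ha2, hb1, hb2, hab, hw⟩
      by_cases hkk : a = k ∧ b = k + 1
      · left
        exact ⟨hkk.1, hkk.2⟩
      · right
        refine ⟨(Equiv.swap k (k+1) a, Equiv.swap k (k+1) b), ?_, ?_⟩
        · rw [mem_InvSet]
          have hsa := swap_cases k a
          have hsb := swap_cases k b
          exact ⟨by omega, by omega, by omega, by omega, by omega, hw⟩
        · simp [Equiv.swap_apply_self]
    · rintro (⟨he1, he2⟩ | ⟨⟨a', b'⟩, hm, he⟩)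
      · refine ⟨by omega, by omega, by omega, by omega, by omega, ?_⟩
        rw [he1, he2, Equiv.swap_apply_left, Equiv.swap_apply_right]
        exact hlt
      · rw [mem_InvSet] at hm
        obtain ⟨ha1, ha2, hb1, hb2, hab, hw⟩ := hm
        simp only [Prod.mk.injEq] at he
        obtain ⟨he1, he2⟩ := he
        subst he1
        subst he2
        have hsa := swap_cases k a'
        have hsb := swap_cases k b'
        have hnk : ¬(a' = k ∧ b' = k + 1) := by
          rintro ⟨rfl, rfl⟩
          omega
        refine ⟨by omega, by omega, by omega, by omega, by omega, ?_⟩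
        rw [Equiv.swap_apply_self, Equiv.swap_apply_self]
        exact hw
  have hnotin : (k, k+1) ∉ (InvSet n w).image
      (fun p => (Equiv.swap k (k+1) p.1, Equiv.swap k (k+1) p.2)) := by
    rw [Finset.mem_image]
    rintro ⟨⟨a', b'⟩, hm, he⟩
    rw [mem_InvSet] at hm
    simp only [Prod.mk.injEq] at he
    have hsa := swap_cases k a'
    have hsb := swap_cases k b'
    omega
  have hinj : Function.Injective
      (fun p : ℕ × ℕ => (Equiv.swap k (k+1) p.1, Equiv.swap k (k+1) p.2)) := by
    rintro ⟨a, b⟩ ⟨c, d⟩ h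
    simp only [Prod.mk.injEq] at h
    have h1 := (Equiv.swap k (k+1)).injective h.1
    have h2 := (Equiv.swap k (k+1)).injective h.2
    simp only [Prod.mk.injEq]
    exact ⟨h1, h2⟩
  unfold invc
  rw [himg, Finset.card_insert_of_notMem hnotin, Finset.card_image_of_injective _ hinj]

lemma invc_mul_swap_gt {w : Equiv.Perm ℕ} {k : ℕ} (h1 : 1 ≤ k) (h2 : k ≤ n - 1)
    (hn : 2 ≤ n) (hgt : w (k+1) < w k) :
    invc n w = invc n (w * Equiv.swap k (k+1)) + 1 := by
  have h := invc_mul_swap_lt (n := n) (w := w * Equiv.swap k (k+1)) h1 h2 hn ?_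
  · rw [mul_assoc] at h
    rw [Equiv.swap_mul_self, mul_one] at h
    exact h
  · have e1 : (w * Equiv.swap k (k+1)) k = w (k+1) := by
      show w (Equiv.swap k (k+1) k) = _
      rw [Equiv.swap_apply_left]
    have e2 : (w * Equiv.swap k (k+1)) (k+1) = w k := by
      show w (Equiv.swap k (k+1) (k+1)) = _
      rw [Equiv.swap_apply_right]
    rw [e1, e2]
    exact hgt

lemma invc_mul_swap_le {w : Equiv.Perm ℕ} {k : ℕ} (h1 : 1 ≤ k) (h2 : k ≤ n - 1)
    (hn : 2 ≤ n) :
    invc n (w * Equiv.swap k (k+1)) ≤ invc n w + 1 := by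
  rcases lt_or_gt_of_ne (fun hc => by
    have := w.injective hc
    omega : w k ≠ w (k+1)) with hlt | hgt
  · rw [invc_mul_swap_lt h1 h2 hn hlt]
  · rw [invc_mul_swap_gt h1 h2 hn hgt]
    omega

lemma invc_inv {w : Equiv.Perm ℕ} (hw : SuppN n w) : invc n w⁻¹ = invc n w := by
  unfold invc
  have himg : InvSet n w⁻¹ = (InvSet n w).image (fun p => (w p.2, w p.1)) := by
    ext ⟨c, d⟩
    rw [mem_InvSet, Finset.mem_image]
    constructor
    · rintro ⟨hc1, hc2, hd1, hd2, hcd, hw'⟩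
      refine ⟨(w⁻¹ d, w⁻¹ c), ?_, ?_⟩
      · rw [mem_InvSet]
        have hb1 := suppN_mem (suppN_inv hw) (x := c) ⟨hc1, hc2⟩
        have hb2 := suppN_mem (suppN_inv hw) (x := d) ⟨hd1, hd2⟩
        refine ⟨hb2.1, hb2.2, hb1.1, hb1.2, hw', ?_⟩
        rw [Equiv.Perm.apply_inv_self, Equiv.Perm.apply_inv_self]
        exact hcd
      · simp only [Prod.mk.injEq]
        rw [Equiv.Perm.apply_inv_self, Equiv.Perm.apply_inv_self]
        exact ⟨rfl, rfl⟩
    · rintro ⟨⟨a, b⟩, hm, he⟩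
      rw [mem_InvSet] at hm
      obtain ⟨ha1, ha2, hb1, hb2, hab, hwab⟩ := hm
      simp only [Prod.mk.injEq] at he
      obtain ⟨he1, he2⟩ := he
      subst he1
      subst he2
      have hb1' := suppN_mem hw (x := a) ⟨ha1, ha2⟩
      have hb2' := suppN_mem hw (x := b) ⟨hb1, hb2⟩
      refine ⟨hb2'.1, hb2'.2, hb1'.1, hb1'.2, hwab, ?_⟩
      rw [Equiv.Perm.inv_apply_self, Equiv.Perm.inv_apply_self]
      exact hab
  rw [himg, Finset.card_image_of_injective]
  rintro ⟨a, b⟩ ⟨c, d⟩ h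
  simp only [Prod.mk.injEq] at h
  simp only [Prod.mk.injEq]
  exact ⟨w.injective h.2, w.injective h.1⟩

lemma invc_swap_mul_lt {w : Equiv.Perm ℕ} {k : ℕ} (h1 : 1 ≤ k) (h2 : k ≤ n - 1)
    (hn : 2 ≤ n) (hw : SuppN n w) (hlt : w⁻¹ k < w⁻¹ (k+1)) :
    invc n (Equiv.swap k (k+1) * w) = invc n w + 1 := by
  have hsup : SuppN n (w⁻¹ * Equiv.swap k (k+1)) :=
    suppN_mul (suppN_inv hw) (suppN_swap h1 h2)
  have h := invc_mul_swap_lt (n := n) (w := w⁻¹) h1 h2 hn hlt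
  have he : (Equiv.swap k (k+1) * w)⁻¹ = w⁻¹ * Equiv.swap k (k+1) := by
    rw [mul_inv_rev, Equiv.swap_inv]
  calc invc n (Equiv.swap k (k+1) * w)
      = invc n (Equiv.swap k (k+1) * w)⁻¹ := by
        rw [invc_inv]
        exact suppN_mul (suppN_swap h1 h2) hw
    _ = invc n (w⁻¹ * Equiv.swap k (k+1)) := by rw [he]
    _ = invc n w⁻¹ + 1 := h
    _ = invc n w + 1 := by rw [invc_inv hw]

lemma invc_swap_mul_gt {w : Equiv.Perm ℕ} {k : ℕ} (h1 : 1 ≤ k) (h2 : k ≤ n - 1)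
    (hn : 2 ≤ n) (hw : SuppN n w) (hgt : w⁻¹ (k+1) < w⁻¹ k) :
    invc n w = invc n (Equiv.swap k (k+1) * w) + 1 := by
  have h := invc_mul_swap_gt (n := n) (w := w⁻¹) h1 h2 hn hgt
  have he : (Equiv.swap k (k+1) * w)⁻¹ = w⁻¹ * Equiv.swap k (k+1) := by
    rw [mul_inv_rev, Equiv.swap_inv]
  calc invc n w
      = invc n w⁻¹ := (invc_inv hw).symm
    _ = invc n (w⁻¹ * Equiv.swap k (k+1)) + 1 := h
    _ = invc n (Equiv.swap k (k+1) * w)⁻¹ + 1 := by rw [he]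
    _ = invc n (Equiv.swap k (k+1) * w) + 1 := by
        rw [invc_inv (suppN_mul (suppN_swap h1 h2) hw)]

/-- sub-additivity along a positive word. -/
lemma invc_mul_word_le (hn : 2 ≤ n) {L : List ℕ} (hL : ∀ a ∈ L, 1 ≤ a ∧ a ≤ n - 1) :
    ∀ u : Equiv.Perm ℕ, invc n (u * pib n (word n L)) ≤ invc n u + L.length := by
  induction L with
  | nil =>
      intro u
      simp [word_nil]
  | cons a L ih =>
      intro u
      have ha := hL a (by simp)
      rw [word_cons, map_mul, pi_σ ha.1 ha.2, ← mul_assoc]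
      calc invc n ((u * Equiv.swap a (a+1)) * pib n (word n L))
          ≤ invc n (u * Equiv.swap a (a+1)) + L.length :=
            ih (fun b hb => hL b (by simp [hb])) _
        _ ≤ (invc n u + 1) + L.length := by
            have := invc_mul_swap_le (n := n) (w := u) ha.1 ha.2 hn
            omega
        _ = invc n u + (a :: L).length := by simp; omega

lemma invc_word_le (hn : 2 ≤ n) {L : List ℕ} (hL : ∀ a ∈ L, 1 ≤ a ∧ a ≤ n - 1) :
    invc n (pib n (word n L)) ≤ L.length := by
  have := invc_mul_word_le hn hL 1
  rw [one_mul, invc_one] at this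
  omega

end S7
namespace S7

variable {n : ℕ}

lemma invc_Delta (hn : 3 ≤ n) : invc n (pib n (DeltaB n)) = (DDw (n-1)).length := by
  have hlen := DDw_len (n-1)
  have hval : ∀ a, 1 ≤ a → a ≤ n → pib n (DeltaB n) a = n + 1 - a := by
    intro a h1 h2
    rw [pi_Delta_val hn a, if_pos ⟨h1, h2⟩]
  have h1 : InvSet n (pib n (DeltaB n)) =
      (Finset.Icc 1 n ×ˢ Finset.Icc 1 n).filter (fun p => p.1 < p.2) := by
    ext ⟨a, b⟩
    rw [mem_InvSet, Finset.mem_filter, Finset.mem_product, Finset.mem_Icc, Finset.mem_Icc]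
    constructor
    · rintro ⟨ha1, ha2, hb1, hb2, hab, _⟩
      exact ⟨⟨⟨ha1, ha2⟩, hb1, hb2⟩, hab⟩
    · rintro ⟨⟨⟨ha1, ha2⟩, hb1, hb2⟩, hab⟩
      refine ⟨ha1, ha2, hb1, hb2, hab, ?_⟩
      rw [hval a ha1 ha2, hval b hb1 hb2]
      omega
  have himg : ((Finset.Icc 1 n ×ˢ Finset.Icc 1 n).filter (fun p => p.1 < p.2)).image Prod.swap =
      (Finset.Icc 1 n ×ˢ Finset.Icc 1 n).filter (fun p => p.2 < p.1) := by
    ext ⟨a, b⟩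
    rw [Finset.mem_image, Finset.mem_filter, Finset.mem_product]
    constructor
    · rintro ⟨⟨c, d⟩, hm, he⟩
      rw [Finset.mem_filter, Finset.mem_product] at hm
      have : (c, d).swap = (d, c) := rfl
      rw [this, Prod.mk.injEq] at he
      obtain ⟨rfl, rfl⟩ := he
      exact ⟨⟨hm.1.2, hm.1.1⟩, hm.2⟩
    · rintro ⟨⟨ha, hb⟩, hab⟩
      refine ⟨(b, a), ?_, rfl⟩
      rw [Finset.mem_filter, Finset.mem_product]
      exact ⟨⟨hb, ha⟩, hab⟩
  have hcard2 : ((Finset.Icc 1 n ×ˢ Finset.Icc 1 n).filter (fun p => p.2 < p.1)).card =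
      ((Finset.Icc 1 n ×ˢ Finset.Icc 1 n).filter (fun p => p.1 < p.2)).card := by
    rw [← himg, Finset.card_image_of_injective _ Prod.swap_injective]
  have hunion : ((Finset.Icc 1 n ×ˢ Finset.Icc 1 n).filter (fun p => p.1 < p.2)) ∪
      ((Finset.Icc 1 n ×ˢ Finset.Icc 1 n).filter (fun p => p.2 < p.1)) =
      (Finset.Icc 1 n).offDiag := by
    ext ⟨a, b⟩
    rw [Finset.mem_union, Finset.mem_filter, Finset.mem_filter, Finset.mem_product,
      Finset.mem_offDiag]
    simp only [Finset.mem_Icc]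
    constructor
    · rintro (⟨⟨ha, hb⟩, h⟩ | ⟨⟨ha, hb⟩, h⟩) <;> exact ⟨ha, hb, by omega⟩
    · rintro ⟨ha, hb, hne⟩
      have : a < b ∨ b < a := by omega
      rcases this with h | h
      · left; exact ⟨⟨ha, hb⟩, h⟩
      · right; exact ⟨⟨ha, hb⟩, h⟩
  have hdisj : Disjoint ((Finset.Icc 1 n ×ˢ Finset.Icc 1 n).filter (fun p => p.1 < p.2))
      ((Finset.Icc 1 n ×ˢ Finset.Icc 1 n).filter (fun p => p.2 < p.1)) := by
    rw [Finset.disjoint_left]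
    intro p hp hq
    rw [Finset.mem_filter] at hp hq
    omega
  have hcardu := Finset.card_union_of_disjoint hdisj
  rw [hunion] at hcardu
  have hoff : (Finset.Icc 1 n).offDiag.card = n * n - n := by
    rw [Finset.offDiag_card, Nat.card_Icc]
    norm_num
  have hIcc : invc n (pib n (DeltaB n)) =
      ((Finset.Icc 1 n ×ˢ Finset.Icc 1 n).filter (fun p => p.1 < p.2)).card := by
    unfold invc
    rw [h1]
  have hnn : (n-1) * ((n-1)+1) = n * n - n := by
    have h3 : n - 1 + 1 = n := by omega
    rw [h3, Nat.sub_mul, one_mul]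
  rw [hnn] at hlen
  omega

/-! ### The descent lemmas -/

lemma word_length_eq {L1 L2 : List ℕ} (h1 : ∀ a ∈ L1, 1 ≤ a ∧ a ≤ n - 1)
    (h2 : ∀ a ∈ L2, 1 ≤ a ∧ a ≤ n - 1) (h : word n L1 = word n L2) :
    L1.length = L2.length := by
  have hc := congrArg (phi n) h
  rw [phi_word h1, phi_word h2] at hc
  have := Multiplicative.ofAdd.injective hc
  exact_mod_cast this

lemma descent_S {s : B n} (hn : 3 ≤ n) (hsimp : bLe n s (DeltaB n))
    {k : ℕ} (h1 : 1 ≤ k) (h2 : k ≤ n - 1) (hdiv : bLe n (σb n k) s) :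
    (pib n s)⁻¹ (k+1) < (pib n s)⁻¹ k := by
  obtain ⟨Lp, hLp, hps⟩ := mem_Bpos_iff.1 hdiv
  obtain ⟨Lq, hLq, hqs⟩ := mem_Bpos_iff.1 hsimp
  have hsw : s = word n (k :: Lp) := by
    rw [word_cons, ← hps]
    group
  have hΔw : word n (DDw (n-1)) = word n ((k :: Lp) ++ Lq) := by
    show DeltaB n = _
    rw [word_append, ← hsw, ← hqs]
    group
  have hklp : ∀ a ∈ k :: Lp, 1 ≤ a ∧ a ≤ n - 1 := by
    intro a ha
    rcases List.mem_cons.1 ha with rfl | h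
    · exact ⟨h1, h2⟩
    · exact hLp a h
  have hN : (DDw (n-1)).length = ((k :: Lp) ++ Lq).length :=
    word_length_eq (fun a ha => by have := mem_DDw ha; omega)
      (fun a ha => by
        rcases List.mem_append.1 ha with h | h
        · exact hklp a h
        · exact hLq a h) hΔw
  rw [List.length_append, List.length_cons] at hN
  have hsupp : SuppN n (pib n s) := by
    rw [hsw]
    exact suppN_word hklp
  by_contra hcon
  have hne : (pib n s)⁻¹ k ≠ (pib n s)⁻¹ (k+1) := fun hc => by
    have := (pib n s)⁻¹.injective hc
    omega
  have hlt : (pib n s)⁻¹ k < (pib n s)⁻¹ (k+1) := by omega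
  have hstep := invc_swap_mul_lt h1 h2 (by omega) hsupp hlt
  have hsk : Equiv.swap k (k+1) * pib n s = pib n (word n Lp) := by
    rw [hsw, word_cons, map_mul, pi_σ h1 h2, ← mul_assoc, Equiv.swap_mul_self, one_mul]
  rw [hsk] at hstep
  have hP : invc n (pib n (word n Lp)) ≤ Lp.length := invc_word_le (by omega) hLp
  have hΔperm : pib n (DeltaB n) = pib n s * pib n (word n Lq) := by
    rw [← map_mul]
    congr 1
    rw [← hqs]
    group
  have hub : invc n (pib n (DeltaB n)) ≤ invc n (pib n s) + Lq.length := by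
    rw [hΔperm]
    exact invc_mul_word_le (by omega) hLq _
  have hval := invc_Delta hn
  have hNbig : 3 ≤ (DDw (n-1)).length := by
    have := DDw_len (n-1)
    nlinarith
  omega

lemma descent_F {s : B n} (hn : 3 ≤ n) (hsimp : bLe n s (DeltaB n))
    {k : ℕ} (h1 : 1 ≤ k) (h2 : k ≤ n - 1) (hdiv : bGe n s (σb n k)) :
    (pib n s) (k+1) < (pib n s) k := by
  obtain ⟨Lb, hLb, hbs⟩ := mem_Bpos_iff.1 hdiv
  obtain ⟨Lq, hLq, hqs⟩ := mem_Bpos_iff.1 hsimp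
  have hsw : s = word n (Lb ++ [k]) := by
    rw [word_concat, ← hbs]
    group
  have hlbk : ∀ a ∈ Lb ++ [k], 1 ≤ a ∧ a ≤ n - 1 := by
    intro a ha
    rcases List.mem_append.1 ha with h | h
    · exact hLb a h
    · rw [List.mem_singleton] at h
      subst h
      exact ⟨h1, h2⟩
  have hΔw : word n (DDw (n-1)) = word n ((Lb ++ [k]) ++ Lq) := by
    show DeltaB n = _
    rw [word_append, ← hsw, ← hqs]
    group
  have hN : (DDw (n-1)).length = ((Lb ++ [k]) ++ Lq).length :=
    word_length_eq (fun a ha => by have := mem_DDw ha; omega)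
      (fun a ha => by
        rcases List.mem_append.1 ha with h | h
        · exact hlbk a h
        · exact hLq a h) hΔw
  rw [List.length_append, List.length_append, List.length_singleton] at hN
  have hsupp : SuppN n (pib n s) := by
    rw [hsw]
    exact suppN_word hlbk
  by_contra hcon
  have hne : pib n s k ≠ pib n s (k+1) := fun hc => by
    have := (pib n s).injective hc
    omega
  have hlt : pib n s k < pib n s (k+1) := by omega
  have hstep := invc_mul_swap_lt (n := n) h1 h2 (by omega) hlt
  have hsk : pib n s * Equiv.swap k (k+1) = pib n (word n Lb) := by
    rw [hsw, word_concat, map_mul, pi_σ h1 h2, mul_assoc, Equiv.swap_mul_self, mul_one]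
  rw [hsk] at hstep
  have hP : invc n (pib n (word n Lb)) ≤ Lb.length := invc_word_le (by omega) hLb
  have hΔperm : pib n (DeltaB n) = pib n s * pib n (word n Lq) := by
    rw [← map_mul]
    congr 1
    rw [← hqs]
    group
  have hub : invc n (pib n (DeltaB n)) ≤ invc n (pib n s) + Lq.length := by
    rw [hΔperm]
    exact invc_mul_word_le (by omega) hLq _
  have hval := invc_Delta hn
  have hNbig : 3 ≤ (DDw (n-1)).length := by
    have := DDw_len (n-1)
    nlinarith
  omega

end S7
namespace S7

variable {n : ℕ}

/-! ### Connectivity relation -/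

def relE (E : Finset ℕ) (x y : ℕ) : Prop := ∀ t, min x y ≤ t → t < max x y → t ∈ E

lemma relE_refl (E : Finset ℕ) (x : ℕ) : relE E x x := by
  intro t h1 h2
  omega

lemma relE_symm {E : Finset ℕ} {x y : ℕ} (h : relE E x y) : relE E y x := by
  intro t h1 h2
  exact h t (by omega) (by omega)

lemma relE_trans {E : Finset ℕ} {x y z : ℕ} (h1 : relE E x y) (h2 : relE E y z) :
    relE E x z := by
  intro t ht1 ht2
  by_cases hc : min x y ≤ t ∧ t < max x y
  · exact h1 t hc.1 hc.2
  · exact h2 t (by omega) (by omega)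

lemma relE_mono {E E' : Finset ℕ} (hE : E ⊆ E') {x y : ℕ} (h : relE E x y) : relE E' x y :=
  fun t h1 h2 => hE (h t h1 h2)

lemma relE_swap {E : Finset ℕ} {k : ℕ} (hk : k ∈ E) (x : ℕ) :
    relE E x (Equiv.swap k (k+1) x) := by
  rcases swap_cases k x with ⟨hx, hv⟩ | ⟨hx, hv⟩ | ⟨hx1, hx2, hv⟩
  · rw [hv]
    intro t h1 h2
    have : t = k := by omega
    subst this
    exact hk
  · rw [hv]
    intro t h1 h2
    have : t = k := by omega
    subst this
    exact hk
  · rw [hv]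
    exact relE_refl E x

lemma relE_word {L : List ℕ} (hL : ∀ a ∈ L, 1 ≤ a ∧ a ≤ n - 1) :
    ∀ x, relE L.toFinset x (pib n (word n L) x) := by
  induction L with
  | nil =>
      intro x
      simp only [word_nil, map_one, Equiv.Perm.one_apply]
      exact relE_refl _ x
  | cons a L ih =>
      intro x
      rw [word_cons, map_mul, pi_σ (hL a (by simp)).1 (hL a (by simp)).2,
        Equiv.Perm.mul_apply]
      have hsub : L.toFinset ⊆ (a :: L).toFinset := by
        intro t ht
        rw [List.mem_toFinset] at ht ⊢
        exact List.mem_cons_of_mem a ht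
      have h1 : relE (a :: L).toFinset x (pib n (word n L) x) :=
        relE_mono hsub (ih (fun b hb => hL b (by simp [hb])) x)
      have h2 : relE (a :: L).toFinset (pib n (word n L) x)
          (Equiv.swap a (a+1) (pib n (word n L) x)) :=
        relE_swap (by rw [List.mem_toFinset]; exact List.mem_cons_self) _
      exact relE_trans h1 h2

lemma relE_zpow {E : Finset ℕ} {w : Equiv.Perm ℕ} (hrel : ∀ x, relE E x (w x)) :
    ∀ (j : ℤ) (x : ℕ), relE E x ((w ^ j) x) := by
  intro j
  induction j using Int.induction_on with
  | zero =>
      intro x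
      simp only [zpow_zero, Equiv.Perm.one_apply]
      exact relE_refl E x
  | succ j ih =>
      intro x
      have he : w ^ ((j : ℤ) + 1) = w ^ (j : ℤ) * w := zpow_add_one w j
      rw [he, Equiv.Perm.mul_apply]
      exact relE_trans (hrel x) (ih (w x))
  | pred j ih =>
      intro x
      have he : w ^ (-(j : ℤ) - 1) = w ^ (-(j : ℤ)) * w⁻¹ := zpow_sub_one w (-j)
      rw [he, Equiv.Perm.mul_apply]
      have h1 : relE E x (w⁻¹ x) := by
        have := hrel (w⁻¹ x)
        rw [Equiv.Perm.apply_inv_self] at this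
        exact relE_symm this
      exact relE_trans h1 (ih (w⁻¹ x))

/-! ### No-descent implies identity; words of minimal length -/

lemma no_descent_id {w : Equiv.Perm ℕ} (hw : SuppN n w)
    (hnd : ∀ k, 1 ≤ k → k ≤ n - 1 → w k < w (k+1)) : w = 1 := by
  have hge : ∀ a, 1 ≤ a → a ≤ n → a ≤ w a := by
    intro a
    induction a with
    | zero => omega
    | succ a ih =>
        intro _ ha2
        rcases Nat.eq_zero_or_pos a with h0 | h0
        · subst h0
          have h := suppN_mem hw (x := 1) ⟨le_refl 1, by omega⟩
          simpa using h.1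
        · have h1 := ih h0 (by omega)
          have h2 := hnd a h0 (by omega)
          omega
  have hdown : ∀ d a, 1 ≤ a → a ≤ n → n ≤ a + d → w a = a := by
    intro d
    induction d with
    | zero =>
        intro a h1 h2 h3
        have h4 := hge a h1 h2
        have h5 := suppN_mem hw (x := a) ⟨h1, h2⟩
        omega
    | succ d ih =>
        intro a h1 h2 h3
        have h4 := hge a h1 h2
        by_contra hcon
        have hgt : a < w a := by omega
        set b := w a with hb
        have hbn : 1 ≤ b ∧ b ≤ n := suppN_mem hw ⟨h1, h2⟩
        have hwb : w b = b := ih b (by omega) hbn.2 (by omega)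
        have : b = a := w.injective (by rw [hwb, ← hb])
        omega
  ext x
  rcases le_or_gt x n with hx | hx
  · rcases Nat.eq_zero_or_pos x with h0 | h0
    · subst h0
      have := hw 0 (Or.inl rfl)
      simp [this]
    · have := hdown n x h0 hx (by omega)
      simp [this]
  · have := hw x (Or.inr hx)
    simp [this]

lemma exists_word_of_invc (hn : 2 ≤ n) :
    ∀ c (w : Equiv.Perm ℕ), SuppN n w → invc n w = c →
    ∃ L : List ℕ, (∀ a ∈ L, 1 ≤ a ∧ a ≤ n - 1) ∧ w = pib n (word n L) ∧ L.length = c := by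
  intro c
  induction c using Nat.strong_induction_on with
  | _ c ih =>
      intro w hw hc
      by_cases hd : ∃ k, 1 ≤ k ∧ k ≤ n - 1 ∧ w (k+1) < w k
      · obtain ⟨k, hk1, hk2, hk⟩ := hd
        have hstep := invc_mul_swap_gt hk1 hk2 hn hk
        have hcpos : 1 ≤ c := by omega
        have hvsupp : SuppN n (w * Equiv.swap k (k+1)) :=
          suppN_mul hw (suppN_swap hk1 hk2)
        obtain ⟨L, hL, hLe, hLlen⟩ := ih (c-1) (by omega) (w * Equiv.swap k (k+1)) hvsupp
          (by omega)
        refine ⟨L ++ [k], ?_, ?_, ?_⟩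
        · intro a ha
          rcases List.mem_append.1 ha with h | h
          · exact hL a h
          · rw [List.mem_singleton] at h
            subst h
            exact ⟨hk1, hk2⟩
        · rw [word_concat, map_mul, pi_σ hk1 hk2, ← hLe, mul_assoc,
            Equiv.swap_mul_self, mul_one]
        · rw [List.length_append, List.length_singleton, hLlen]
          omega
      · push_neg at hd
        have hid : w = 1 := by
          apply no_descent_id hw
          intro k h1 h2
          have h3 := hd k h1 h2
          have hne : w (k+1) ≠ w k := fun hc => by
            have := w.injective hc
            omega
          omega
        refine ⟨[], by simp, by rw [hid, word_nil, map_one], ?_⟩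
        rw [hid, invc_one] at hc
        simp [← hc]

/-! ### Transitivity of conjugates of δ -/

lemma cycle_trans {w : Equiv.Perm ℕ} {u : Equiv.Perm ℕ} (hn : 3 ≤ n) (hw : SuppN n w)
    (hconj : w = u * pib n (deltaB n) * u⁻¹) :
    ∀ y, 1 ≤ y → y ≤ n → ∃ j : ℤ, (w ^ j) (u 1) = y := by
  set c := pib n (deltaB n) with hcdef
  have hcval : ∀ x, 1 ≤ x → x ≤ n - 1 → c x = x + 1 := by
    intro x h1 h2
    rw [hcdef, pi_delta_val hn x, if_pos ⟨h1, h2⟩]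
  have horb : ∀ m : ℕ, m ≤ n - 1 → (c ^ m) 1 = 1 + m := by
    intro m
    induction m with
    | zero => intro _; simp
    | succ m ih =>
        intro hm
        rw [pow_succ', Equiv.Perm.mul_apply, ih (by omega), hcval (1+m) (by omega) (by omega)]
        omega
  have hpow : ∀ m : ℕ, w ^ m = u * c ^ m * u⁻¹ := by
    intro m
    rw [hconj]
    exact conj_pow
  have hcmove : ∀ x, 1 ≤ x → x ≤ n → c x ≠ x := by
    intro x h1 h2 hc
    rcases le_or_gt x (n-1) with h | h
    · rw [hcval x h1 h] at hc
      omega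
    · have hxn : x = n := by omega
      rw [hcdef, pi_delta_val hn x, if_neg (by omega), if_pos hxn] at hc
      omega
  have humem : ∀ x, 1 ≤ x → x ≤ n → 1 ≤ u x ∧ u x ≤ n := by
    intro x h1 h2
    by_contra hcon
    have h0 : u x = 0 ∨ n < u x := by omega
    have hfix : w (u x) = u x := hw (u x) h0
    rw [hconj] at hfix
    have : u (c x) = u x := by
      have e : (u * c * u⁻¹) (u x) = u (c x) := by
        simp [Equiv.Perm.mul_apply]
      rw [e] at hfix
      exact hfix
    exact hcmove x h1 h2 (u.injective this)
  have himg : (Finset.Icc 1 n).image (fun x => u x) = Finset.Icc 1 n := by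
    apply Finset.eq_of_subset_of_card_le
    · intro y hy
      rw [Finset.mem_image] at hy
      obtain ⟨x, hx, rfl⟩ := hy
      rw [Finset.mem_Icc] at hx
      rw [Finset.mem_Icc]
      exact humem x hx.1 hx.2
    · rw [Finset.card_image_of_injective _ u.injective]
  intro y hy1 hy2
  have hyin : y ∈ (Finset.Icc 1 n).image (fun x => u x) := by
    rw [himg, Finset.mem_Icc]
    exact ⟨hy1, hy2⟩
  rw [Finset.mem_image] at hyin
  obtain ⟨x, hx, hux⟩ := hyin
  rw [Finset.mem_Icc] at hx
  refine ⟨((x - 1 : ℕ) : ℤ), ?_⟩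
  rw [zpow_natCast, hpow (x-1)]
  have : (c ^ (x-1)) 1 = x := by
    rw [horb (x-1) (by omega)]
    omega
  calc (u * c ^ (x-1) * u⁻¹) (u 1) = u ((c ^ (x-1)) 1) := by simp [Equiv.Perm.mul_apply]
    _ = y := by rw [this, hux]

/-! ### No double descent for conjugates of δ -/

lemma no_double_descent {η : B n} (hn : 3 ≤ n) (hpos : η ∈ Bpos n)
    (hconj : IsConj (deltaB n) η) {k : ℕ} (h1 : 1 ≤ k) (h2 : k ≤ n - 1)
    (hLD : (pib n η)⁻¹ (k+1) < (pib n η)⁻¹ k)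
    (hRD : (pib n η) (k+1) < (pib n η) k) : False := by
  obtain ⟨Lη, hLη, hηw⟩ := mem_Bpos_iff.1 hpos
  -- length of η is n-1
  have hphiδ : phi n (deltaB n) = Multiplicative.ofAdd ((n-1 : ℕ) : ℤ) := by
    show phi n (word n (List.range' 1 (n-1))) = _
    have hb : ∀ a ∈ List.range' 1 (n-1), 1 ≤ a ∧ a ≤ n - 1 := by
      intro a ha
      rw [List.mem_range'] at ha
      obtain ⟨c, hc, rfl⟩ := ha
      omega
    rw [phi_word hb, List.length_range']
  have hphiη : phi n η = Multiplicative.ofAdd ((n-1 : ℕ) : ℤ) := by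
    obtain ⟨u', hu'⟩ := isConj_iff.1 hconj
    have he : phi n η = phi n u' * phi n (deltaB n) * (phi n u')⁻¹ := by
      rw [← hu', map_mul, map_mul, map_inv]
    rw [he, hphiδ, mul_comm (phi n u'), mul_assoc]
    simp
  have hlen : Lη.length = n - 1 := by
    have := hphiη
    rw [hηw, phi_word hLη] at this
    have h := Multiplicative.ofAdd.injective this
    exact_mod_cast h
  have hwsupp : SuppN n (pib n η) := by
    rw [hηw]
    exact suppN_word hLη
  have hinvle : invc n (pib n η) ≤ n - 1 := by
    rw [hηw]
    have := invc_word_le (by omega : 2 ≤ n) hLη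
    omega
  obtain ⟨u', hu'⟩ := isConj_iff.1 hconj
  have hwconj : pib n η = pib n u' * pib n (deltaB n) * (pib n u')⁻¹ := by
    rw [← map_inv, ← map_mul, ← map_mul, hu']
  by_cases hA : pib n η k = k + 1 ∧ pib n η (k+1) = k
  · -- the 2-cycle case: contradicts transitivity
    have htr := cycle_trans hn hwsupp hwconj
    set y : ℕ := if 2 ≤ k then 1 else 3 with hy
    have hyp : 1 ≤ y ∧ y ≤ n ∧ y ≠ k ∧ y ≠ k + 1 := by
      rw [hy]
      split_ifs <;> omega
    obtain ⟨j1, hj1⟩ := htr k h1 (by omega)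
    obtain ⟨j2, hj2⟩ := htr y hyp.1 hyp.2.1
    have hstab : ∀ j : ℤ, (pib n η ^ j) k = k ∨ (pib n η ^ j) k = k + 1 := by
      intro j
      induction j using Int.induction_on with
      | zero => left; simp
      | succ j ih =>
          rw [show ((j:ℤ) + 1) = 1 + (j:ℤ) from by ring, zpow_add, zpow_one,
            Equiv.Perm.mul_apply]
          rcases ih with h | h
          · rw [h]
            right
            exact hA.1
          · rw [h]
            left
            exact hA.2
      | pred j ih =>
          rw [show (-(j:ℤ) - 1) = -1 + -(j:ℤ) from by ring, zpow_add, zpow_neg_one,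
            Equiv.Perm.mul_apply]
          have hi1 : (pib n η)⁻¹ k = k + 1 := by
            conv_lhs => rw [← hA.2]
            rw [Equiv.Perm.inv_apply_self]
          have hi2 : (pib n η)⁻¹ (k+1) = k := by
            conv_lhs => rw [← hA.1]
            rw [Equiv.Perm.inv_apply_self]
          rcases ih with h | h
          · rw [h, hi1]
            right
            rfl
          · rw [h, hi2]
            left
            rfl
    have hyeq : y = (pib n η ^ (j2 - j1)) k := by
      rw [← hj1, ← Equiv.Perm.mul_apply, ← zpow_add]
      rw [show j2 - j1 + j1 = j2 from by ring]
      exact hj2.symm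
    rcases hstab (j2 - j1) with h | h <;> rw [← hyeq] at h <;> omega
  · -- case B: both descents drop the inversion number by 2
    have hBne : ¬((pib n η)⁻¹ k = k + 1 ∧ (pib n η)⁻¹ (k+1) = k) := by
      rintro ⟨e1, e2⟩
      apply hA
      constructor
      · conv_lhs => rw [← e2]
        rw [Equiv.Perm.apply_inv_self]
      · conv_lhs => rw [← e1]
        rw [Equiv.Perm.apply_inv_self]
    have hv := invc_mul_swap_gt h1 h2 (show 2 ≤ n from by omega) hRD
    have hvsupp : SuppN n (pib n η * Equiv.swap k (k+1)) :=
      suppN_mul hwsupp (suppN_swap h1 h2)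
    have hvinv : (pib n η * Equiv.swap k (k+1))⁻¹ (k+1) <
        (pib n η * Equiv.swap k (k+1))⁻¹ k := by
      have e : ∀ x, (pib n η * Equiv.swap k (k+1))⁻¹ x =
          Equiv.swap k (k+1) ((pib n η)⁻¹ x) := by
        intro x
        rw [mul_inv_rev, Equiv.swap_inv, Equiv.Perm.mul_apply]
      rw [e, e]
      have hp := swap_cases k ((pib n η)⁻¹ k)
      have hq := swap_cases k ((pib n η)⁻¹ (k+1))
      omega
    have hw' := invc_swap_mul_gt h1 h2 (show 2 ≤ n from by omega) hvsupp hvinv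
    have hw'supp : SuppN n (Equiv.swap k (k+1) * (pib n η * Equiv.swap k (k+1))) :=
      suppN_mul (suppN_swap h1 h2) hvsupp
    have hw'conj : Equiv.swap k (k+1) * (pib n η * Equiv.swap k (k+1)) =
        (Equiv.swap k (k+1) * pib n u') * pib n (deltaB n) *
          (Equiv.swap k (k+1) * pib n u')⁻¹ := by
      rw [mul_inv_rev, Equiv.swap_inv, hwconj]
      group
    obtain ⟨L', hL', hL'eq, hL'len⟩ := exists_word_of_invc (show 2 ≤ n from by omega)
      (invc n (Equiv.swap k (k+1) * (pib n η * Equiv.swap k (k+1))))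
      (Equiv.swap k (k+1) * (pib n η * Equiv.swap k (k+1))) hw'supp rfl
    have hrel : ∀ x, relE L'.toFinset x
        ((Equiv.swap k (k+1) * (pib n η * Equiv.swap k (k+1))) x) := by
      intro x
      rw [hL'eq]
      exact relE_word hL' x
    have htr' := cycle_trans hn hw'supp hw'conj
    obtain ⟨j1, hj1⟩ := htr' 1 (le_refl 1) (by omega)
    obtain ⟨j2, hj2⟩ := htr' n (by omega) (le_refl n)
    have hrelz := relE_zpow hrel
    have r1 : relE L'.toFinset ((Equiv.swap k (k+1) * pib n u') 1) 1 := by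
      have h := hrelz j1 ((Equiv.swap k (k+1) * pib n u') 1)
      rw [hj1] at h
      exact h
    have r2 : relE L'.toFinset ((Equiv.swap k (k+1) * pib n u') 1) n := by
      have h := hrelz j2 ((Equiv.swap k (k+1) * pib n u') 1)
      rw [hj2] at h
      exact h
    have r12 : relE L'.toFinset 1 n := relE_trans (relE_symm r1) r2
    have hsub : Finset.Icc 1 (n-1) ⊆ L'.toFinset := by
      intro t ht
      rw [Finset.mem_Icc] at ht
      exact r12 t (by omega) (by omega)
    have hcard1 : n - 1 ≤ L'.toFinset.card := by
      have h := Finset.card_le_card hsub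
      rw [Nat.card_Icc] at h
      omega
    have hcard2 := List.toFinset_card_le L'
    omega

end S7
namespace S7

variable {n : ℕ}

/-! ### Global Delta twist lemmas -/

lemma GDelta {k : ℕ} (hn : 3 ≤ n) (h1 : 1 ≤ k) (h2 : k ≤ n - 1) :
    σb n k * DeltaB n = DeltaB n * σb n (n - k) := by
  rw [DeltaB_eq_DD]
  have h := Gm (r := n-1) (le_refl (n-1)) h1 h2
  rwa [show n - 1 + 1 - k = n - k from by omega] at h

lemma GDelta_conj {k : ℕ} (hn : 3 ≤ n) (h1 : 1 ≤ k) (h2 : k ≤ n - 1) :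
    (DeltaB n)⁻¹ * σb n k * DeltaB n = σb n (n - k) := by
  rw [mul_assoc, GDelta hn h1 h2, ← mul_assoc, inv_mul_cancel, one_mul]

lemma tau_pos {x : B n} (hn : 3 ≤ n) (hx : x ∈ Bpos n) :
    (DeltaB n)⁻¹ * x * DeltaB n ∈ Bpos n := by
  obtain ⟨L, hL, rfl⟩ := mem_Bpos_iff.1 hx
  have h := tauc (r := n-1) (le_refl (n-1)) hL
  rw [← DeltaB_eq_DD] at h
  have he : (DeltaB n)⁻¹ * word n L * DeltaB n = word n (L.map (fun a => n - 1 + 1 - a)) := by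
    rw [mul_assoc, h, ← mul_assoc, inv_mul_cancel, one_mul]
  rw [he]
  apply word_mem_Bpos
  intro a ha
  rcases List.mem_map.1 ha with ⟨b, hb, rfl⟩
  have := hL b hb
  omega

lemma tau_pos' {x : B n} (hn : 3 ≤ n) (hx : x ∈ Bpos n) :
    DeltaB n * x * (DeltaB n)⁻¹ ∈ Bpos n := by
  obtain ⟨L, hL, rfl⟩ := mem_Bpos_iff.1 hx
  have hmap : ∀ a ∈ L.map (fun a => n - 1 + 1 - a), 1 ≤ a ∧ a ≤ n - 1 := by
    intro a ha
    rcases List.mem_map.1 ha with ⟨b, hb, rfl⟩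
    have := hL b hb
    omega
  have h := tauc (r := n-1) (le_refl (n-1)) hmap
  rw [← DeltaB_eq_DD] at h
  have hmm : (L.map (fun a => n-1+1-a)).map (fun a => n-1+1-a) = L := map_flip_flip hL
  rw [hmm] at h
  have he : DeltaB n * word n L * (DeltaB n)⁻¹ = word n (L.map (fun a => n - 1 + 1 - a)) := by
    rw [← h]
    group
  rw [he]
  exact word_mem_Bpos hmap

/-! ### alpha basics at the top level -/

lemma alpha_pos {i j : ℕ} (h1 : 1 ≤ i) (h2 : i ≤ n-1) (h3 : 1 ≤ j) (h4 : j ≤ n-1) :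
    alphaB n i j ∈ Bpos n := by
  rcases le_or_gt i j with h | h
  · rw [alpha_word_asc h]
    apply word_mem_Bpos
    intro a ha
    have := mem_asc ha
    omega
  · rw [alpha_word_desc (le_of_lt h)]
    apply word_mem_Bpos
    intro a ha
    have := mem_descList.1 ha
    omega

lemma alpha_le_Delta {i j : ℕ} (hn : 3 ≤ n) (h1 : 1 ≤ i) (h2 : i ≤ n-1) (h3 : 1 ≤ j)
    (h4 : j ≤ n-1) : bLe n (alphaB n i j) (DeltaB n) := by
  obtain ⟨L, hL, hdd⟩ := alpha_div_DD (n := n) h1 h3 h2 h4 (le_refl (n-1))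
  show (alphaB n i j)⁻¹ * DeltaB n ∈ Bpos n
  rw [DeltaB_eq_DD, hdd, ← mul_assoc, inv_mul_cancel, one_mul]
  exact word_mem_Bpos hL

lemma K_le_Delta {k i j : ℕ} (hn : 3 ≤ n) (hk1 : 1 ≤ k) (hk2 : k ≤ n-1) (h1 : 1 ≤ i)
    (h2 : i ≤ n-1) (h3 : 1 ≤ j) (h4 : j ≤ n-1) (hki : k ≠ i) :
    (alphaB n i j)⁻¹ * (σb n k)⁻¹ * DeltaB n ∈ Bpos n := by
  obtain ⟨L, hL, hdd⟩ := Kthm (n-1) (le_refl (n-1)) k i j hk1 hk2 h1 h2 h3 h4 hki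
  rw [DeltaB_eq_DD, hdd]
  have he : (alphaB n i j)⁻¹ * (σb n k)⁻¹ * (σb n k * (alphaB n i j * word n L)) =
      word n L := by group
  rw [he]
  exact word_mem_Bpos hL

/-- `k ∈ F(Δ B⁻¹)` for `k ≠ start(B)`. -/
lemma F_core {k x y : ℕ} (hn : 3 ≤ n) (hk1 : 1 ≤ k) (hk2 : k ≤ n-1) (h1 : 1 ≤ x)
    (h2 : x ≤ n-1) (h3 : 1 ≤ y) (h4 : y ≤ n-1) (hkx : k ≠ x) :
    DeltaB n * (alphaB n x y)⁻¹ * (σb n k)⁻¹ ∈ Bpos n := by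
  have hK := K_le_Delta hn hk1 hk2 h1 h2 h3 h4 hkx
  have he : DeltaB n * (alphaB n x y)⁻¹ * (σb n k)⁻¹ =
      DeltaB n * ((alphaB n x y)⁻¹ * (σb n k)⁻¹ * DeltaB n) * (DeltaB n)⁻¹ := by group
  rw [he]
  exact tau_pos' hn hK

/-- twisted version : `Δ² B⁻¹ Δ⁻¹ σ_k⁻¹ ∈ P` for `n - k ≠ start(B)`. -/
lemma F_core' {k x y : ℕ} (hn : 3 ≤ n) (hk1 : 1 ≤ k) (hk2 : k ≤ n-1) (h1 : 1 ≤ x)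
    (h2 : x ≤ n-1) (h3 : 1 ≤ y) (h4 : y ≤ n-1) (hkx : n - k ≠ x) :
    DeltaB n * DeltaB n * (alphaB n x y)⁻¹ * (DeltaB n)⁻¹ * (σb n k)⁻¹ ∈ Bpos n := by
  have hF := F_core hn (show 1 ≤ n - k from by omega) (show n - k ≤ n-1 from by omega)
    h1 h2 h3 h4 hkx
  have hG := GDelta (k := k) hn hk1 hk2
  have hnk : n - (n - k) = k := by omega
  have hG2 := GDelta (k := n - k) hn (by omega) (by omega)
  rw [hnk] at hG2
  -- Δ σ_{n-k}⁻¹ Δ⁻¹ = σ_k⁻¹ ... more precisely assemble: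
  have he : DeltaB n * DeltaB n * (alphaB n x y)⁻¹ * (DeltaB n)⁻¹ * (σb n k)⁻¹ =
      DeltaB n * (DeltaB n * (alphaB n x y)⁻¹ * (σb n (n-k))⁻¹) * (DeltaB n)⁻¹ := by
    have h' : (σb n (n-k))⁻¹ * (DeltaB n)⁻¹ = (DeltaB n)⁻¹ * (σb n k)⁻¹ := by
      rw [← mul_inv_rev, ← mul_inv_rev, ← hG]
    calc DeltaB n * DeltaB n * (alphaB n x y)⁻¹ * (DeltaB n)⁻¹ * (σb n k)⁻¹
        = DeltaB n * (DeltaB n * (alphaB n x y)⁻¹) * ((DeltaB n)⁻¹ * (σb n k)⁻¹) := by group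
      _ = DeltaB n * (DeltaB n * (alphaB n x y)⁻¹) * ((σb n (n-k))⁻¹ * (DeltaB n)⁻¹) := by
          rw [h']
      _ = DeltaB n * (DeltaB n * (alphaB n x y)⁻¹ * (σb n (n-k))⁻¹) * (DeltaB n)⁻¹ := by group
  rw [he]
  exact tau_pos' hn hF

/-! ### centrality of Δ² -/

lemma Delta_sq_central (hn : 3 ≤ n) (x : B n) :
    DeltaB n ^ 2 * x = x * DeltaB n ^ 2 := by
  have hgen : ∀ j : ℕ, DeltaB n ^ 2 * σb n j = σb n j * DeltaB n ^ 2 := by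
    intro j
    by_cases hj : 1 ≤ j ∧ j ≤ n - 1
    · have h1 := GDelta hn hj.1 hj.2
      have h2 := GDelta (k := n - j) hn (by omega) (by omega)
      rw [show n - (n - j) = j from by omega] at h2
      calc DeltaB n ^ 2 * σb n j = DeltaB n * (DeltaB n * σb n j) := by rw [pow_two]; group
        _ = DeltaB n * (σb n (n - j) * DeltaB n) := by
            have := h2
            rw [← this]
        _ = (DeltaB n * σb n (n-j)) * DeltaB n := by group
        _ = (σb n j * DeltaB n) * DeltaB n := by rw [← h1]
        _ = σb n j * DeltaB n ^ 2 := by rw [pow_two]; group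
    · have : σb n j = 1 := σb_triv (by omega)
      rw [this, mul_one, one_mul]
  have hx : x ∈ Subgroup.centralizer {DeltaB n ^ 2} := by
    apply PresentedGroup.generated_by
    intro j
    rw [Subgroup.mem_centralizer_iff]
    intro g hg
    rw [Set.mem_singleton_iff] at hg
    subst hg
    exact hgen j
  rw [Subgroup.mem_centralizer_iff] at hx
  exact hx (DeltaB n ^ 2) rfl

lemma u_parity (hn : 3 ≤ n) (A : B n) : ∀ a : ℕ,
    (DeltaB n)^(a+1) * A⁻¹ * ((DeltaB n)^a)⁻¹ =
      if a % 2 = 0 then DeltaB n * A⁻¹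
      else DeltaB n * DeltaB n * A⁻¹ * (DeltaB n)⁻¹ := by
  intro a
  induction a using Nat.strong_induction_on with
  | _ a ih =>
      match a with
      | 0 => simp
      | 1 =>
          rw [if_neg (by norm_num)]
          rw [pow_two, pow_one]
      | (b+2) =>
          have h := ih b (by omega)
          have hmod : (b + 2) % 2 = b % 2 := by omega
          rw [hmod, ← h]
          have e1 : (DeltaB n)^(b+2+1) = DeltaB n ^ 2 * (DeltaB n)^(b+1) := by
            rw [← pow_add]
            congr 1
            omega
          have e2 : ((DeltaB n)^(b+2))⁻¹ = ((DeltaB n)^b)⁻¹ * (DeltaB n ^ 2)⁻¹ := by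
            rw [← mul_inv_rev, ← pow_add]
            congr 2
            omega
          rw [e1, e2]
          have hc := Delta_sq_central hn ((DeltaB n)^(b+1) * A⁻¹ * ((DeltaB n)^b)⁻¹)
          calc DeltaB n ^ 2 * (DeltaB n)^(b+1) * A⁻¹ * (((DeltaB n)^b)⁻¹ * (DeltaB n ^ 2)⁻¹)
              = DeltaB n ^ 2 * ((DeltaB n)^(b+1) * A⁻¹ * ((DeltaB n)^b)⁻¹) *
                  (DeltaB n ^ 2)⁻¹ := by group
            _ = ((DeltaB n)^(b+1) * A⁻¹ * ((DeltaB n)^b)⁻¹) * DeltaB n ^ 2 *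
                  (DeltaB n ^ 2)⁻¹ := by rw [hc]
            _ = (DeltaB n)^(b+1) * A⁻¹ * ((DeltaB n)^b)⁻¹ := by group

end S7
namespace S7

variable {n : ℕ}

/-! ### descents of alpha and the ∂-elements -/

lemma RD_alpha {x y k : ℕ} (hn : 3 ≤ n) (h1 : 1 ≤ x) (h2 : x ≤ n-1) (h3 : 1 ≤ y)
    (h4 : y ≤ n-1) (hk1 : 1 ≤ k) (hk2 : k ≤ n-1) :
    (pib n (alphaB n x y) (k+1) < pib n (alphaB n x y) k) ↔ k = y := by
  rcases le_or_gt x y with h | h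
  · rw [pi_alpha_asc h1 h h4 k, pi_alpha_asc h1 h h4 (k+1)]
    split_ifs <;> omega
  · rw [pi_alpha_desc h3 (le_of_lt h) h2 k, pi_alpha_desc h3 (le_of_lt h) h2 (k+1)]
    split_ifs <;> omega

lemma pi_alpha_inv {x y : ℕ} (hn : 3 ≤ n) (h1 : 1 ≤ x) (h2 : x ≤ n-1) (h3 : 1 ≤ y)
    (h4 : y ≤ n-1) : (pib n (alphaB n x y))⁻¹ = pib n (alphaB n y x) := by
  symm
  apply eq_inv_of_mul_eq_one_left
  ext t
  rw [Equiv.Perm.mul_apply, Equiv.Perm.one_apply]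
  rcases le_or_gt x y with h | h
  · rw [pi_alpha_asc h1 h h4 t, pi_alpha_desc h1 h h4]
    split_ifs <;> omega
  · rw [pi_alpha_desc h3 (le_of_lt h) h2 t, pi_alpha_asc h3 (le_of_lt h) h2]
    split_ifs <;> omega

lemma S_alpha {x y k : ℕ} (hn : 3 ≤ n) (h1 : 1 ≤ x) (h2 : x ≤ n-1) (h3 : 1 ≤ y)
    (h4 : y ≤ n-1) (hk : k ∈ startSet n (alphaB n x y)) : k = x := by
  obtain ⟨hk1, hk2, hkle⟩ := hk
  have hd := descent_S hn (alpha_le_Delta hn h1 h2 h3 h4) hk1 hk2 hkle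
  rw [pi_alpha_inv hn h1 h2 h3 h4] at hd
  exact (RD_alpha hn h3 h4 h1 h2 hk1 hk2).1 hd

lemma w0_sq (hn : 3 ≤ n) : pib n (DeltaB n) * pib n (DeltaB n) = 1 := by
  ext t
  rw [Equiv.Perm.mul_apply, Equiv.Perm.one_apply, pi_Delta_val hn t, pi_Delta_val hn]
  split_ifs <;> omega

lemma w0_inv (hn : 3 ≤ n) : (pib n (DeltaB n))⁻¹ = pib n (DeltaB n) :=
  inv_eq_of_mul_eq_one_right (w0_sq hn)

lemma dAinv_pos {A : B n} (hn : 3 ≤ n) (hAle : bLe n A (DeltaB n)) :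
    DeltaB n * A⁻¹ ∈ Bpos n := by
  have he : DeltaB n * A⁻¹ = DeltaB n * (A⁻¹ * DeltaB n) * (DeltaB n)⁻¹ := by group
  rw [he]
  exact tau_pos' hn hAle

lemma dAinv_le {A : B n} (hApos : A ∈ Bpos n) :
    bLe n (DeltaB n * A⁻¹) (DeltaB n) := by
  show (DeltaB n * A⁻¹)⁻¹ * DeltaB n ∈ Bpos n
  have he : (DeltaB n * A⁻¹)⁻¹ * DeltaB n = A := by group
  rw [he]
  exact hApos

lemma S_delta_alpha_inv {x y k : ℕ} (hn : 3 ≤ n) (h1 : 1 ≤ x) (h2 : x ≤ n-1) (h3 : 1 ≤ y)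
    (h4 : y ≤ n-1) (hk : k ∈ startSet n (DeltaB n * (alphaB n x y)⁻¹)) : n - k ≠ y := by
  obtain ⟨hk1, hk2, hkle⟩ := hk
  have hd := descent_S hn (dAinv_le (alpha_pos h1 h2 h3 h4)) hk1 hk2 hkle
  have hinv : (pib n (DeltaB n * (alphaB n x y)⁻¹))⁻¹ =
      pib n (alphaB n x y) * pib n (DeltaB n) := by
    rw [map_mul, map_inv, mul_inv_rev, inv_inv, w0_inv hn]
  rw [hinv, Equiv.Perm.mul_apply, Equiv.Perm.mul_apply] at hd
  have e1 : pib n (DeltaB n) k = n + 1 - k := by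
    rw [pi_Delta_val hn, if_pos ⟨hk1, by omega⟩]
  have e2 : pib n (DeltaB n) (k+1) = n - k := by
    rw [pi_Delta_val hn, if_pos ⟨by omega, by omega⟩]
    omega
  rw [e1, e2] at hd
  intro hcon
  have hrd := (RD_alpha hn h1 h2 h3 h4 (k := n - k) (by omega) (by omega)).2 hcon
  rw [show n - k + 1 = n + 1 - k from by omega] at hrd
  omega

lemma S_delta2_alpha_inv {x y k : ℕ} (hn : 3 ≤ n) (h1 : 1 ≤ x) (h2 : x ≤ n-1) (h3 : 1 ≤ y)
    (h4 : y ≤ n-1)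
    (hk : k ∈ startSet n (DeltaB n * DeltaB n * (alphaB n x y)⁻¹ * (DeltaB n)⁻¹)) :
    k ≠ y := by
  obtain ⟨hk1, hk2, hkle⟩ := hk
  have hgc : (DeltaB n)⁻¹ * (σb n k)⁻¹ * DeltaB n = (σb n (n-k))⁻¹ := by
    have h := GDelta_conj hn hk1 hk2
    calc (DeltaB n)⁻¹ * (σb n k)⁻¹ * DeltaB n
        = ((DeltaB n)⁻¹ * σb n k * DeltaB n)⁻¹ := by group
      _ = (σb n (n-k))⁻¹ := by rw [h]
  have hmem : (σb n (n-k))⁻¹ * (DeltaB n * (alphaB n x y)⁻¹) ∈ Bpos n := by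
    have he : (σb n (n-k))⁻¹ * (DeltaB n * (alphaB n x y)⁻¹) =
        (DeltaB n)⁻¹ * ((σb n k)⁻¹ *
          (DeltaB n * DeltaB n * (alphaB n x y)⁻¹ * (DeltaB n)⁻¹)) * DeltaB n := by
      rw [← hgc]
      group
    rw [he]
    exact tau_pos hn hkle
  have hS : n - k ∈ startSet n (DeltaB n * (alphaB n x y)⁻¹) :=
    ⟨by omega, by omega, hmem⟩
  have := S_delta_alpha_inv hn h1 h2 h3 h4 hS
  omega

/-! ### alpha ends with its last letter -/

lemma alpha_end {x y : ℕ} (h1 : 1 ≤ x) (h2 : x ≤ n-1) (h3 : 1 ≤ y) (h4 : y ≤ n-1) :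
    alphaB n x y * (σb n y)⁻¹ ∈ Bpos n := by
  rcases le_or_gt x y with h | h
  · rw [alpha_word_asc h]
    have hsplit : List.range' x (y+1-x) = List.range' x (y-x) ++ [y] := by
      have hc := List.range'_1_concat (s := x) (n := y - x)
      rw [show x + (y-x) = y from by omega] at hc
      rw [show y + 1 - x = (y - x) + 1 from by omega]
      exact hc
    rw [hsplit, word_concat, mul_assoc, mul_inv_cancel, mul_one]
    apply word_mem_Bpos
    intro a ha
    rw [List.mem_range'] at ha
    obtain ⟨c, hc, rfl⟩ := ha
    omega
  · rw [alpha_word_desc (le_of_lt h)]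
    have hsplit : descList x y = descList x (y+1) ++ [y] := by
      unfold descList
      rw [show x + 1 - y = (x - y) + 1 from by omega, List.range'_succ, List.reverse_cons,
        show x + 1 - (y + 1) = x - y from by omega]
    rw [hsplit, word_concat, mul_assoc, mul_inv_cancel, mul_one]
    apply word_mem_Bpos
    intro a ha
    have := mem_descList.1 ha
    omega

/-! ### phi of alpha -/

lemma phi_alpha {x y : ℕ} (h1 : 1 ≤ x) (h2 : x ≤ n-1) (h3 : 1 ≤ y) (h4 : y ≤ n-1) :
    ∃ t : ℕ, 1 ≤ t ∧ t ≤ n - 1 ∧ phi n (alphaB n x y) = Multiplicative.ofAdd (t : ℤ) := by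
  rcases le_or_gt x y with h | h
  · refine ⟨y + 1 - x, by omega, by omega, ?_⟩
    rw [alpha_word_asc h, phi_word (fun a ha => by
      rw [List.mem_range'] at ha
      obtain ⟨c, hc, rfl⟩ := ha
      omega)]
    rw [List.length_range']
  · refine ⟨x + 1 - y, by omega, by omega, ?_⟩
    rw [alpha_word_desc (le_of_lt h), phi_word (fun a ha => by
      have := mem_descList.1 ha
      omega)]
    congr 1
    unfold descList
    rw [List.length_reverse, List.length_range']

lemma Nbig (hn : 3 ≤ n) : n - 1 < (DDw (n-1)).length := by
  obtain ⟨m, rfl⟩ := Nat.exists_eq_add_of_le hn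
  have h := DDw_len (3 + m - 1)
  rw [show 3 + m - 1 = m + 2 from by omega] at h ⊢
  have he : (m+2) * ((m+2)+1) = m*m + 5*m + 6 := by ring
  omega

lemma phi_Delta_val (hn : 3 ≤ n) :
    phi n (DeltaB n) = Multiplicative.ofAdd (((DDw (n-1)).length : ℤ)) := by
  rw [DeltaB_eq_DD]
  exact phi_DD (le_refl (n-1))

lemma ne_one_of_phi {x : B n} {t : ℕ} (ht : 1 ≤ t)
    (hx : phi n x = Multiplicative.ofAdd (t : ℤ)) : x ≠ 1 := by
  intro hc
  rw [hc, map_one] at hx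
  rw [show (1 : Multiplicative ℤ) = Multiplicative.ofAdd ((0 : ℕ) : ℤ) from rfl] at hx
  have h := Multiplicative.ofAdd.injective hx
  have : (0 : ℕ) = t := by exact_mod_cast h
  omega

lemma ne_Delta_of_phi {x : B n} {t : ℕ} (hn : 3 ≤ n) (ht : t ≤ n - 1)
    (hx : phi n x = Multiplicative.ofAdd (t : ℤ)) : x ≠ DeltaB n := by
  intro hc
  rw [hc, phi_Delta_val hn] at hx
  have h := Multiplicative.ofAdd.injective hx
  have : (DDw (n-1)).length = t := by exact_mod_cast h
  have := Nbig hn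
  omega

lemma phi_of_conj {η : B n} (hn : 3 ≤ n) (hconj : IsConj (deltaB n) η) :
    phi n η = Multiplicative.ofAdd ((n-1 : ℕ) : ℤ) := by
  have hphiδ : phi n (deltaB n) = Multiplicative.ofAdd ((n-1 : ℕ) : ℤ) := by
    show phi n (word n (List.range' 1 (n-1))) = _
    have hb : ∀ a ∈ List.range' 1 (n-1), 1 ≤ a ∧ a ≤ n - 1 := by
      intro a ha
      rw [List.mem_range'] at ha
      obtain ⟨c, hc, rfl⟩ := ha
      omega
    rw [phi_word hb, List.length_range']
  obtain ⟨u', hu'⟩ := isConj_iff.1 hconj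
  have he : phi n η = phi n u' * phi n (deltaB n) * (phi n u')⁻¹ := by
    rw [← hu', map_mul, map_mul, map_inv]
  rw [he, hphiδ, mul_comm (phi n u'), mul_assoc]
  simp

end S7
open S7

/-- the left normal form of `x_{η,i_1,…,i_{l+1}}` is
`Δ_n^{-l} ∂^{-2l+1}(α_{i_l,i_{l+1}}) ⋯ ∂^{-3}(α_{i_2,i_3}) ∂^{-1}(α_{i_1,i_2}) η α_{i_1,i_2} ⋯ α_{i_l,i_{l+1}}`,
where `∂^{-(2m+1)}(s) = Δ_n^{m+1} s⁻¹ Δ_n^{-m}`. -/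
theorem statement7 (n l : ℕ) (hn : 3 ≤ n) (hl : 1 ≤ l) (i : ℕ → ℕ)
    (hi : ∀ r : ℕ, 1 ≤ r → r ≤ l + 1 → 1 ≤ i r ∧ i r ≤ n - 1)
    (η : B n) (hη : isSimple n η) (hconj : IsConj (deltaB n) η)
    (hF : i 1 ∈ finishSet n η) :
    ∀ ys : List (B n),
      ys = ((List.range l).map fun idx =>
              (DeltaB n) ^ (l - idx) * (alphaB n (i (l - idx)) (i (l - idx + 1)))⁻¹ *
                ((DeltaB n) ^ (l - 1 - idx))⁻¹) ++
           η :: ((List.range l).map fun idx => alphaB n (i (idx + 1)) (i (idx + 2))) →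
      xbraid n η i l = ((DeltaB n) ^ l)⁻¹ * ys.prod ∧ LWSeq n ys := by
  intro ys hys
  subst hys
  obtain ⟨ηpos, ηle⟩ := hη
  obtain ⟨hi1a, hi1b, hFge⟩ := hF
  -- telescoping product for the first block
  have htele : ∀ m, m ≤ l →
      ((List.range m).map (fun idx =>
          (DeltaB n) ^ (l - idx) * (alphaB n (i (l - idx)) (i (l - idx + 1)))⁻¹ *
            ((DeltaB n) ^ (l - 1 - idx))⁻¹)).prod =
        (DeltaB n)^l *
          (((List.range' (l - m + 1) m).map (fun r => alphaB n (i r) (i (r+1)))).prod)⁻¹ *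
          ((DeltaB n)^(l - m))⁻¹ := by
    intro m
    induction m with
    | zero =>
        intro _
        simp
    | succ m ih =>
        intro hm
        rw [List.range_succ, List.map_append, List.prod_append, ih (by omega)]
        have hsplit : List.range' (l - (m+1) + 1) (m+1) =
            (l - m) :: List.range' (l - m + 1) m := by
          rw [show l - (m+1) + 1 = l - m from by omega, List.range'_succ]
        rw [hsplit, List.map_cons, List.prod_cons]
        simp only [List.map_cons, List.prod_cons, List.map_nil, List.prod_nil, mul_one]
        rw [show l - 1 - m = l - (m+1) from by omega, mul_inv_rev]
        group
  have hL2eq : ((List.range' 1 l).map (fun r => alphaB n (i r) (i (r+1)))).prod =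
      ((List.range l).map (fun idx => alphaB n (i (idx+1)) (i (idx+2)))).prod := by
    congr 1
    rw [List.range'_eq_map_range, List.map_map]
    apply List.map_congr_left
    intro idx _
    simp only [Function.comp_apply]
    rw [Nat.add_comm 1 idx]
  have hprod := htele l (le_refl l)
  rw [show l - l + 1 = 1 from by omega, show l - l = 0 from by omega, pow_zero, hL2eq] at hprod
  constructor
  · -- the product identity
    rw [List.prod_append, List.prod_cons, hprod]
    unfold xbraid
    group
  constructor
  · -- each entry is a proper simple element
    intro y hy
    rw [List.mem_append, List.mem_cons] at hy
    rcases hy with hy | hy | hy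
    · rw [List.mem_map] at hy
      obtain ⟨idx, hidx, rfl⟩ := hy
      rw [List.mem_range] at hidx
      have hbr := hi (l - idx) (by omega) (by omega)
      have hbr2 := hi (l - idx + 1) (by omega) (by omega)
      have hApos := alpha_pos (n := n) hbr.1 hbr.2 hbr2.1 hbr2.2
      have hAle := alpha_le_Delta hn hbr.1 hbr.2 hbr2.1 hbr2.2
      obtain ⟨t, ht1, ht2, hφ⟩ := phi_alpha hbr.1 hbr.2 hbr2.1 hbr2.2
      have hrw : (DeltaB n) ^ (l - idx) * (alphaB n (i (l - idx)) (i (l - idx + 1)))⁻¹ *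
          ((DeltaB n) ^ (l - 1 - idx))⁻¹ =
          if (l - 1 - idx) % 2 = 0 then
            DeltaB n * (alphaB n (i (l - idx)) (i (l - idx + 1)))⁻¹
          else DeltaB n * DeltaB n * (alphaB n (i (l - idx)) (i (l - idx + 1)))⁻¹ *
            (DeltaB n)⁻¹ := by
        rw [show l - idx = (l - 1 - idx) + 1 from by omega]
        exact u_parity hn _ (l - 1 - idx)
      rw [hrw]
      split_ifs with hpar
      · refine ⟨⟨dAinv_pos hn hAle, dAinv_le hApos⟩, ?_, ?_⟩
        · intro hcon
          have hA : alphaB n (i (l - idx)) (i (l - idx + 1)) = DeltaB n :=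
            (mul_inv_eq_one.1 hcon).symm
          exact ne_Delta_of_phi hn ht2 hφ hA
        · intro hcon
          have hA : alphaB n (i (l - idx)) (i (l - idx + 1)) = 1 :=
            inv_eq_one.1 (mul_eq_left.1 hcon)
          exact ne_one_of_phi ht1 hφ hA
      · refine ⟨⟨?_, ?_⟩, ?_, ?_⟩
        · have he : DeltaB n * DeltaB n * (alphaB n (i (l - idx)) (i (l - idx + 1)))⁻¹ *
              (DeltaB n)⁻¹ =
              DeltaB n * (DeltaB n * (alphaB n (i (l - idx)) (i (l - idx + 1)))⁻¹) *
                (DeltaB n)⁻¹ := by group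
          rw [he]
          exact tau_pos' hn (dAinv_pos hn hAle)
        · show (DeltaB n * DeltaB n * (alphaB n (i (l - idx)) (i (l - idx + 1)))⁻¹ *
              (DeltaB n)⁻¹)⁻¹ * DeltaB n ∈ Bpos n
          have he : (DeltaB n * DeltaB n * (alphaB n (i (l - idx)) (i (l - idx + 1)))⁻¹ *
              (DeltaB n)⁻¹)⁻¹ * DeltaB n =
              DeltaB n * alphaB n (i (l - idx)) (i (l - idx + 1)) * (DeltaB n)⁻¹ := by group
          rw [he]
          exact tau_pos' hn hApos
        · intro hcon
          have hA : alphaB n (i (l - idx)) (i (l - idx + 1)) = DeltaB n := by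
            have h2 : DeltaB n * (DeltaB n * (alphaB n (i (l - idx)) (i (l - idx + 1)))⁻¹) =
                DeltaB n * 1 := by
              calc DeltaB n * (DeltaB n * (alphaB n (i (l - idx)) (i (l - idx + 1)))⁻¹)
                  = (DeltaB n * DeltaB n * (alphaB n (i (l - idx)) (i (l - idx + 1)))⁻¹ *
                      (DeltaB n)⁻¹) * DeltaB n := by group
                _ = 1 * DeltaB n := by rw [hcon]
                _ = DeltaB n * 1 := by group
            have h3 := mul_left_cancel h2
            exact (mul_inv_eq_one.1 h3).symm
          exact ne_Delta_of_phi hn ht2 hφ hA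
        · intro hcon
          have hA : alphaB n (i (l - idx)) (i (l - idx + 1)) = 1 := by
            have h2 : (DeltaB n * DeltaB n) * (alphaB n (i (l - idx)) (i (l - idx + 1)))⁻¹ =
                (DeltaB n * DeltaB n) * 1 := by
              calc (DeltaB n * DeltaB n) * (alphaB n (i (l - idx)) (i (l - idx + 1)))⁻¹
                  = (DeltaB n * DeltaB n * (alphaB n (i (l - idx)) (i (l - idx + 1)))⁻¹ *
                      (DeltaB n)⁻¹) * DeltaB n := by group
                _ = DeltaB n * DeltaB n := by rw [hcon]
                _ = (DeltaB n * DeltaB n) * 1 := by group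
            have h3 := mul_left_cancel h2
            exact inv_eq_one.1 h3
          exact ne_one_of_phi ht1 hφ hA
    · subst hy
      exact ⟨⟨ηpos, ηle⟩, ne_one_of_phi (t := n-1) (by omega) (phi_of_conj hn hconj),
        ne_Delta_of_phi hn (le_refl (n-1)) (phi_of_conj hn hconj)⟩
    · rw [List.mem_map] at hy
      obtain ⟨idx, hidx, rfl⟩ := hy
      rw [List.mem_range] at hidx
      have hbr := hi (idx+1) (by omega) (by omega)
      have hbr2 := hi (idx+2) (by omega) (by omega)
      obtain ⟨t, ht1, ht2, hφ⟩ := phi_alpha hbr.1 hbr.2 hbr2.1 hbr2.2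
      exact ⟨⟨alpha_pos hbr.1 hbr.2 hbr2.1 hbr2.2,
        alpha_le_Delta hn hbr.1 hbr.2 hbr2.1 hbr2.2⟩,
        ne_one_of_phi ht1 hφ, ne_Delta_of_phi hn ht2 hφ⟩
  · -- the chain condition
    rw [show List.Chain' _ _ = List.IsChain _ _ from rfl, List.isChain_append]
    have hreq : List.range l = List.range ((l-1)+1) := by
      congr 1
      omega
    refine ⟨?_, ?_, ?_⟩
    · -- within the first block
      rw [List.isChain_map, hreq, List.isChain_range_succ]
      intro idx hidx
      intro k hk
      have e1 : l - (idx+1) = l - 1 - idx := by omega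
      have e2 : l - (idx+1) + 1 = l - idx := by omega
      have e3 : l - 1 - (idx+1) = l - 1 - idx - 1 := by omega
      rw [e2, e1, e3] at hk
      have hpge : 1 ≤ l - 1 - idx := by omega
      have hbA1 := hi (l - 1 - idx) (by omega) (by omega)
      have hbA2 := hi (l - idx) (by omega) (by omega)
      have hbB2 := hi (l - idx + 1) (by omega) (by omega)
      have hfA : (DeltaB n)^(l-1-idx) * (alphaB n (i (l-1-idx)) (i (l-idx)))⁻¹ *
          ((DeltaB n)^(l-1-idx-1))⁻¹ =
          if (l-1-idx-1) % 2 = 0 then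
            DeltaB n * (alphaB n (i (l-1-idx)) (i (l-idx)))⁻¹
          else DeltaB n * DeltaB n * (alphaB n (i (l-1-idx)) (i (l-idx)))⁻¹ * (DeltaB n)⁻¹ := by
        rw [show l-1-idx = (l-1-idx-1) + 1 from by omega]
        exact u_parity hn _ _
      have hfB : (DeltaB n)^(l-idx) * (alphaB n (i (l-idx)) (i (l-idx+1)))⁻¹ *
          ((DeltaB n)^(l-1-idx))⁻¹ =
          if (l-1-idx) % 2 = 0 then
            DeltaB n * (alphaB n (i (l-idx)) (i (l-idx+1)))⁻¹
          else DeltaB n * DeltaB n * (alphaB n (i (l-idx)) (i (l-idx+1)))⁻¹ * (DeltaB n)⁻¹ := by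
        rw [show l-idx = (l-1-idx) + 1 from by omega]
        exact u_parity hn _ _
      rw [hfA] at hk
      rw [hfB]
      rcases Nat.mod_two_eq_zero_or_one (l-1-idx) with hp | hp
      · -- even : A-side is the twisted one, B-side is Δ B⁻¹
        rw [if_neg (by omega)] at hk
        rw [if_pos hp]
        have hky := S_delta2_alpha_inv hn hbA1.1 hbA1.2 hbA2.1 hbA2.2 hk
        obtain ⟨hk1, hk2, _⟩ := hk
        exact ⟨hk1, hk2, F_core hn hk1 hk2 hbA2.1 hbA2.2 hbB2.1 hbB2.2 hky⟩
      · -- odd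
        rw [if_pos (by omega)] at hk
        rw [if_neg (by omega)]
        have hky := S_delta_alpha_inv hn hbA1.1 hbA1.2 hbA2.1 hbA2.2 hk
        obtain ⟨hk1, hk2, _⟩ := hk
        exact ⟨hk1, hk2, F_core' hn hk1 hk2 hbA2.1 hbA2.2 hbB2.1 hbB2.2 hky⟩
    · -- within η :: second block
      rw [List.isChain_cons]
      have hb1 := hi 1 (le_refl 1) (by omega)
      have hb2 := hi 2 (by omega) (by omega)
      constructor
      · intro z hz
        have hL2head : ((List.range l).map
            (fun idx => alphaB n (i (idx+1)) (i (idx+2)))).head? =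
            some (alphaB n (i 1) (i 2)) := by
          rw [hreq, List.range_succ_eq_map, List.map_cons, List.head?_cons]
        rw [hL2head] at hz
        have hzz' : alphaB n (i 1) (i 2) = z := by simpa using hz
        have hzz : z = alphaB n (i 1) (i 2) := hzz'.symm
        subst hzz
        intro k hk
        have hkx := S_alpha hn hb1.1 hb1.2 hb2.1 hb2.2 hk
        rw [hkx]
        exact ⟨hi1a, hi1b, hFge⟩
      · rw [List.isChain_map, hreq, List.isChain_range_succ]
        intro idx hidx
        intro k hk
        have b1 := hi (idx+1) (by omega) (by omega)
        have b2 := hi (idx+2) (by omega) (by omega)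
        have b3 := hi (idx+3) (by omega) (by omega)
        have hkx : k = i (idx+2) := by
          have := S_alpha (x := i (idx+1+1)) (y := i (idx+1+2)) hn b2.1 b2.2 b3.1 b3.2 hk
          exact this
        rw [hkx]
        exact ⟨b2.1, b2.2, alpha_end b1.1 b1.2 b2.1 b2.2⟩
    · -- the junction between the two blocks
      intro x hx z hz
      have hzz' : η = z := by
        rw [List.head?_cons] at hz
        simpa using hz
      have hzz : z = η := hzz'.symm
      subst hzz
      have hlast : (((List.range l).map (fun idx =>
          (DeltaB n) ^ (l - idx) * (alphaB n (i (l - idx)) (i (l - idx + 1)))⁻¹ *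
            ((DeltaB n) ^ (l - 1 - idx))⁻¹))).getLast? =
          some ((DeltaB n) ^ (l - (l-1)) *
            (alphaB n (i (l - (l-1))) (i (l - (l-1) + 1)))⁻¹ *
            ((DeltaB n) ^ (l - 1 - (l-1)))⁻¹) := by
        rw [hreq, List.range_succ, List.map_append, List.map_singleton,
          List.getLast?_concat]
      rw [hlast] at hx
      have hxx' : (DeltaB n) ^ (l - (l-1)) *
          (alphaB n (i (l - (l-1))) (i (l - (l-1) + 1)))⁻¹ *
          ((DeltaB n) ^ (l - 1 - (l-1)))⁻¹ = x := by
        simpa using hx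
      have hxx : x = (DeltaB n) ^ (l - (l-1)) *
          (alphaB n (i (l - (l-1))) (i (l - (l-1) + 1)))⁻¹ *
          ((DeltaB n) ^ (l - 1 - (l-1)))⁻¹ := hxx'.symm
      subst hxx
      have hfl : (DeltaB n) ^ (l - (l-1)) *
          (alphaB n (i (l - (l-1))) (i (l - (l-1) + 1)))⁻¹ *
          ((DeltaB n) ^ (l - 1 - (l-1)))⁻¹ =
          DeltaB n * (alphaB n (i 1) (i 2))⁻¹ := by
        rw [show l - (l-1) = 1 from by omega, show l - 1 - (l-1) = 0 from by omega,
          pow_zero, pow_one]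
        group
      rw [hfl]
      intro k hk
      obtain ⟨hk1, hk2, hkle⟩ := hk
      have hLD := descent_S hn ηle hk1 hk2 hkle
      have hRD := descent_F hn ηle hi1a hi1b hFge
      have hki1 : k ≠ i 1 := by
        intro hc
        rw [hc] at hLD
        exact no_double_descent hn ηpos hconj hi1a hi1b hLD hRD
      have hb1 := hi 1 (le_refl 1) (by omega)
      have hb2 := hi 2 (by omega) (by omega)
      exact ⟨hk1, hk2, F_core hn hk1 hk2 hb1.1 hb1.2 hb2.1 hb2.2 hki1⟩
end

section
/- Let n ≥ 3 and k ≥ 1. Then β = (ι(Δ_n)σ_{n+1})^{2k} (ι(δ)σ_{n+1}) σ_{n+1}^{2k} in B_{n+2}, and the sequence of 4k+1 elements consisting of ι(Δ_n)σ_{n+1} repeated 2k times, followed by ι(δ)σ_{n+1}, followed by σ_{n+1} repeated 2k times, is a left-weighted sequence of proper simple factors in B_{n+2}; hence it is the left normal form of β. -/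
namespace Braid
variable {N : ℕ}

lemma mk_rel_one {r : FreeGroup ℕ} (h : r ∈ braidRels N) : PresentedGroup.mk (braidRels N) r = 1 := by
  have : r ∈ Subgroup.normalClosure (braidRels N) := Subgroup.subset_normalClosure h
  exact (QuotientGroup.eq_one_iff r).2 this

lemma braid_eq {i : ℕ} (h1 : 1 ≤ i) (h2 : i + 2 ≤ N) :
    σb N i * σb N (i+1) * σb N i = σb N (i+1) * σb N i * σb N (i+1) := by
  have h : (FreeGroup.of i * FreeGroup.of (i + 1) * FreeGroup.of i *
      (FreeGroup.of (i + 1) * FreeGroup.of i * FreeGroup.of (i + 1))⁻¹) ∈ braidRels N :=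
    Or.inl ⟨i, h1, h2, rfl⟩
  have := mk_rel_one h
  simp only [map_mul, map_inv] at this
  have h2' := mul_inv_eq_one.mp this
  simpa [σb, PresentedGroup.of] using h2'

lemma comm_eq {i j : ℕ} (h1 : 1 ≤ i) (h2 : i + 2 ≤ j) (h3 : j + 1 ≤ N) :
    σb N i * σb N j = σb N j * σb N i := by
  have h : (FreeGroup.of i * FreeGroup.of j * (FreeGroup.of j * FreeGroup.of i)⁻¹) ∈ braidRels N :=
    Or.inr (Or.inl ⟨i, j, h1, h2, h3, rfl⟩)
  have := mk_rel_one h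
  simp only [map_mul, map_inv] at this
  have h2' := mul_inv_eq_one.mp this
  simpa [σb, PresentedGroup.of] using h2'

lemma sigma_out {i : ℕ} (h : i = 0 ∨ N ≤ i) : σb N i = 1 := by
  have hh : (FreeGroup.of i : FreeGroup ℕ) ∈ braidRels N := Or.inr (Or.inr ⟨i, h, rfl⟩)
  exact mk_rel_one hh

end Braid

namespace Braid
open MulOpposite

lemma word_nil : word N [] = 1 := rfl
lemma word_cons {a : ℕ} {l : List ℕ} : word N (a :: l) = σb N a * word N l := by
  simp [word]
lemma word_append {l1 l2 : List ℕ} : word N (l1 ++ l2) = word N l1 * word N l2 := by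
  simp [word]
lemma word_singleton {a : ℕ} : word N [a] = σb N a := by simp [word]

lemma map_word {G : Type*} [Group G] (φ : B N →* G) (l : List ℕ) :
    φ (word N l) = (l.map (fun i => φ (σb N i))).prod := by
  induction l with
  | nil => simp [word_nil]
  | cons a l ih => simp [word_cons, map_mul, ih]

lemma word_mem_pos {l : List ℕ} (h : ∀ x ∈ l, 1 ≤ x ∧ x ≤ N - 1) : word N l ∈ Bpos N := by
  induction l with
  | nil => exact one_mem _
  | cons a l ih =>
    rw [word_cons]
    exact mul_mem (Submonoid.subset_closure ⟨a, (h a (by simp)).1, (h a (by simp)).2, rfl⟩)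
      (ih fun x hx => h x (by simp [hx]))

/-- length homomorphism -/
def lenF (N : ℕ) : ℕ → Multiplicative ℤ :=
  fun i => Multiplicative.ofAdd (if 1 ≤ i ∧ i ≤ N - 1 then (1:ℤ) else 0)

lemma lenF_rels : ∀ r ∈ braidRels N, FreeGroup.lift (lenF N) r = 1 := by
  rintro r (⟨i, h1, h2, rfl⟩ | ⟨i, j, h1, h2, h3, rfl⟩ | ⟨i, hi, rfl⟩)
  · simp only [map_mul, map_inv, FreeGroup.lift_apply_of, lenF]
    rw [if_pos ⟨h1, by omega⟩, if_pos ⟨by omega, by omega⟩]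
    group
  · simp only [map_mul, map_inv, FreeGroup.lift_apply_of, lenF]
    rw [if_pos ⟨h1, by omega⟩, if_pos ⟨by omega, by omega⟩]
    group
  · simp only [FreeGroup.lift_apply_of, lenF]
    rw [if_neg (by omega)]
    rfl

def lenHom (N : ℕ) : B N →* Multiplicative ℤ := PresentedGroup.toGroup (lenF_rels (N := N))

def lenZ (g : B N) : ℤ := Multiplicative.toAdd (lenHom N g)

lemma lenZ_mul (a b : B N) : lenZ (a * b) = lenZ a + lenZ b := by
  simp [lenZ, map_mul]

lemma lenZ_inv (a : B N) : lenZ a⁻¹ = - lenZ a := by simp [lenZ, map_inv]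

lemma lenZ_one : lenZ (1 : B N) = 0 := by simp [lenZ, map_one]

lemma lenZ_sigma {i : ℕ} (h1 : 1 ≤ i) (h2 : i ≤ N - 1) : lenZ (σb N i) = 1 := by
  have : lenHom N (σb N i) = lenF N i := PresentedGroup.toGroup.of _
  rw [lenZ, this, lenF, if_pos ⟨h1, h2⟩]
  simp

lemma lenZ_word {l : List ℕ} (h : ∀ x ∈ l, 1 ≤ x ∧ x ≤ N - 1) :
    lenZ (word N l) = l.length := by
  induction l with
  | nil => simpa [word_nil] using lenZ_one
  | cons a l ih =>
    rw [word_cons, lenZ_mul, lenZ_sigma (h a (by simp)).1 (h a (by simp)).2,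
      ih fun x hx => h x (by simp [hx])]
    simp; ring

lemma lenZ_nonneg_of_pos {g : B N} (h : g ∈ Bpos N) : 0 ≤ lenZ g := by
  induction h using Submonoid.closure_induction with
  | mem x hx => obtain ⟨i, h1, h2, rfl⟩ := hx; rw [lenZ_sigma h1 h2]; norm_num
  | one => rw [lenZ_one]
  | mul a b _ _ ha hb => rw [lenZ_mul]; omega

lemma eq_one_of_pos_len_zero {g : B N} (h : g ∈ Bpos N) (h0 : lenZ g = 0) : g = 1 := by
  induction h using Submonoid.closure_induction with
  | mem x hx =>
    obtain ⟨i, h1, h2, rfl⟩ := hx; rw [lenZ_sigma h1 h2] at h0; omega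
  | one => rfl
  | mul a b ha hb iha ihb =>
    rw [lenZ_mul] at h0
    have ha' := lenZ_nonneg_of_pos ha
    have hb' := lenZ_nonneg_of_pos hb
    rw [iha (by omega), ihb (by omega), one_mul]

/-- reversal anti-automorphism -/
def revF (N : ℕ) : ℕ → (B N)ᵐᵒᵖ := fun i => op (σb N i)

lemma revF_rels : ∀ r ∈ braidRels N, FreeGroup.lift (revF N) r = 1 := by
  rintro r (⟨i, h1, h2, rfl⟩ | ⟨i, j, h1, h2, h3, rfl⟩ | ⟨i, hi, rfl⟩)
  · simp only [map_mul, map_inv, FreeGroup.lift_apply_of, revF]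
    rw [mul_inv_eq_one]
    apply unop_injective
    simpa [mul_assoc] using (braid_eq h1 h2)
  · simp only [map_mul, map_inv, FreeGroup.lift_apply_of, revF]
    rw [mul_inv_eq_one]
    apply unop_injective
    simpa [mul_assoc] using (comm_eq h1 h2 h3).symm
  · simp only [FreeGroup.lift_apply_of, revF, sigma_out hi]; rfl

def revHom (N : ℕ) : B N →* (B N)ᵐᵒᵖ := PresentedGroup.toGroup (revF_rels (N := N))

lemma revHom_sigma (i : ℕ) : revHom N (σb N i) = op (σb N i) := PresentedGroup.toGroup.of _

lemma revHom_word (l : List ℕ) : revHom N (word N l) = op (word N l.reverse) := by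
  induction l with
  | nil => simp [word_nil]
  | cons a l ih =>
    rw [word_cons, map_mul, revHom_sigma, ih, List.reverse_cons, word_append]
    simp [word_singleton]

lemma word_rev_eq {l1 l2 : List ℕ} (h : word N l1 = word N l2) :
    word N l1.reverse = word N l2.reverse := by
  have := congrArg (revHom N) h
  rw [revHom_word, revHom_word] at this
  exact op_injective this

lemma rev_pos {g : B N} (h : g ∈ Bpos N) : unop (revHom N g) ∈ Bpos N := by
  induction h using Submonoid.closure_induction with
  | mem x hx =>
    obtain ⟨i, h1, h2, rfl⟩ := hx
    rw [revHom_sigma]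
    exact Submonoid.subset_closure ⟨i, h1, h2, rfl⟩
  | one => simpa using one_mem _
  | mul a b _ _ ha hb =>
    rw [map_mul]
    simpa using mul_mem hb ha

set_option maxHeartbeats 1000000

lemma braid_swap (i : ℕ) : Equiv.swap i (i+1) * Equiv.swap (i+1) (i+2) * Equiv.swap i (i+1) =
    Equiv.swap (i+1) (i+2) * Equiv.swap i (i+1) * Equiv.swap (i+1) (i+2) := by
  ext x
  simp only [Equiv.Perm.mul_apply, Equiv.swap_apply_def]
  split_ifs <;> omega

lemma comm_swap {i j : ℕ} (h : i + 2 ≤ j) : Equiv.swap i (i+1) * Equiv.swap j (j+1) =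
    Equiv.swap j (j+1) * Equiv.swap i (i+1) := by
  ext x
  simp only [Equiv.Perm.mul_apply, Equiv.swap_apply_def]
  split_ifs <;> omega

def spF (N : ℕ) : ℕ → Equiv.Perm ℕ :=
  fun i => if 1 ≤ i ∧ i ≤ N - 1 then Equiv.swap i (i+1) else 1

lemma spF_rels : ∀ r ∈ braidRels N, FreeGroup.lift (spF N) r = 1 := by
  rintro r (⟨i, h1, h2, rfl⟩ | ⟨i, j, h1, h2, h3, rfl⟩ | ⟨i, hi, rfl⟩)
  · simp only [map_mul, map_inv, FreeGroup.lift_apply_of, spF]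
    rw [if_pos ⟨h1, by omega⟩, if_pos ⟨by omega, by omega⟩, mul_inv_eq_one]
    exact braid_swap i
  · simp only [map_mul, map_inv, FreeGroup.lift_apply_of, spF]
    rw [if_pos ⟨h1, by omega⟩, if_pos ⟨by omega, by omega⟩, mul_inv_eq_one]
    exact comm_swap h2
  · simp only [FreeGroup.lift_apply_of, spF]
    rw [if_neg (by omega)]

def permHom (N : ℕ) : B N →* Equiv.Perm ℕ := PresentedGroup.toGroup (spF_rels (N := N))

lemma permHom_sigma {i : ℕ} (h1 : 1 ≤ i) (h2 : i ≤ N - 1) :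
    permHom N (σb N i) = Equiv.swap i (i+1) := by
  have : permHom N (σb N i) = spF N i := PresentedGroup.toGroup.of _
  rw [this, spF, if_pos ⟨h1, h2⟩]

/-- product of swaps along a list -/
def swProd (l : List ℕ) : Equiv.Perm ℕ := (l.map fun i => Equiv.swap i (i+1)).prod

lemma swProd_nil : swProd [] = 1 := rfl
lemma swProd_cons {a : ℕ} {l : List ℕ} : swProd (a :: l) = Equiv.swap a (a+1) * swProd l := by
  simp [swProd]
lemma swProd_append {l1 l2 : List ℕ} : swProd (l1 ++ l2) = swProd l1 * swProd l2 := by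
  simp [swProd]

lemma permHom_word {l : List ℕ} (h : ∀ x ∈ l, 1 ≤ x ∧ x ≤ N - 1) :
    permHom N (word N l) = swProd l := by
  induction l with
  | nil => simp [word_nil, swProd_nil]
  | cons a l ih =>
    rw [word_cons, map_mul, permHom_sigma (h a (by simp)).1 (h a (by simp)).2, swProd_cons,
      ih fun x hx => h x (by simp [hx])]

def deltaList (m : ℕ) : List ℕ := ((List.range' 1 (m - 1)).map fun t => descList t 1).flatten

lemma DeltaB_eq (n : ℕ) : DeltaB n = word n (deltaList n) := rfl

lemma descList_nil {a b : ℕ} (h : a < b) : descList a b = [] := by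
  simp [descList, Nat.sub_eq_zero_of_le (by omega : a + 1 ≤ b)]

lemma descList_cons {a b : ℕ} (hb : 1 ≤ b) (h : b ≤ a) : descList a b = a :: descList (a - 1) b := by
  have h1 : a + 1 - b = (a - b) + 1 := by omega
  have h2 : a - 1 + 1 - b = a - b := by omega
  have h3 : b + 1 * (a - b) = a := by rw [one_mul]; omega
  rw [descList, descList, h1, h2, List.range'_concat, h3, List.reverse_append,
    List.reverse_singleton, List.singleton_append]

lemma mem_descList {x a b : ℕ} : x ∈ descList a b ↔ b ≤ x ∧ x ≤ a := by
  simp only [descList, List.mem_reverse, List.mem_range'_1]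
  omega

lemma descList_length {a b : ℕ} : (descList a b).length = a + 1 - b := by
  simp [descList]

lemma deltaList_succ (m : ℕ) : deltaList (m + 1) = deltaList m ++ descList m 1 := by
  cases m with
  | zero => simp [deltaList, descList]
  | succ m =>
    have : List.range' 1 (m + 1) = List.range' 1 m ++ [m + 1] := by
      rw [List.range'_concat]; congr 1; simp; omega
    simp only [deltaList, Nat.add_sub_cancel, this]
    simp

lemma mem_deltaList {x m : ℕ} (h : x ∈ deltaList m) : 1 ≤ x ∧ x ≤ m - 1 := by
  simp only [deltaList, List.mem_flatten, List.mem_map] at h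
  obtain ⟨l, ⟨t, ht, rfl⟩, hx⟩ := h
  rw [List.mem_range'_1] at ht
  rw [mem_descList] at hx
  omega

lemma swProd_range' (t : ℕ) (x : ℕ) :
    swProd (List.range' 1 t) x = if x = t + 1 then 1 else if 1 ≤ x ∧ x ≤ t then x + 1 else x := by
  induction t generalizing x with
  | zero =>
    simp only [List.range'_zero, swProd_nil, Equiv.Perm.one_apply]
    split_ifs <;> omega
  | succ t ih =>
    have hr : List.range' 1 (t + 1) = List.range' 1 t ++ [t + 1] := by
      rw [List.range'_concat]; congr 1; simp; omega
    rw [hr, swProd_append]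
    have : swProd [t + 1] = Equiv.swap (t+1) (t+2) := by simp [swProd]
    rw [this, Equiv.Perm.mul_apply, Equiv.swap_apply_def]
    split_ifs with h1 h2 <;> rw [ih] <;> split_ifs <;> omega

lemma swProd_descList (m : ℕ) (x : ℕ) :
    swProd (descList m 1) x = if x = 1 then m + 1 else if x ≤ m + 1 then x - 1 else x := by
  induction m generalizing x with
  | zero =>
    rw [descList_nil (by omega), swProd_nil]
    simp only [Equiv.Perm.one_apply]
    split_ifs <;> omega
  | succ m ih =>
    rw [descList_cons (by omega) (by omega), swProd_cons]
    have e : m + 1 - 1 = m := rfl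
    rw [e, Equiv.Perm.mul_apply, ih, Equiv.swap_apply_def]
    split_ifs <;> omega

lemma swProd_deltaList (m : ℕ) (x : ℕ) :
    swProd (deltaList m) x = if 1 ≤ x ∧ x ≤ m then m + 1 - x else x := by
  induction m generalizing x with
  | zero =>
    have : deltaList 0 = [] := rfl
    rw [this, swProd_nil]
    simp only [Equiv.Perm.one_apply]
    split_ifs <;> omega
  | succ m ih =>
    rw [deltaList_succ, swProd_append, Equiv.Perm.mul_apply, swProd_descList, ih]
    split_ifs <;> omega

def invSet (N : ℕ) (τ : Equiv.Perm ℕ) : Finset (ℕ × ℕ) :=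
  ((Finset.range (N+1)) ×ˢ (Finset.range (N+1))).filter fun pq => pq.1 < pq.2 ∧ τ pq.2 < τ pq.1

lemma mem_invSet {N : ℕ} {τ : Equiv.Perm ℕ} {p q : ℕ} :
    (p, q) ∈ invSet N τ ↔ p ≤ N ∧ q ≤ N ∧ p < q ∧ τ q < τ p := by
  simp [invSet, Finset.mem_filter, Finset.mem_product, Finset.mem_range]
  omega

lemma invSet_one (N : ℕ) : invSet N 1 = ∅ := by
  ext ⟨p, q⟩
  simp only [mem_invSet, Finset.notMem_empty, iff_false, Equiv.Perm.one_apply]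
  omega

lemma invSet_swap_mul (N i : ℕ) (τ : Equiv.Perm ℕ) :
    invSet N (Equiv.swap i (i+1) * τ) ⊆ insert (τ⁻¹ i, τ⁻¹ (i+1)) (invSet N τ) := by
  rintro ⟨p, q⟩ h
  rw [mem_invSet] at h
  obtain ⟨hp, hq, hpq, hv⟩ := h
  rw [Equiv.Perm.mul_apply, Equiv.Perm.mul_apply] at hv
  rw [Finset.mem_insert, mem_invSet]
  by_cases hc : τ p = i ∧ τ q = i + 1
  · left
    have e1 : p = τ⁻¹ i := by rw [← hc.1]; simp
    have e2 : q = τ⁻¹ (i+1) := by rw [← hc.2]; simp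
    rw [e1, e2]
  · right
    refine ⟨hp, hq, hpq, ?_⟩
    rw [Equiv.swap_apply_def, Equiv.swap_apply_def] at hv
    have hne : τ p ≠ τ q := fun hh => by
      have := τ.injective hh; omega
    split_ifs at hv <;> omega

lemma card_invSet_pos_mul {N : ℕ} {g : B N} (h : g ∈ Bpos N) :
    ∀ τ : Equiv.Perm ℕ, ((invSet N (permHom N g * τ)).card : ℤ) ≤ lenZ g + (invSet N τ).card := by
  induction h using Submonoid.closure_induction with
  | mem x hx =>
    intro τ
    obtain ⟨i, h1, h2, rfl⟩ := hx
    rw [permHom_sigma h1 h2, lenZ_sigma h1 h2]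
    calc ((invSet N (Equiv.swap i (i+1) * τ)).card : ℤ)
        ≤ ((insert (τ⁻¹ i, τ⁻¹ (i+1)) (invSet N τ)).card : ℤ) := by
          exact_mod_cast Finset.card_le_card (invSet_swap_mul N i τ)
      _ ≤ 1 + (invSet N τ).card := by
          have := Finset.card_insert_le (τ⁻¹ i, τ⁻¹ (i+1)) (invSet N τ)
          push_cast
          omega
  | one => intro τ; simp [lenZ_one]
  | mul a b ha hb iha ihb =>
    intro τ
    rw [map_mul, lenZ_mul, mul_assoc]
    calc ((invSet N (permHom N a * (permHom N b * τ))).card : ℤ)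
        ≤ lenZ a + (invSet N (permHom N b * τ)).card := iha (permHom N b * τ)
      _ ≤ lenZ a + (lenZ b + (invSet N τ).card) := by
          have := ihb τ; omega
      _ = lenZ a + lenZ b + (invSet N τ).card := by ring

lemma card_invSet_pos {N : ℕ} {g : B N} (h : g ∈ Bpos N) :
    ((invSet N (permHom N g)).card : ℤ) ≤ lenZ g := by
  have := card_invSet_pos_mul h 1
  rw [mul_one, invSet_one] at this
  simpa using this

lemma comm_sigma_word {l : List ℕ} {j : ℕ} (hl : ∀ x ∈ l, 1 ≤ x ∧ x + 2 ≤ j)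
    (hj : j + 1 ≤ N) : word N l * σb N j = σb N j * word N l := by
  induction l with
  | nil => rw [word_nil, one_mul, mul_one]
  | cons a l ih =>
    have ha := hl a (by simp)
    rw [word_cons, mul_assoc, ih fun x hx => hl x (by simp [hx]), ← mul_assoc,
      comm_eq ha.1 ha.2 hj, mul_assoc]

lemma descList_reverse (a : ℕ) : (descList a 1).reverse = List.range' 1 a := by
  simp [descList]

lemma sigma_desc {i m : ℕ} (h1 : 1 ≤ i) (h2 : i < m) (h3 : m + 1 ≤ N) :
    σb N i * word N (descList m 1) = word N (descList m 1) * σb N (i + 1) := by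
  induction m generalizing i with
  | zero => omega
  | succ m ih =>
    rw [descList_cons (by omega) (by omega)]
    have e : m + 1 - 1 = m := rfl
    rw [e, word_cons]
    by_cases him : i < m
    · rw [← mul_assoc, comm_eq h1 (by omega) h3, mul_assoc, ih h1 him (by omega),
        ← mul_assoc, mul_assoc]
    · obtain rfl : m = i := by omega
      have hm1 : 1 ≤ m := h1
      rw [descList_cons (by omega) (by omega), word_cons]
      have hcomm : word N (descList (m-1) 1) * σb N (m+1) = σb N (m+1) * word N (descList (m-1) 1) := by
        apply comm_sigma_word _ h3
        intro x hx
        rw [mem_descList] at hx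
        omega
      calc σb N m * (σb N (m+1) * (σb N m * word N (descList (m-1) 1)))
          = (σb N m * σb N (m+1) * σb N m) * word N (descList (m-1) 1) := by
            simp [mul_assoc]
        _ = (σb N (m+1) * σb N m * σb N (m+1)) * word N (descList (m-1) 1) := by
            rw [braid_eq hm1 (by omega)]
        _ = σb N (m+1) * (σb N m * (σb N (m+1) * word N (descList (m-1) 1))) := by
            simp [mul_assoc]
        _ = σb N (m+1) * (σb N m * (word N (descList (m-1) 1) * σb N (m+1))) := by
            rw [hcomm]
        _ = σb N (m+1) * (σb N m * word N (descList (m-1) 1)) * σb N (m+1) := by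
            simp [mul_assoc]

lemma word_shift_desc {l : List ℕ} {m : ℕ} (hl : ∀ x ∈ l, 1 ≤ x ∧ x < m) (h3 : m + 1 ≤ N) :
    word N l * word N (descList m 1) = word N (descList m 1) * word N (l.map (· + 1)) := by
  induction l with
  | nil => simp [word_nil]
  | cons a l ih =>
    have ha := hl a (by simp)
    rw [List.map_cons, word_cons, word_cons, mul_assoc, ih fun x hx => hl x (by simp [hx]),
      ← mul_assoc, sigma_desc ha.1 ha.2 h3, mul_assoc]

lemma sigma_U {i m : ℕ} (h1 : 1 ≤ i) (h2 : i < m) (h3 : m + 1 ≤ N) :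
    word N (List.range' 1 m) * σb N i = σb N (i + 1) * word N (List.range' 1 m) := by
  have base := sigma_desc h1 h2 h3
  have e1 : σb N i * word N (descList m 1) = word N (i :: descList m 1) := by
    rw [word_cons]
  have e2 : word N (descList m 1) * σb N (i+1) = word N (descList m 1 ++ [i+1]) := by
    rw [word_append, word_singleton]
  rw [e1, e2] at base
  have := word_rev_eq base
  rw [List.reverse_cons, List.reverse_append, List.reverse_singleton, descList_reverse,
    word_append, word_singleton, List.singleton_append, word_cons] at this
  exact this

lemma map_sub_one_range' (b k : ℕ) (hb : 1 ≤ b) :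
    (List.range' b k).map (· - 1) = List.range' (b-1) k := by
  induction k generalizing b with
  | zero => simp
  | succ k ih =>
    rw [List.range'_succ, List.range'_succ, List.map_cons, ih (b+1) (by omega)]
    simp
    omega

lemma descList_map_sub {a b : ℕ} (hb : 2 ≤ b) :
    (descList a b).map (· - 1) = descList (a-1) (b-1) := by
  rcases le_or_gt b a with hab | hab
  · rw [descList, descList, List.map_reverse, map_sub_one_range' b _ (by omega)]
    congr 2
    omega
  · rw [descList_nil hab, descList_nil (by omega)]
    rfl

lemma word_down {l : List ℕ} {m : ℕ} (hl : ∀ x ∈ l, 2 ≤ x ∧ x ≤ m) (h3 : m + 1 ≤ N) :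
    word N l * word N (List.range' 1 m) = word N (List.range' 1 m) * word N (l.map (· - 1)) := by
  induction l with
  | nil => simp [word_nil]
  | cons a l ih =>
    have ha := hl a (by simp)
    rw [List.map_cons, word_cons, word_cons, mul_assoc, ih fun x hx => hl x (by simp [hx]),
      ← mul_assoc]
    have : σb N a * word N (List.range' 1 m) = word N (List.range' 1 m) * σb N (a - 1) := by
      have := sigma_U (i := a - 1) (by omega) (by omega) h3
      have e : a - 1 + 1 = a := by omega
      rw [e] at this
      exact this.symm
    rw [this, mul_assoc]

lemma range'_concat_one (m : ℕ) : List.range' 1 (m+1) = List.range' 1 m ++ [m+1] := by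
  rw [List.range'_concat]; congr 1; simp; omega

lemma Cprime (m : ℕ) (hm : m + 1 ≤ N) :
    word N (deltaList m) * word N (descList m 1) =
      word N (List.range' 1 m) * word N (deltaList m) := by
  induction m with
  | zero =>
    rw [descList_nil (by omega)]
    simp [word_nil]
  | succ m ih =>
    have ihm := ih (by omega)
    have hcomm : word N (deltaList m) * σb N (m+1) = σb N (m+1) * word N (deltaList m) := by
      apply comm_sigma_word _ hm
      intro x hx
      have := mem_deltaList hx
      omega
    have hD1 : word N (deltaList (m+1)) = word N (deltaList m) * word N (descList m 1) := by
      rw [deltaList_succ, word_append]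
    have hdesc : word N (descList (m+1) 1) = σb N (m+1) * word N (descList m 1) := by
      rw [descList_cons (a := m+1) (by omega) (by omega)]
      have e : m + 1 - 1 = m := rfl
      rw [e, word_cons]
    have hU : word N (List.range' 1 (m+1)) = word N (List.range' 1 m) * σb N (m+1) := by
      rw [range'_concat_one, word_append, word_singleton]
    rw [hD1, hdesc, hU]
    calc word N (deltaList m) * word N (descList m 1) * (σb N (m+1) * word N (descList m 1))
        = (word N (List.range' 1 m) * word N (deltaList m)) * (σb N (m+1) * word N (descList m 1)) := by
          rw [ihm]
      _ = word N (List.range' 1 m) * ((word N (deltaList m) * σb N (m+1)) * word N (descList m 1)) := by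
          simp [mul_assoc]
      _ = word N (List.range' 1 m) * ((σb N (m+1) * word N (deltaList m)) * word N (descList m 1)) := by
          rw [hcomm]
      _ = (word N (List.range' 1 m) * σb N (m+1)) * (word N (deltaList m) * word N (descList m 1)) := by
          simp [mul_assoc]

lemma delta_split (m : ℕ) (hm : m + 1 ≤ N) :
    word N (deltaList (m+1)) = word N (List.range' 1 m) * word N (deltaList m) := by
  rw [deltaList_succ, word_append, Cprime m hm]

lemma deltaList_rev (m : ℕ) (hm : m ≤ N) :
    word N (deltaList m).reverse = word N (deltaList m) := by
  induction m with
  | zero => rfl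
  | succ m ih =>
    have h1 : (deltaList (m+1)).reverse = List.range' 1 m ++ (deltaList m).reverse := by
      rw [deltaList_succ, List.reverse_append, descList_reverse]
    rw [h1, word_append, ih (by omega), ← delta_split m hm]

lemma deltaList_prefix {a m : ℕ} (h : a ≤ m) :
    ∃ t : List ℕ, deltaList m = deltaList a ++ t ∧ ∀ x ∈ t, 1 ≤ x ∧ x ≤ m - 1 := by
  induction m with
  | zero =>
    have : a = 0 := by omega
    subst this
    exact ⟨[], by simp, by simp⟩
  | succ m ih =>
    by_cases ham : a = m + 1
    · subst ham; exact ⟨[], by simp, by simp⟩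
    · obtain ⟨t, ht1, ht2⟩ := ih (by omega)
      refine ⟨t ++ descList m 1, ?_, ?_⟩
      · rw [deltaList_succ, ht1, List.append_assoc]
      · intro x hx
        rcases List.mem_append.1 hx with hx | hx
        · have := ht2 x hx; omega
        · rw [mem_descList] at hx; omega

lemma sigma_le_delta {i m : ℕ} (h1 : 1 ≤ i) (h2 : i ≤ m - 1) (h3 : m ≤ N) :
    (σb N i)⁻¹ * word N (deltaList m) ∈ Bpos N := by
  obtain ⟨t, ht1, ht2⟩ := deltaList_prefix (a := i + 1) (m := m) (by omega)
  have hshift : word N (deltaList i) * word N (descList i 1) =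
      word N (descList i 1) * word N ((deltaList i).map (· + 1)) := by
    apply word_shift_desc _ (by omega)
    intro x hx
    have := mem_deltaList hx
    omega
  have hdi : word N (deltaList (i+1)) =
      σb N i * (word N (descList (i-1) 1) * word N ((deltaList i).map (· + 1))) := by
    rw [deltaList_succ, word_append, hshift, descList_cons (a := i) (b := 1) (le_refl 1) h1, word_cons,
      mul_assoc]
  rw [ht1, word_append, hdi]
  have : (σb N i)⁻¹ * (σb N i * (word N (descList (i-1) 1) * word N ((deltaList i).map (· + 1))) * word N t)
      = word N (descList (i-1) 1) * word N ((deltaList i).map (· + 1)) * word N t := by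
    group
  rw [this]
  refine mul_mem (mul_mem ?_ ?_) ?_
  · apply word_mem_pos
    intro x hx
    rw [mem_descList] at hx
    omega
  · apply word_mem_pos
    intro x hx
    rw [List.mem_map] at hx
    obtain ⟨y, hy, rfl⟩ := hx
    have := mem_deltaList hy
    omega
  · exact word_mem_pos fun x hx => by have := ht2 x hx; omega

lemma descList_single (a : ℕ) (ha : 1 ≤ a) : descList a a = [a] := by
  rw [descList_cons ha (le_refl a), descList_nil (by omega)]

lemma lemE {t j : ℕ} (hj1 : 1 ≤ j) (hj : j ≤ t + 1) (ht : t + 2 ≤ N) :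
    (word N (List.range' 1 t) * σb N (t+1)) ^ j =
      word N (List.range' 1 t) ^ j * word N (descList (t+1) (t+2-j)) := by
  induction j with
  | zero => omega
  | succ j ih =>
    by_cases hj0 : j = 0
    · subst hj0
      have e : t + 2 - 1 = t + 1 := rfl
      rw [pow_one, pow_one, e, descList_single (t+1) (by omega), word_singleton]
    · have hjt : j + 1 ≤ t + 1 := hj
      have hih := ih (by omega) (by omega)
      have key : word N (descList (t+1) (t+2-j)) * (word N (List.range' 1 t) * σb N (t+1)) =
          word N (List.range' 1 t) * word N (descList (t+1) (t+1-j)) := by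
        have hd1 : descList (t+1) (t+2-j) = (t+1) :: descList t (t+2-j) := by
          rw [descList_cons (by omega) (by omega)]
          norm_num
        have hdown : word N (descList t (t+2-j)) * word N (List.range' 1 t) =
            word N (List.range' 1 t) * word N (descList (t-1) (t+1-j)) := by
          have hl : ∀ x ∈ descList t (t+2-j), 2 ≤ x ∧ x ≤ t := by
            intro x hx
            rw [mem_descList] at hx
            omega
          have h3' : t + 1 ≤ N := by omega
          have hw := word_down (l := descList t (t+2-j)) (m := t) hl h3'
          rw [hw, descList_map_sub (a := t) (b := t+2-j) (by omega)]
          congr 3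
          omega
        have hcomm : word N (descList (t-1) (t+1-j)) * σb N (t+1) =
            σb N (t+1) * word N (descList (t-1) (t+1-j)) := by
          apply comm_sigma_word _ (by omega)
          intro x hx
          rw [mem_descList] at hx
          omega
        have hUs : σb N (t+1) * word N (List.range' 1 t) * σb N (t+1) =
            word N (List.range' 1 t) * σb N (t+1) * σb N t := by
          have ht1 : 1 ≤ t := by omega
          have hU' : List.range' 1 t = List.range' 1 (t-1) ++ [t] := by
            have : t = (t - 1) + 1 := by omega
            rw [this, range'_concat_one]
            try congr 2
            try omega
          have hcomm' : σb N (t+1) * word N (List.range' 1 (t-1)) =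
              word N (List.range' 1 (t-1)) * σb N (t+1) := by
            symm
            apply comm_sigma_word _ (by omega)
            intro x hx
            rw [List.mem_range'_1] at hx
            omega
          rw [hU', word_append, word_singleton]
          calc σb N (t+1) * (word N (List.range' 1 (t-1)) * σb N t) * σb N (t+1)
              = word N (List.range' 1 (t-1)) * (σb N (t+1) * σb N t * σb N (t+1)) := by
                rw [← mul_assoc, hcomm']
                try simp [mul_assoc]
            _ = word N (List.range' 1 (t-1)) * (σb N t * σb N (t+1) * σb N t) := by
                rw [← braid_eq ht1 (by omega)]
            _ = word N (List.range' 1 (t-1)) * σb N t * σb N (t+1) * σb N t := by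
                try simp [mul_assoc]
        have hd2 : descList (t+1) (t+1-j) = (t+1) :: t :: descList (t-1) (t+1-j) := by
          rw [descList_cons (by omega) (by omega), descList_cons (by omega) (by omega)]
          try congr 2
          try omega
        calc word N (descList (t+1) (t+2-j)) * (word N (List.range' 1 t) * σb N (t+1))
            = σb N (t+1) * (word N (descList t (t+2-j)) * word N (List.range' 1 t)) * σb N (t+1) := by
              rw [hd1, word_cons]
              try simp [mul_assoc]
          _ = σb N (t+1) * (word N (List.range' 1 t) * word N (descList (t-1) (t+1-j))) * σb N (t+1) := by
              rw [hdown]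
          _ = σb N (t+1) * word N (List.range' 1 t) * (word N (descList (t-1) (t+1-j)) * σb N (t+1)) := by
              try simp [mul_assoc]
          _ = σb N (t+1) * word N (List.range' 1 t) * σb N (t+1) * word N (descList (t-1) (t+1-j)) := by
              rw [hcomm]
              try simp [mul_assoc]
          _ = word N (List.range' 1 t) * σb N (t+1) * σb N t * word N (descList (t-1) (t+1-j)) := by
              rw [hUs]
          _ = word N (List.range' 1 t) * word N (descList (t+1) (t+1-j)) := by
              rw [hd2, word_cons, word_cons]
              try simp [mul_assoc]
      calc (word N (List.range' 1 t) * σb N (t+1)) ^ (j+1)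
          = (word N (List.range' 1 t) * σb N (t+1)) ^ j * (word N (List.range' 1 t) * σb N (t+1)) := by
            rw [pow_succ]
        _ = word N (List.range' 1 t) ^ j * (word N (descList (t+1) (t+2-j)) * (word N (List.range' 1 t) * σb N (t+1))) := by
            rw [hih]
            try simp [mul_assoc]
        _ = word N (List.range' 1 t) ^ j * (word N (List.range' 1 t) * word N (descList (t+1) (t+1-j))) := by
            rw [key]
        _ = word N (List.range' 1 t) ^ (j+1) * word N (descList (t+1) (t+2-(j+1))) := by
            rw [pow_succ]
            have e : t + 2 - (j + 1) = t + 1 - j := by omega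
            rw [e]
            try simp [mul_assoc]

lemma delta_sq (m : ℕ) (hm : m ≤ N) :
    word N (deltaList m) ^ 2 = word N (List.range' 1 (m-1)) ^ m := by
  induction m with
  | zero => simp [deltaList, word_nil]
  | succ m ih =>
    by_cases hm0 : m = 0
    · subst hm0
      have : deltaList 1 = [] := rfl
      rw [this]
      simp [word_nil]
    · have e : m + 1 - 1 = m := rfl
      rw [e]
      have hU : word N (List.range' 1 m) = word N (List.range' 1 (m-1)) * σb N m := by
        have h' : List.range' 1 m = List.range' 1 (m-1) ++ [m] := by
          have hm' : m = (m - 1) + 1 := by omega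
          rw [hm', range'_concat_one]
          try congr 2
          try omega
        rw [h', word_append, word_singleton]
      have hE : (word N (List.range' 1 (m-1)) * σb N m) ^ m =
          word N (List.range' 1 (m-1)) ^ m * word N (descList m 1) := by
        have := @lemE N (m - 1) m (by omega) (by omega) (by omega)
        have e1 : m - 1 + 1 = m := by omega
        have e2 : m - 1 + 2 - m = 1 := by omega
        rw [e1, e2] at this
        exact this
      calc word N (deltaList (m+1)) ^ 2
          = word N (deltaList (m+1)) * word N (deltaList (m+1)) := by rw [pow_two]
        _ = (word N (List.range' 1 m) * word N (deltaList m)) * (word N (deltaList m) * word N (descList m 1)) := by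
            nth_rewrite 1 [delta_split m hm]
            rw [deltaList_succ, word_append]
        _ = word N (List.range' 1 m) * (word N (deltaList m) ^ 2 * word N (descList m 1)) := by
            rw [pow_two]
            try simp [mul_assoc]
        _ = word N (List.range' 1 m) * (word N (List.range' 1 (m-1)) ^ m * word N (descList m 1)) := by
            rw [ih (by omega)]
        _ = word N (List.range' 1 m) * (word N (List.range' 1 (m-1)) * σb N m) ^ m := by
            rw [hE]
        _ = word N (List.range' 1 m) * word N (List.range' 1 m) ^ m := by
            rw [← hU]
        _ = word N (List.range' 1 m) ^ (m+1) := by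
            rw [pow_succ']

section Spec
variable {n : ℕ} (hn : 3 ≤ n) (ι : B n →* B (n + 2))
  (hι : ∀ idx : ℕ, 1 ≤ idx → idx ≤ n - 1 → ι (σb n idx) = σb (n + 2) idx)
include hn hι

lemma iota_word {l : List ℕ} (hl : ∀ x ∈ l, 1 ≤ x ∧ x ≤ n - 1) :
    ι (word n l) = word (n+2) l := by
  induction l with
  | nil => simp [word_nil]
  | cons a l ih =>
    have ha := hl a (by simp)
    rw [word_cons, map_mul, hι a ha.1 ha.2, word_cons, ih fun x hx => hl x (by simp [hx])]

lemma iota_Delta : ι (DeltaB n) = word (n+2) (deltaList n) := by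
  rw [DeltaB_eq]
  exact iota_word hn ι hι fun x hx => mem_deltaList hx

lemma iota_delta : ι (deltaB n) = word (n+2) (List.range' 1 (n-1)) := by
  have : deltaB n = word n (List.range' 1 (n-1)) := rfl
  rw [this]
  exact iota_word hn ι hι fun x hx => by rw [List.mem_range'_1] at hx; omega

lemma comm_Delta_s : Commute (word (n+2) (deltaList n)) (σb (n+2) (n+1)) := by
  apply comm_sigma_word _ (by omega)
  intro x hx
  have := mem_deltaList hx
  omega

lemma comm_delta_s : Commute (word (n+2) (List.range' 1 (n-1))) (σb (n+2) (n+1)) := by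
  apply comm_sigma_word _ (by omega)
  intro x hx
  rw [List.mem_range'_1] at hx
  omega

lemma comm_sig_s {i : ℕ} (h1 : 1 ≤ i) (h2 : i ≤ n - 1) :
    Commute (σb (n+2) i) (σb (n+2) (n+1)) := comm_eq h1 (by omega) (by omega)

/-- Positivity of the three factors -/
lemma A_pos : ι (DeltaB n) * σb (n+2) (n+1) ∈ Bpos (n+2) := by
  rw [iota_Delta hn ι hι]
  refine mul_mem (word_mem_pos fun x hx => ?_) (Submonoid.subset_closure ⟨n+1, by omega, by omega, rfl⟩)
  have := mem_deltaList hx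
  constructor <;> omega

lemma B0_pos : ι (deltaB n) * σb (n+2) (n+1) ∈ Bpos (n+2) := by
  rw [iota_delta hn ι hι]
  refine mul_mem (word_mem_pos fun x hx => ?_) (Submonoid.subset_closure ⟨n+1, by omega, by omega, rfl⟩)
  rw [List.mem_range'_1] at hx
  constructor <;> omega

lemma s_pos : σb (n+2) (n+1) ∈ Bpos (n+2) :=
  Submonoid.subset_closure ⟨n+1, by omega, by omega, rfl⟩

/-- `σ_{n+1} ≼ Δ_{n+2}` -/
lemma s_le_Delta : bLe (n+2) (σb (n+2) (n+1)) (DeltaB (n+2)) := by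
  have := sigma_le_delta (N := n+2) (i := n+1) (m := n+2) (by omega) (by omega) (by omega)
  exact this

/-- `ι(Δ_n) σ_{n+1} ≼ Δ_{n+2}` -/
lemma A_le_Delta : bLe (n+2) (ι (DeltaB n) * σb (n+2) (n+1)) (DeltaB (n+2)) := by
  unfold bLe
  rw [iota_Delta hn ι hι]
  have hsplit : word (n+2) (deltaList (n+2)) =
      word (n+2) (deltaList n) * (word (n+2) (descList n 1) * word (n+2) (descList (n+1) 1)) := by
    have e1 : deltaList (n+2) = deltaList (n+1) ++ descList (n+1) 1 := deltaList_succ (n+1)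
    have e2 : deltaList (n+1) = deltaList n ++ descList n 1 := deltaList_succ n
    rw [e1, e2, word_append, word_append, mul_assoc]
  have hshift : word (n+2) (descList n 1) * word (n+2) (descList (n+1) 1) =
      word (n+2) (descList (n+1) 1) * word (n+2) ((descList n 1).map (· + 1)) := by
    apply word_shift_desc _ (by omega)
    intro x hx
    rw [mem_descList] at hx
    omega
  have hd : word (n+2) (descList (n+1) 1) = σb (n+2) (n+1) * word (n+2) (descList n 1) := by
    rw [descList_cons (by omega) (by omega), word_cons]
    norm_num
  have : DeltaB (n+2) = word (n+2) (deltaList (n+2)) := rfl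
  rw [this, hsplit, hshift, hd]
  have hgrp : (word (n+2) (deltaList n) * σb (n+2) (n+1))⁻¹ *
      (word (n+2) (deltaList n) * (σb (n+2) (n+1) * word (n+2) (descList n 1) *
        word (n+2) ((descList n 1).map (· + 1)))) =
      word (n+2) (descList n 1) * word (n+2) ((descList n 1).map (· + 1)) := by
    group
  rw [hgrp]
  refine mul_mem (word_mem_pos fun x hx => ?_) (word_mem_pos fun x hx => ?_)
  · rw [mem_descList] at hx; constructor <;> omega
  · rw [List.mem_map] at hx
    obtain ⟨y, hy, rfl⟩ := hx
    rw [mem_descList] at hy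
    constructor <;> omega

lemma s_pos_aux1 : σb (n+2) n ∈ Bpos (n+2) :=
  Submonoid.subset_closure ⟨n, by omega, by omega, rfl⟩
lemma s_pos_aux2 : σb (n+2) (n+1) ∈ Bpos (n+2) :=
  Submonoid.subset_closure ⟨n+1, by omega, by omega, rfl⟩

/-- `ι(δ_n) σ_{n+1} ≼ Δ_{n+2}` -/
lemma B0_le_Delta : bLe (n+2) (ι (deltaB n) * σb (n+2) (n+1)) (DeltaB (n+2)) := by
  unfold bLe
  rw [iota_delta hn ι hι]
  have hU2 : List.range' 1 (n+1) = List.range' 1 (n-1) ++ [n, n+1] := by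
    have h3 := List.range'_append (s := 1) (m := n-1) (n := 2) (step := 1)
    have e1 : 1 + 1 * (n-1) = n := by omega
    have e2 : 2 + (n - 1) = n + 1 := by omega
    have e2' : n - 1 + 2 = n + 1 := by omega
    rw [e1] at h3
    try rw [e2] at h3
    try rw [e2'] at h3
    rw [← h3]
    congr 1
  have hsplit : word (n+2) (deltaList (n+2)) =
      word (n+2) (List.range' 1 (n-1)) * (σb (n+2) n * (σb (n+2) (n+1) *
        word (n+2) (deltaList (n+1)))) := by
    have e1 := delta_split (N := n+2) (n+1) (by omega)
    have : DeltaB (n+2) = word (n+2) (deltaList (n+2)) := rfl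
    rw [e1, hU2, word_append]
    have h4 : word (n+2) [n, n+1] = σb (n+2) n * σb (n+2) (n+1) := by
      rw [word_cons, word_singleton]
    rw [h4]
    simp [mul_assoc]
  have hD : DeltaB (n+2) = word (n+2) (deltaList (n+2)) := rfl
  rw [hD, hsplit]
  have key := braid_eq (N := n+2) (i := n) (by omega) (by omega)
  have hgrp : (word (n+2) (List.range' 1 (n-1)) * σb (n+2) (n+1))⁻¹ *
      (word (n+2) (List.range' 1 (n-1)) * (σb (n+2) n * (σb (n+2) (n+1) *
        word (n+2) (deltaList (n+1))))) =
      ((σb (n+2) (n+1))⁻¹ * (σb (n+2) n * σb (n+2) (n+1))) * word (n+2) (deltaList (n+1)) := by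
    group
  rw [hgrp]
  have h2 : (σb (n+2) (n+1))⁻¹ * (σb (n+2) n * σb (n+2) (n+1)) =
      σb (n+2) n * (σb (n+2) (n+1) * (σb (n+2) n)⁻¹) := by
    rw [inv_mul_eq_iff_eq_mul, ← mul_left_inj (σb (n+2) n)]
    simp only [mul_assoc, inv_mul_cancel, mul_one]
    simpa [mul_assoc] using key
  rw [h2]
  have hfin : σb (n+2) n * (σb (n+2) (n+1) * (σb (n+2) n)⁻¹) * word (n+2) (deltaList (n+1)) =
      σb (n+2) n * (σb (n+2) (n+1) * ((σb (n+2) n)⁻¹ * word (n+2) (deltaList (n+1)))) := by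
    simp [mul_assoc]
  rw [hfin]
  refine mul_mem (s_pos_aux1 hn ι hι) (mul_mem (s_pos_aux2 hn ι hι) ?_)
  exact sigma_le_delta (by omega) (by omega) (by omega)

/-! ### permutation values -/

lemma permHom_s : permHom (n+2) (σb (n+2) (n+1)) = Equiv.swap (n+1) (n+2) := by
  have := permHom_sigma (N := n+2) (i := n+1) (by omega) (by omega)
  simpa using this

lemma perm_A : permHom (n+2) (ι (DeltaB n) * σb (n+2) (n+1)) =
    swProd (deltaList n) * Equiv.swap (n+1) (n+2) := by
  rw [map_mul, iota_Delta hn ι hι, permHom_s hn ι hι, permHom_word]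
  intro x hx
  have := mem_deltaList hx
  omega

lemma perm_B0 : permHom (n+2) (ι (deltaB n) * σb (n+2) (n+1)) =
    swProd (List.range' 1 (n-1)) * Equiv.swap (n+1) (n+2) := by
  rw [map_mul, iota_delta hn ι hι, permHom_s hn ι hι, permHom_word]
  intro x hx
  rw [List.mem_range'_1] at hx
  omega

lemma perm_Delta_val : permHom (n+2) (DeltaB (n+2)) (n+2) = 1 := by
  have hD : DeltaB (n+2) = word (n+2) (deltaList (n+2)) := rfl
  rw [hD, permHom_word, swProd_deltaList, if_pos ⟨by omega, by omega⟩]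
  · omega
  · intro x hx
    have := mem_deltaList hx
    omega

lemma perm_A_val : permHom (n+2) (ι (DeltaB n) * σb (n+2) (n+1)) (n+2) = n+1 := by
  rw [perm_A hn ι hι, Equiv.Perm.mul_apply, Equiv.swap_apply_right, swProd_deltaList,
    if_neg (by omega)]

lemma perm_B0_val : permHom (n+2) (ι (deltaB n) * σb (n+2) (n+1)) (n+2) = n+1 := by
  rw [perm_B0 hn ι hι, Equiv.Perm.mul_apply, Equiv.swap_apply_right, swProd_range']
  rw [if_neg (by omega), if_neg (by omega)]

lemma perm_s_val : permHom (n+2) (σb (n+2) (n+1)) (n+2) = n+1 := by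
  rw [permHom_s hn ι hι, Equiv.swap_apply_right]

lemma ne_of_permval {g h : B (n+2)} (x : ℕ)
    (hval : permHom (n+2) g x ≠ permHom (n+2) h x) : g ≠ h :=
  fun e => hval (by rw [e])

/-! ### finishing set facts -/

lemma delta_ge_sigma {i m : ℕ} (h1 : 1 ≤ i) (h2 : i ≤ m - 1) (h3 : m ≤ n+2) :
    word (n+2) (deltaList m) * (σb (n+2) i)⁻¹ ∈ Bpos (n+2) := by
  have h := sigma_le_delta (N := n+2) h1 h2 h3
  have h' := rev_pos h
  have e : MulOpposite.unop (revHom (n+2) ((σb (n+2) i)⁻¹ * word (n+2) (deltaList m))) =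
      word (n+2) (deltaList m) * (σb (n+2) i)⁻¹ := by
    rw [map_mul, map_inv, revHom_sigma, revHom_word, deltaList_rev m h3]
    simp
  rw [← e]
  exact h'

lemma FA_fact : ∀ i, 1 ≤ i → i ≤ n+1 → i ≠ n →
    (ι (DeltaB n) * σb (n+2) (n+1)) * (σb (n+2) i)⁻¹ ∈ Bpos (n+2) := by
  intro i hi1 hi2 hin
  by_cases htop : i = n+1
  · subst htop
    have : (ι (DeltaB n) * σb (n+2) (n+1)) * (σb (n+2) (n+1))⁻¹ = ι (DeltaB n) := by group
    rw [this, iota_Delta hn ι hι]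
    apply word_mem_pos
    intro x hx
    have := mem_deltaList hx
    constructor <;> omega
  · have hii : i ≤ n - 1 := by omega
    have hcs : Commute (σb (n+2) i) (σb (n+2) (n+1)) := comm_sig_s hn ι hι hi1 hii
    have hc' : σb (n+2) (n+1) * (σb (n+2) i)⁻¹ = (σb (n+2) i)⁻¹ * σb (n+2) (n+1) :=
      (hcs.inv_left.eq).symm
    rw [iota_Delta hn ι hι, mul_assoc, hc', ← mul_assoc]
    exact mul_mem (delta_ge_sigma hn ι hι hi1 (by omega) (by omega)) (s_pos_aux2 hn ι hι)

/-! ### starting set exclusions -/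

lemma S_only_np1 : ∀ i, 1 ≤ i → i ≤ n+1 →
    bLe (n+2) (σb (n+2) i) (σb (n+2) (n+1)) → i = n+1 := by
  intro i h1 h2 hle
  by_contra hne
  have hi : i ≤ n := by omega
  unfold bLe at hle
  have hlen : lenZ ((σb (n+2) i)⁻¹ * σb (n+2) (n+1)) = 0 := by
    rw [lenZ_mul, lenZ_inv, lenZ_sigma (N := n+2) h1 (by omega),
      lenZ_sigma (N := n+2) (by omega) (by omega)]
    ring
  have heq := eq_one_of_pos_len_zero hle hlen
  have : σb (n+2) i = σb (n+2) (n+1) := by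
    rw [inv_mul_eq_one] at heq
    exact heq
  have hperm := congrArg (fun g => permHom (n+2) g (n+2)) this
  rw [permHom_sigma (N := n+2) h1 (by omega), permHom_sigma (N := n+2) (by omega) (by omega)] at hperm
  rw [Equiv.swap_apply_of_ne_of_ne (by omega) (by omega), Equiv.swap_apply_right] at hperm
  omega

lemma not_le_sigma_n_B0 : ¬ bLe (n+2) (σb (n+2) n) (ι (deltaB n) * σb (n+2) (n+1)) := by
  intro hle
  unfold bLe at hle
  set c := (σb (n+2) n)⁻¹ * (ι (deltaB n) * σb (n+2) (n+1)) with hc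
  have hlen : lenZ c = (n : ℤ) - 1 := by
    rw [hc, lenZ_mul, lenZ_inv, lenZ_mul, lenZ_sigma (N := n+2) (by omega) (by omega),
      lenZ_sigma (N := n+2) (by omega) (by omega), iota_delta hn ι hι, lenZ_word]
    · have : (List.range' 1 (n-1)).length = n - 1 := by simp
      rw [this]
      push_cast
      omega
    · intro x hx
      rw [List.mem_range'_1] at hx
      omega
  have hπ : permHom (n+2) c =
      Equiv.swap n (n+1) * (swProd (List.range' 1 (n-1)) * Equiv.swap (n+1) (n+2)) := by
    rw [hc, map_mul, map_inv, permHom_sigma (N := n+2) (by omega) (by omega),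
      perm_B0 hn ι hι, Equiv.swap_inv]
  have hval : ∀ x, permHom (n+2) c x =
      Equiv.swap n (n+1) (swProd (List.range' 1 (n-1)) (Equiv.swap (n+1) (n+2) x)) := by
    intro x
    rw [hπ]
    rfl
  have val_n : permHom (n+2) c n = 1 := by
    have i1 : Equiv.swap (n+1) (n+2) n = n := Equiv.swap_apply_of_ne_of_ne (by omega) (by omega)
    have i2 : swProd (List.range' 1 (n-1)) n = 1 := by
      rw [swProd_range', if_pos (by omega)]
    have i3 : Equiv.swap n (n+1) 1 = 1 := Equiv.swap_apply_of_ne_of_ne (by omega) (by omega)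
    rw [hval, i1, i2, i3]
  have val_hi : permHom (n+2) c (n+2) = n ∧ permHom (n+2) c (n+1) = n+2 := by
    constructor
    · have i1 : Equiv.swap (n+1) (n+2) (n+2) = n+1 := Equiv.swap_apply_right _ _
      have i2 : swProd (List.range' 1 (n-1)) (n+1) = n+1 := by
        rw [swProd_range', if_neg (by omega), if_neg (by omega)]
      have i3 : Equiv.swap n (n+1) (n+1) = n := Equiv.swap_apply_right _ _
      rw [hval, i1, i2, i3]
    · have i1 : Equiv.swap (n+1) (n+2) (n+1) = n+2 := Equiv.swap_apply_left _ _
      have i2 : swProd (List.range' 1 (n-1)) (n+2) = n+2 := by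
        rw [swProd_range', if_neg (by omega), if_neg (by omega)]
      have i3 : Equiv.swap n (n+1) (n+2) = n+2 := Equiv.swap_apply_of_ne_of_ne (by omega) (by omega)
      rw [hval, i1, i2, i3]
  set W : Finset (ℕ × ℕ) :=
    ((Finset.range (n-1)).image fun p => (p+1, n)) ∪ {(n+1, n+2)} with hWdef
  have hW : W ⊆ invSet (n+2) (permHom (n+2) c) := by
    intro pq hpq
    rw [hWdef, Finset.mem_union, Finset.mem_image, Finset.mem_singleton] at hpq
    rcases hpq with ⟨p, hp, rfl⟩ | rfl
    · rw [Finset.mem_range] at hp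
      rw [mem_invSet]
      refine ⟨by omega, by omega, by omega, ?_⟩
      rw [val_n]
      have i1 : Equiv.swap (n+1) (n+2) (p+1) = p+1 := Equiv.swap_apply_of_ne_of_ne (by omega) (by omega)
      have i2 : swProd (List.range' 1 (n-1)) (p+1) = p+2 := by
        rw [swProd_range', if_neg (by omega), if_pos (by omega)]
      rw [hval, i1, i2, Equiv.swap_apply_def]
      split_ifs <;> omega
    · rw [mem_invSet]
      refine ⟨by omega, by omega, by omega, ?_⟩
      rw [val_hi.1, val_hi.2]
      omega
  have hcard : W.card = n := by
    rw [hWdef, Finset.card_union_of_disjoint, Finset.card_image_of_injective,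
      Finset.card_range, Finset.card_singleton]
    · omega
    · intro a b hab
      simpa using hab
    · rw [Finset.disjoint_right]
      rintro pq hpq hmem
      rw [Finset.mem_singleton] at hpq
      subst hpq
      rw [Finset.mem_image] at hmem
      obtain ⟨p, _, hp2⟩ := hmem
      have := congrArg Prod.snd hp2
      simp at this
      try omega
  have hle2 := card_invSet_pos hle
  have hle3 : (W.card : ℤ) ≤ ((invSet (n+2) (permHom (n+2) c)).card : ℤ) := by
    exact_mod_cast Finset.card_le_card hW
  rw [hcard, hlen] at *
  omega

lemma tri_card (M : ℕ) : ∀ m, m < M →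
    (((Finset.range M) ×ˢ (Finset.range M)).filter
      (fun pq => 1 ≤ pq.1 ∧ pq.1 < pq.2 ∧ pq.2 ≤ m)).card = (deltaList m).length := by
  intro m
  induction m with
  | zero =>
    intro _
    have : ((Finset.range M ×ˢ Finset.range M).filter
        (fun pq => 1 ≤ pq.1 ∧ pq.1 < pq.2 ∧ pq.2 ≤ 0)) = ∅ := by
      ext ⟨p, q⟩
      simp only [Finset.mem_filter, Finset.mem_product, Finset.mem_range,
        Finset.notMem_empty, iff_false]
      omega
    rw [this]
    try rfl
  | succ m ih =>
    intro hM
    have hsplit : ((Finset.range M ×ˢ Finset.range M).filter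
        (fun pq => 1 ≤ pq.1 ∧ pq.1 < pq.2 ∧ pq.2 ≤ m + 1)) =
        ((Finset.range M ×ˢ Finset.range M).filter
          (fun pq => 1 ≤ pq.1 ∧ pq.1 < pq.2 ∧ pq.2 ≤ m)) ∪
        ((Finset.range m).image fun p => (p+1, m+1)) := by
      ext ⟨p, q⟩
      simp only [Finset.mem_filter, Finset.mem_product, Finset.mem_range, Finset.mem_union,
        Finset.mem_image]
      constructor
      · rintro ⟨⟨hp, hq⟩, h1, h2, h3⟩
        by_cases hqm : q ≤ m
        · exact Or.inl ⟨⟨hp, hq⟩, h1, h2, hqm⟩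
        · right
          refine ⟨p - 1, by omega, ?_⟩
          have : p - 1 + 1 = p := by omega
          rw [this]
          have : q = m + 1 := by omega
          rw [this]
      · rintro (⟨⟨hp, hq⟩, h1, h2, h3⟩ | ⟨p', hp', heq⟩)
        · exact ⟨⟨hp, hq⟩, h1, h2, by omega⟩
        · have e1 : p' + 1 = p := congrArg Prod.fst heq
          have e2 : m + 1 = q := congrArg Prod.snd heq
          refine ⟨⟨by omega, by omega⟩, by omega, by omega, by omega⟩
    rw [hsplit, Finset.card_union_of_disjoint, ih (by omega),
      Finset.card_image_of_injective, Finset.card_range, deltaList_succ,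
      List.length_append, descList_length]
    · omega
    · intro a b hab
      simpa using hab
    · rw [Finset.disjoint_right]
      rintro ⟨p, q⟩ hpq hmem
      rw [Finset.mem_image] at hpq
      rw [Finset.mem_filter] at hmem
      obtain ⟨p', _, hp2⟩ := hpq
      have := congrArg Prod.snd hp2
      simp at this
      try omega

lemma not_le_sigma_n_A : ¬ bLe (n+2) (σb (n+2) n) (ι (DeltaB n) * σb (n+2) (n+1)) := by
  intro hle
  unfold bLe at hle
  set c := (σb (n+2) n)⁻¹ * (ι (DeltaB n) * σb (n+2) (n+1)) with hc
  set L := (deltaList n).length with hL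
  have hlen : lenZ c = (L : ℤ) := by
    rw [hc, lenZ_mul, lenZ_inv, lenZ_mul, lenZ_sigma (N := n+2) (by omega) (by omega),
      lenZ_sigma (N := n+2) (by omega) (by omega), iota_Delta hn ι hι, lenZ_word]
    · ring
    · intro x hx
      have := mem_deltaList hx
      constructor <;> omega
  have hπ : permHom (n+2) c =
      Equiv.swap n (n+1) * (swProd (deltaList n) * Equiv.swap (n+1) (n+2)) := by
    rw [hc, map_mul, map_inv, permHom_sigma (N := n+2) (by omega) (by omega),
      perm_A hn ι hι, Equiv.swap_inv]
  have hval : ∀ x, permHom (n+2) c x =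
      Equiv.swap n (n+1) (swProd (deltaList n) (Equiv.swap (n+1) (n+2) x)) := by
    intro x
    rw [hπ]
    rfl
  have val_lo : ∀ x, 1 ≤ x → x ≤ n → permHom (n+2) c x =
      if x = 1 then n+1 else n+1-x := by
    intro x hx1 hxn
    have i1 : Equiv.swap (n+1) (n+2) x = x := Equiv.swap_apply_of_ne_of_ne (by omega) (by omega)
    have i2 : swProd (deltaList n) x = n+1-x := by
      rw [swProd_deltaList, if_pos ⟨hx1, hxn⟩]
    rw [hval, i1, i2, Equiv.swap_apply_def]
    split_ifs <;> omega
  have val_hi : permHom (n+2) c (n+2) = n ∧ permHom (n+2) c (n+1) = n+2 := by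
    constructor
    · have i1 : Equiv.swap (n+1) (n+2) (n+2) = n+1 := Equiv.swap_apply_right _ _
      have i2 : swProd (deltaList n) (n+1) = n+1 := by
        rw [swProd_deltaList, if_neg (by omega)]
      have i3 : Equiv.swap n (n+1) (n+1) = n := Equiv.swap_apply_right _ _
      rw [hval, i1, i2, i3]
    · have i1 : Equiv.swap (n+1) (n+2) (n+1) = n+2 := Equiv.swap_apply_left _ _
      have i2 : swProd (deltaList n) (n+2) = n+2 := by
        rw [swProd_deltaList, if_neg (by omega)]
      have i3 : Equiv.swap n (n+1) (n+2) = n+2 := Equiv.swap_apply_of_ne_of_ne (by omega) (by omega)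
      rw [hval, i1, i2, i3]
  set Tri : Finset (ℕ × ℕ) := ((Finset.range (n+3)) ×ˢ (Finset.range (n+3))).filter
      (fun pq => 1 ≤ pq.1 ∧ pq.1 < pq.2 ∧ pq.2 ≤ n) with hTri
  set W : Finset (ℕ × ℕ) := Tri ∪ {(n+1, n+2)} with hWdef
  have hW : W ⊆ invSet (n+2) (permHom (n+2) c) := by
    intro pq hpq
    rw [hWdef, Finset.mem_union, Finset.mem_singleton] at hpq
    rcases hpq with hpq | rfl
    · rw [hTri, Finset.mem_filter, Finset.mem_product] at hpq
      obtain ⟨⟨_, _⟩, h1, h2, h3⟩ := hpq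
      obtain ⟨p, q⟩ := pq
      simp only at h1 h2 h3
      rw [mem_invSet]
      refine ⟨by omega, by omega, h2, ?_⟩
      rw [val_lo p h1 (by omega), val_lo q (by omega) h3]
      split_ifs <;> omega
    · rw [mem_invSet]
      refine ⟨by omega, by omega, by omega, ?_⟩
      rw [val_hi.1, val_hi.2]
      omega
  have hTc : Tri.card = L := by
    rw [hTri, hL]
    exact tri_card hn ι hι (n+3) n (by omega)
  have hcard : W.card = L + 1 := by
    rw [hWdef, Finset.card_union_of_disjoint, hTc, Finset.card_singleton]
    rw [Finset.disjoint_right]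
    rintro pq hpq hmem
    rw [Finset.mem_singleton] at hpq
    subst hpq
    rw [hTri, Finset.mem_filter] at hmem
    omega
  have hle2 := card_invSet_pos hle
  have hle3 : (W.card : ℤ) ≤ ((invSet (n+2) (permHom (n+2) c)).card : ℤ) := by
    exact_mod_cast Finset.card_le_card hW
  rw [hcard, hlen] at *
  push_cast at hle3
  omega

end Spec

/-! ### chain helpers -/

lemma chain'_rep {α : Type*} {R : α → α → Prop} {c : α} (hcc : R c c) :
    ∀ m, List.Chain' R (c :: List.replicate m c) := by
  intro m
  induction m with
  | zero => exact List.isChain_singleton _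
  | succ m ih =>
    rw [List.replicate_succ]
    exact List.isChain_cons_cons.mpr ⟨hcc, ih⟩

lemma chain'_three {α : Type*} {R : α → α → Prop} {a b c : α} {k m : ℕ}
    (Raa : R a a) (Rab : R a b) (Rbc : R b c) (Rcc : R c c) :
    List.Chain' R (List.replicate k a ++ b :: List.replicate m c) := by
  have hbc : List.Chain' R (b :: List.replicate m c) := by
    cases m with
    | zero => exact List.isChain_singleton _
    | succ m =>
      rw [List.replicate_succ]
      exact List.isChain_cons_cons.mpr ⟨Rbc, chain'_rep Rcc m⟩
  induction k with
  | zero => simpa using hbc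
  | succ k ih =>
    rw [List.replicate_succ, List.cons_append]
    refine List.isChain_cons.mpr ⟨?_, ih⟩
    intro y hy
    cases k with
    | zero =>
      simp at hy
      subst hy
      exact Rab
    | succ k =>
      rw [List.replicate_succ, List.cons_append, List.head?_cons, Option.mem_some_iff] at hy
      subst hy
      exact Raa

section Spec2
variable {n : ℕ} (hn : 3 ≤ n) (ι : B n →* B (n + 2))
  (hι : ∀ idx : ℕ, 1 ≤ idx → idx ≤ n - 1 → ι (σb n idx) = σb (n + 2) idx)
include hn hι

/-! ### inequality facts -/

lemma perm_one_val : permHom (n+2) (1 : B (n+2)) (n+2) = n+2 := by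
  rw [map_one]
  rfl

lemma A_ne_one : ι (DeltaB n) * σb (n+2) (n+1) ≠ 1 := by
  apply ne_of_permval hn ι hι (n+2)
  rw [perm_A_val hn ι hι, perm_one_val hn ι hι]
  omega

lemma A_ne_Delta : ι (DeltaB n) * σb (n+2) (n+1) ≠ DeltaB (n+2) := by
  apply ne_of_permval hn ι hι (n+2)
  rw [perm_A_val hn ι hι, perm_Delta_val hn ι hι]
  omega

lemma B0_ne_one : ι (deltaB n) * σb (n+2) (n+1) ≠ 1 := by
  apply ne_of_permval hn ι hι (n+2)
  rw [perm_B0_val hn ι hι, perm_one_val hn ι hι]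
  omega

lemma B0_ne_Delta : ι (deltaB n) * σb (n+2) (n+1) ≠ DeltaB (n+2) := by
  apply ne_of_permval hn ι hι (n+2)
  rw [perm_B0_val hn ι hι, perm_Delta_val hn ι hι]
  omega

lemma s_ne_one : σb (n+2) (n+1) ≠ 1 := by
  apply ne_of_permval hn ι hι (n+2)
  rw [perm_s_val hn ι hι, perm_one_val hn ι hι]
  omega

lemma s_ne_Delta : σb (n+2) (n+1) ≠ DeltaB (n+2) := by
  apply ne_of_permval hn ι hι (n+2)
  rw [perm_s_val hn ι hι, perm_Delta_val hn ι hι]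
  omega

/-! ### chain subset facts -/

lemma R_AA : startSet (n+2) (ι (DeltaB n) * σb (n+2) (n+1)) ⊆
    finishSet (n+2) (ι (DeltaB n) * σb (n+2) (n+1)) := by
  rintro i ⟨h1, h2, h3⟩
  have hin : i ≠ n := by
    rintro rfl
    exact not_le_sigma_n_A hn ι hι h3
  exact ⟨h1, h2, FA_fact hn ι hι i h1 (by omega) hin⟩

lemma R_AB0 : startSet (n+2) (ι (deltaB n) * σb (n+2) (n+1)) ⊆
    finishSet (n+2) (ι (DeltaB n) * σb (n+2) (n+1)) := by
  rintro i ⟨h1, h2, h3⟩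
  have hin : i ≠ n := by
    rintro rfl
    exact not_le_sigma_n_B0 hn ι hι h3
  exact ⟨h1, h2, FA_fact hn ι hι i h1 (by omega) hin⟩

lemma B0_ge_s : (ι (deltaB n) * σb (n+2) (n+1)) * (σb (n+2) (n+1))⁻¹ ∈ Bpos (n+2) := by
  have e : (ι (deltaB n) * σb (n+2) (n+1)) * (σb (n+2) (n+1))⁻¹ = ι (deltaB n) := by group
  rw [e, iota_delta hn ι hι]
  apply word_mem_pos
  intro x hx
  rw [List.mem_range'_1] at hx
  constructor <;> omega

lemma R_B0C : startSet (n+2) (σb (n+2) (n+1)) ⊆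
    finishSet (n+2) (ι (deltaB n) * σb (n+2) (n+1)) := by
  rintro i ⟨h1, h2, h3⟩
  have := S_only_np1 hn ι hι i h1 (by omega) h3
  subst this
  exact ⟨h1, h2, B0_ge_s hn ι hι⟩

lemma R_CC : startSet (n+2) (σb (n+2) (n+1)) ⊆ finishSet (n+2) (σb (n+2) (n+1)) := by
  rintro i ⟨h1, h2, h3⟩
  have := S_only_np1 hn ι hι i h1 (by omega) h3
  subst this
  refine ⟨h1, h2, ?_⟩
  have e : σb (n+2) (n+1) * (σb (n+2) (n+1))⁻¹ = 1 := by group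
  unfold bGe
  rw [e]
  exact one_mem _

lemma DeltaB_sq : DeltaB n ^ 2 = deltaB n ^ n := delta_sq (N := n) n le_rfl

end Spec2
end Braid
/-- the left normal form of `β = ι(δ)^{nk+1} σ_{n+1}^{4k+1} ∈ B_{n+2}` is
`(ι(Δ_n)σ_{n+1})^{2k} (ι(δ)σ_{n+1}) σ_{n+1}^{2k}`. -/
theorem statement10 (n k : ℕ) (hn : 3 ≤ n) (hk : 1 ≤ k)
    (ι : B n →* B (n + 2))
    (hι : ∀ idx : ℕ, 1 ≤ idx → idx ≤ n - 1 → ι (σb n idx) = σb (n + 2) idx) :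
    ∀ β : B (n + 2), β = ι (deltaB n) ^ (n * k + 1) * (σb (n + 2) (n + 1)) ^ (4 * k + 1) →
      β = (ι (DeltaB n) * σb (n + 2) (n + 1)) ^ (2 * k) *
            (ι (deltaB n) * σb (n + 2) (n + 1)) * (σb (n + 2) (n + 1)) ^ (2 * k) ∧
      ∀ ys : List (B (n + 2)),
        ys = List.replicate (2 * k) (ι (DeltaB n) * σb (n + 2) (n + 1)) ++
             (ι (deltaB n) * σb (n + 2) (n + 1)) :: List.replicate (2 * k) (σb (n + 2) (n + 1)) →
        LWSeq (n + 2) ys ∧ ys.prod = β := by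
  intro β hβ
  have hcD : Commute (ι (DeltaB n)) (σb (n+2) (n+1)) := by
    rw [Braid.iota_Delta hn ι hι]
    exact Braid.comm_Delta_s hn ι hι
  have hcd : Commute (ι (deltaB n)) (σb (n+2) (n+1)) := by
    rw [Braid.iota_delta hn ι hι]
    exact Braid.comm_delta_s hn ι hι
  have hpow : DeltaB n ^ (2*k) = deltaB n ^ (n*k) := by
    rw [pow_mul, Braid.DeltaB_sq hn ι hι, ← pow_mul]
  have key : (ι (DeltaB n) * σb (n+2) (n+1)) ^ (2*k) * (ι (deltaB n) * σb (n+2) (n+1)) *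
      (σb (n+2) (n+1)) ^ (2*k) = ι (deltaB n) ^ (n*k+1) * (σb (n+2) (n+1)) ^ (4*k+1) := by
    rw [hcD.mul_pow]
    have h1 : (σb (n+2) (n+1))^(2*k) * ι (deltaB n) = ι (deltaB n) * (σb (n+2) (n+1))^(2*k) :=
      ((hcd.pow_right (2*k)).eq).symm
    calc ι (DeltaB n)^(2*k) * (σb (n+2) (n+1))^(2*k) * (ι (deltaB n) * σb (n+2) (n+1)) *
        (σb (n+2) (n+1))^(2*k)
        = ι (DeltaB n)^(2*k) * (((σb (n+2) (n+1))^(2*k) * ι (deltaB n)) *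
            (σb (n+2) (n+1) * (σb (n+2) (n+1))^(2*k))) := by
          simp [mul_assoc]
      _ = ι (DeltaB n)^(2*k) * ((ι (deltaB n) * (σb (n+2) (n+1))^(2*k)) *
            (σb (n+2) (n+1) * (σb (n+2) (n+1))^(2*k))) := by rw [h1]
      _ = (ι (DeltaB n)^(2*k) * ι (deltaB n)) *
            ((σb (n+2) (n+1))^(2*k) * (σb (n+2) (n+1) * (σb (n+2) (n+1))^(2*k))) := by
          simp [mul_assoc]
      _ = ι (deltaB n) ^ (n*k+1) * (σb (n+2) (n+1))^(4*k+1) := by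
          congr 1
          · rw [← map_pow, ← map_mul, hpow, ← pow_succ, map_pow]
          · rw [← pow_succ', ← pow_add]
            congr 1
            omega
  constructor
  · rw [hβ, ← key]
  · intro ys hys
    have hA : isSimple (n+2) (ι (DeltaB n) * σb (n+2) (n+1)) ∧
        (ι (DeltaB n) * σb (n+2) (n+1)) ≠ 1 ∧
        (ι (DeltaB n) * σb (n+2) (n+1)) ≠ DeltaB (n+2) :=
      ⟨⟨Braid.A_pos hn ι hι, Braid.A_le_Delta hn ι hι⟩, Braid.A_ne_one hn ι hι,
        Braid.A_ne_Delta hn ι hι⟩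
    have hB : isSimple (n+2) (ι (deltaB n) * σb (n+2) (n+1)) ∧
        (ι (deltaB n) * σb (n+2) (n+1)) ≠ 1 ∧
        (ι (deltaB n) * σb (n+2) (n+1)) ≠ DeltaB (n+2) :=
      ⟨⟨Braid.B0_pos hn ι hι, Braid.B0_le_Delta hn ι hι⟩, Braid.B0_ne_one hn ι hι,
        Braid.B0_ne_Delta hn ι hι⟩
    have hC : isSimple (n+2) (σb (n+2) (n+1)) ∧ (σb (n+2) (n+1)) ≠ 1 ∧
        (σb (n+2) (n+1)) ≠ DeltaB (n+2) :=
      ⟨⟨Braid.s_pos hn ι hι, Braid.s_le_Delta hn ι hι⟩, Braid.s_ne_one hn ι hι,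
        Braid.s_ne_Delta hn ι hι⟩
    refine ⟨⟨?_, ?_⟩, ?_⟩
    · intro y hy
      rw [hys] at hy
      rcases List.mem_append.1 hy with hy | hy
      · rw [List.eq_of_mem_replicate hy]
        exact hA
      · rcases List.mem_cons.1 hy with rfl | hy
        · exact hB
        · rw [List.eq_of_mem_replicate hy]
          exact hC
    · rw [hys]
      exact Braid.chain'_three (Braid.R_AA hn ι hι) (Braid.R_AB0 hn ι hι)
        (Braid.R_B0C hn ι hι) (Braid.R_CC hn ι hι)
    · rw [hys, List.prod_append, List.prod_cons, List.prod_replicate, List.prod_replicate,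
        hβ, ← key]
      simp [mul_assoc]
end
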